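/- arXiv:1307.2437 — 11 statements merged into one kernel-verified Lean document; each statement's English description precedes it below -/
import Mathlib

section
/- For every constant c > 0, the set of functions {z ↦ p(z, z̄)·e^{-c|z|²} : p ∈ Π(z,z̄)} is dense in C₀(ℂ, ℂ) with respect to the supremum norm. Equivalently: for every continuous function f : ℂ → ℂ vanishing at infinity there is a sequence (pₙ) of polynomials in z and z̄ such that pₙ(z,z̄)·e^{-c|z|²} → f uniformly on ℂ. -/
/-!
Extend `z ↦ q(z, z̄) e^{-c|z|²}` by `0` to the one-point compactification of `ℂ` and let `W` be
the uniform closure of these functions. It is closed under conjugation and under products: a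
product carries the weight `e^{-2c|z|²}`, and `p e^{-(b+a)|z|²}` is the uniform limit of
`p Tₙ e^{-b|z|²}`, with `Tₙ` the Taylor polynomials of `e^{-a z z̄}`, as soon as `4a ≤ b`; so the
weight can be raised from `c` to `2c` in steps of `c/4`. Hence `W` plus the constants is a closed
star subalgebra containing `e^{-c|z|²}` and `z e^{-c|z|²}`, which separate points, and by
Stone–Weierstrass it contains every continuous function; those vanishing at `∞` lie in `W`.
-/

open Filter Topology Finset MvPolynomial OnePoint ComplexConjugate
open scoped Nat

theorem Real.exp_sub_sum_range_le {t : ℝ} (ht : 0 ≤ t) (n : ℕ) :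
    Real.exp t - ∑ k ∈ range n, t ^ k / k ! ≤ t ^ n / n ! * Real.exp t := by
  have hsum : Tendsto (fun m => ∑ k ∈ range (m + n), t ^ k / k !) atTop (𝓝 (Real.exp t)) := by
    rw [Real.exp_eq_exp_ℝ]
    exact (NormedSpace.expSeries_div_hasSum_exp t).tendsto_sum_nat.comp (tendsto_add_atTop_nat n)
  refine sub_le_iff_le_add'.2 (le_of_tendsto' hsum fun m => ?_)
  rw [add_comm, sum_range_add]
  gcongr
  calc ∑ j ∈ range m, t ^ (n + j) / (n + j)!
        ≤ ∑ j ∈ range m, t ^ n / n ! * (t ^ j / j !) := by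
        gcongr with j
        rw [pow_add, _root_.div_mul_div_comm]
        gcongr
        exact_mod_cast Nat.le_of_dvd (by positivity)
          (Nat.factorial_mul_factorial_dvd_factorial_add n j)
    _ = t ^ n / n ! * ∑ j ∈ range m, t ^ j / j ! := (mul_sum _ _ _).symm
    _ ≤ t ^ n / n ! * Real.exp t := by gcongr; exact Real.sum_le_exp_of_nonneg ht m

theorem Real.pow_div_factorial_mul_exp_neg_two_mul_le {t : ℝ} (ht : 0 ≤ t) (N : ℕ) :
    t ^ N / N ! * Real.exp (-(2 * t)) ≤ (1 / 2) ^ N := by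
  calc t ^ N / N ! * Real.exp (-(2 * t))
      = (1 / 2) ^ N * ((2 * t) ^ N / N ! * Real.exp (-(2 * t))) := by
        rw [mul_pow, ← mul_assoc, ← mul_div_assoc, ← mul_assoc, ← mul_pow]
        norm_num
    _ ≤ (1 / 2) ^ N * (Real.exp (2 * t) * Real.exp (-(2 * t))) := by
        gcongr
        exact Real.pow_div_factorial_le_exp _ (by positivity) N
    _ = (1 / 2) ^ N := by rw [← Real.exp_add, add_neg_cancel, Real.exp_zero, mul_one]

theorem Real.le_mul_exp_mul_sq {a : ℝ} (ha : 0 < a) (r : ℝ) :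
    r ≤ (1 + a⁻¹) * Real.exp (a * r ^ 2) := by
  have hexpand : (1 + a⁻¹) * (a * r ^ 2 + 1) = a * r ^ 2 + 1 + r ^ 2 + a⁻¹ := by
    field_simp
    ring
  calc r ≤ (1 + a⁻¹) * (a * r ^ 2 + 1) := by
        rw [hexpand]
        nlinarith [sq_nonneg (r - 1), inv_pos.2 ha, sq_nonneg r]
    _ ≤ (1 + a⁻¹) * Real.exp (a * r ^ 2) := by
        gcongr
        exact Real.add_one_le_exp _

namespace NonUnitalStarSubalgebra

variable {X R : Type*} [TopologicalSpace X] [CommRing R] [StarRing R] [TopologicalSpace R]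
  [IsTopologicalRing R] [ContinuousStar R]

noncomputable def addConstants (W : NonUnitalStarSubalgebra R C(X, R)) (x₀ : X) :
    StarSubalgebra R C(X, R) where
  carrier := {g | g - algebraMap R C(X, R) (g x₀) ∈ W}
  mul_mem' {f g} hf hg := by
    have : f * g - algebraMap R C(X, R) ((f * g) x₀)
        = (f - algebraMap R C(X, R) (f x₀)) * (g - algebraMap R C(X, R) (g x₀))
          + f x₀ • (g - algebraMap R C(X, R) (g x₀))
          + g x₀ • (f - algebraMap R C(X, R) (f x₀)) := by
      simp only [ContinuousMap.mul_apply, map_mul, Algebra.smul_def]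
      ring
    rw [Set.mem_ofPred_eq, this]
    exact add_mem (add_mem (mul_mem hf hg) (SMulMemClass.smul_mem _ hg))
      (SMulMemClass.smul_mem _ hf)
  add_mem' {f g} hf hg := by
    have : f + g - algebraMap R C(X, R) ((f + g) x₀)
        = (f - algebraMap R C(X, R) (f x₀)) + (g - algebraMap R C(X, R) (g x₀)) := by
      simp only [ContinuousMap.add_apply, map_add]
      abel
    rw [Set.mem_ofPred_eq, this]
    exact add_mem hf hg
  algebraMap_mem' r := by simp
  star_mem' {f} hf := by
    have : star f - algebraMap R C(X, R) ((star f) x₀)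
        = star (f - algebraMap R C(X, R) (f x₀)) := by
      simp [star_sub, algebraMap_star_comm]
    rw [Set.mem_ofPred_eq, this]
    exact star_mem hf

theorem isClosed_addConstants {W : NonUnitalStarSubalgebra R C(X, R)}
    (hW : IsClosed (W : Set C(X, R))) (x₀ : X) : IsClosed (W.addConstants x₀ : Set C(X, R)) :=
  hW.preimage (continuous_id.sub
    ((continuous_algebraMap R C(X, R)).comp (continuous_eval_const x₀)))

theorem mem_addConstants_iff {W : NonUnitalStarSubalgebra R C(X, R)} {x₀ : X} {g : C(X, R)}
    (hg : g x₀ = 0) : g ∈ W.addConstants x₀ ↔ g ∈ W := by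
  change g - algebraMap R C(X, R) (g x₀) ∈ W ↔ g ∈ W
  rw [hg, map_zero, sub_zero]

end NonUnitalStarSubalgebra

noncomputable def evalZZbar (q : MvPolynomial (Fin 2) ℂ) (z : ℂ) : ℂ :=
  eval ![z, conj z] q

noncomputable def gaussianWeight (b : ℝ) (z : ℂ) : ℂ :=
  (Real.exp (-b * ‖z‖ ^ 2) : ℂ)

theorem continuous_evalZZbar (q : MvPolynomial (Fin 2) ℂ) : Continuous (evalZZbar q) :=
  (continuous_eval q).comp (by fun_prop)

theorem evalZZbar_mul (p q : MvPolynomial (Fin 2) ℂ) (z : ℂ) :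
    evalZZbar (p * q) z = evalZZbar p z * evalZZbar q z :=
  map_mul _ p q

theorem norm_gaussianWeight (b : ℝ) (z : ℂ) :
    ‖gaussianWeight b z‖ = Real.exp (-b * ‖z‖ ^ 2) := by
  rw [gaussianWeight, Complex.norm_real, Real.norm_of_nonneg (Real.exp_pos _).le]

theorem gaussianWeight_add (b b' : ℝ) (z : ℂ) :
    gaussianWeight (b + b') z = gaussianWeight b z * gaussianWeight b' z := by
  simp only [gaussianWeight, ← Complex.ofReal_mul, ← Real.exp_add]
  ring_nf

theorem gaussianWeight_ne_zero (b : ℝ) (z : ℂ) : gaussianWeight b z ≠ 0 :=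
  Complex.ofReal_ne_zero.2 (Real.exp_ne_zero _)

theorem exists_norm_evalZZbar_le (q : MvPolynomial (Fin 2) ℂ) {a : ℝ} (ha : 0 < a) :
    ∃ K, ∀ z, ‖evalZZbar q z‖ ≤ K * Real.exp (a * ‖z‖ ^ 2) := by
  induction q using MvPolynomial.induction_on generalizing a with
  | C x =>
    refine ⟨‖x‖, fun z => ?_⟩
    simpa [evalZZbar] using
      le_mul_of_one_le_right (norm_nonneg x) (Real.one_le_exp (by positivity))
  | add p q hp hq =>
    obtain ⟨K₁, h₁⟩ := hp ha
    obtain ⟨K₂, h₂⟩ := hq ha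
    refine ⟨K₁ + K₂, fun z => ?_⟩
    simp only [evalZZbar, map_add] at h₁ h₂ ⊢
    linarith [norm_add_le (eval ![z, conj z] p) (eval ![z, conj z] q), h₁ z, h₂ z]
  | mul_X p i hp =>
    obtain ⟨K, hK⟩ := hp (half_pos ha)
    refine ⟨K * (1 + (a / 2)⁻¹), fun z => ?_⟩
    have hi : ‖![z, conj z] i‖ = ‖z‖ := by fin_cases i <;> simp
    calc ‖evalZZbar (p * X i) z‖ = ‖evalZZbar p z‖ * ‖z‖ := by simp [evalZZbar, hi]
      _ ≤ K * Real.exp (a / 2 * ‖z‖ ^ 2) * ((1 + (a / 2)⁻¹) * Real.exp (a / 2 * ‖z‖ ^ 2)) :=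
        mul_le_mul (hK z) (Real.le_mul_exp_mul_sq (half_pos ha) ‖z‖) (norm_nonneg _)
          ((norm_nonneg _).trans (hK z))
      _ = K * (1 + (a / 2)⁻¹) * Real.exp (a * ‖z‖ ^ 2) := by
        rw [mul_mul_mul_comm, ← Real.exp_add]
        ring_nf

theorem tendsto_evalZZbar_mul_gaussianWeight (q : MvPolynomial (Fin 2) ℂ) {b : ℝ}
    (hb : 0 < b) :
    Tendsto (fun z => evalZZbar q z * gaussianWeight b z) (cocompact ℂ) (𝓝 0) := by
  obtain ⟨K, hK⟩ := exists_norm_evalZZbar_le q (half_pos hb)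
  have hdecay :
      Tendsto (fun z : ℂ => K * Real.exp (-(b / 2) * ‖z‖ ^ 2)) (cocompact ℂ) (𝓝 0) := by
    have hsq := (tendsto_pow_atTop two_ne_zero).comp (tendsto_norm_cocompact_atTop (E := ℂ))
    simpa using (Real.tendsto_exp_atBot.comp
      (hsq.const_mul_atTop_of_neg (neg_lt_zero.2 (half_pos hb)))).const_mul K
  refine squeeze_zero_norm (fun z => ?_) hdecay
  rw [norm_mul, norm_gaussianWeight]
  calc _ ≤ K * Real.exp (b / 2 * ‖z‖ ^ 2) * Real.exp (-b * ‖z‖ ^ 2) := by gcongr; exact hK z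
    _ = _ := by rw [mul_assoc, ← Real.exp_add]; ring_nf

noncomputable def mulGaussian (b : ℝ) (hb : 0 < b) :
    MvPolynomial (Fin 2) ℂ →ₗ[ℂ] C(OnePoint ℂ, ℂ) where
  toFun q := continuousMapMk
    ⟨fun z => evalZZbar q z * gaussianWeight b z,
      (continuous_evalZZbar q).mul (by unfold gaussianWeight; fun_prop)⟩ 0
    (by rw [coclosedCompact_eq_cocompact]; exact tendsto_evalZZbar_mul_gaussianWeight q hb)
  map_add' p q := by
    ext x
    induction x using OnePoint.rec <;> simp [continuousMapMk, evalZZbar, add_mul]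
  map_smul' a q := by
    ext x
    induction x using OnePoint.rec <;> simp [continuousMapMk, evalZZbar, mul_assoc]

@[simp]
theorem mulGaussian_apply_coe {b : ℝ} (hb : 0 < b) (q : MvPolynomial (Fin 2) ℂ) (z : ℂ) :
    mulGaussian b hb q z = evalZZbar q z * gaussianWeight b z :=
  rfl

@[simp]
theorem mulGaussian_apply_infty {b : ℝ} (hb : 0 < b) (q : MvPolynomial (Fin 2) ℂ) :
    mulGaussian b hb q ∞ = 0 :=
  rfl

theorem mulGaussian_mul_mulGaussian {b b' : ℝ} (hb : 0 < b) (hb' : 0 < b')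
    (p q : MvPolynomial (Fin 2) ℂ) :
    mulGaussian b hb p * mulGaussian b' hb' q = mulGaussian (b + b') (add_pos hb hb') (p * q) := by
  ext x
  induction x using OnePoint.rec with
  | infty => simp
  | coe z =>
    simp only [ContinuousMap.mul_apply, mulGaussian_apply_coe, evalZZbar_mul, gaussianWeight_add]
    ring

theorem evalZZbar_rename_swap_map_conj (p : MvPolynomial (Fin 2) ℂ) (z : ℂ) :
    evalZZbar (rename (Equiv.swap 0 1) (map (starRingEnd ℂ) p)) z = conj (evalZZbar p z) := by
  induction p using MvPolynomial.induction_on with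
  | C a => simp [evalZZbar]
  | add p q hp hq => simp_all [evalZZbar]
  | mul_X p i hp =>
    simp only [evalZZbar] at hp ⊢
    fin_cases i <;> simp [hp]

theorem star_mulGaussian {b : ℝ} (hb : 0 < b) (p : MvPolynomial (Fin 2) ℂ) :
    star (mulGaussian b hb p)
      = mulGaussian b hb (rename (Equiv.swap 0 1) (map (starRingEnd ℂ) p)) := by
  ext x
  induction x using OnePoint.rec with
  | infty => simp
  | coe z =>
    simp only [ContinuousMap.star_apply, mulGaussian_apply_coe, star_mul',
      evalZZbar_rename_swap_map_conj, gaussianWeight, Complex.star_def, Complex.conj_ofReal]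

noncomputable def expTaylor (a : ℝ) (N : ℕ) : MvPolynomial (Fin 2) ℂ :=
  ∑ k ∈ range N, C (((-a) ^ k / k ! : ℝ) : ℂ) * (X 0 * X 1) ^ k

theorem evalZZbar_expTaylor (a : ℝ) (N : ℕ) (z : ℂ) :
    evalZZbar (expTaylor a N) z = ∑ k ∈ range N, ((-a * ‖z‖ ^ 2 : ℝ) : ℂ) ^ k / k ! := by
  simp only [evalZZbar, expTaylor, map_sum, map_mul, map_pow, eval_C, eval_X]
  refine sum_congr rfl fun k _ => ?_
  simp only [Matrix.cons_val_zero, Matrix.cons_val_one, Complex.mul_conj']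
  push_cast
  ring

theorem norm_gaussianWeight_sub_evalZZbar_expTaylor_le {a : ℝ} (ha : 0 ≤ a) (N : ℕ) (z : ℂ) :
    ‖gaussianWeight a z - evalZZbar (expTaylor a N) z‖
      ≤ (a * ‖z‖ ^ 2) ^ N / N ! * Real.exp (a * ‖z‖ ^ 2) := by
  have hx : ‖((-a * ‖z‖ ^ 2 : ℝ) : ℂ)‖ = a * ‖z‖ ^ 2 := by
    rw [Complex.norm_real, Real.norm_eq_abs, neg_mul, abs_neg, abs_of_nonneg (by positivity)]
  have := Complex.norm_exp_sub_sum_le_exp_norm_sub_sum ((-a * ‖z‖ ^ 2 : ℝ) : ℂ) N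
  rw [hx] at this
  rw [gaussianWeight, evalZZbar_expTaylor, Complex.ofReal_exp]
  exact this.trans (Real.exp_sub_sum_range_le (by positivity) N)

theorem norm_mulGaussian_mul_expTaylor_sub_le {a b K : ℝ} (ha : 0 < a) (hb : 0 < b)
    (hab : 4 * a ≤ b) {p : MvPolynomial (Fin 2) ℂ}
    (hK : ∀ z, ‖evalZZbar p z‖ ≤ K * Real.exp (a * ‖z‖ ^ 2)) (N : ℕ) :
    ‖mulGaussian b hb (p * expTaylor a N) - mulGaussian (b + a) (add_pos hb ha) p‖
      ≤ K * (1 / 2) ^ N := by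
  have hK0 : 0 ≤ K := by simpa using (norm_nonneg _).trans (hK 0)
  refine (ContinuousMap.norm_le _ (by positivity)).2 fun x => ?_
  induction x using OnePoint.rec with
  | infty =>
    simp only [ContinuousMap.sub_apply, mulGaussian_apply_infty, sub_zero, norm_zero]
    positivity
  | coe z =>
    set u := ‖z‖ ^ 2
    have hsplit : (mulGaussian b hb (p * expTaylor a N) - mulGaussian (b + a) (add_pos hb ha) p) z
        = evalZZbar p z * gaussianWeight b z
          * (evalZZbar (expTaylor a N) z - gaussianWeight a z) := by
      simp only [ContinuousMap.sub_apply, mulGaussian_apply_coe, evalZZbar_mul,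
        gaussianWeight_add]
      ring
    have hexp : Real.exp (a * u) * Real.exp (-b * u) * Real.exp (a * u)
        ≤ Real.exp (-(2 * (a * u))) := by
      rw [← Real.exp_add, ← Real.exp_add, Real.exp_le_exp]
      nlinarith [sq_nonneg ‖z‖]
    rw [hsplit, norm_mul, norm_mul, norm_gaussianWeight, norm_sub_rev]
    calc ‖evalZZbar p z‖ * Real.exp (-b * u) * ‖gaussianWeight a z - evalZZbar (expTaylor a N) z‖
        ≤ K * Real.exp (a * u) * Real.exp (-b * u) * ((a * u) ^ N / N ! * Real.exp (a * u)) := by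
          gcongr
          · exact hK z
          · exact norm_gaussianWeight_sub_evalZZbar_expTaylor_le ha.le N z
      _ = K * ((a * u) ^ N / N ! * (Real.exp (a * u) * Real.exp (-b * u) * Real.exp (a * u))) :=
          by ring
      _ ≤ K * ((a * u) ^ N / N ! * Real.exp (-(2 * (a * u)))) := by gcongr
      _ ≤ K * (1 / 2) ^ N := by
          gcongr
          exact Real.pow_div_factorial_mul_exp_neg_two_mul_le (by positivity) N

theorem tendsto_mulGaussian_mul_expTaylor {a b : ℝ} (ha : 0 < a) (hb : 0 < b) (hab : 4 * a ≤ b)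
    (p : MvPolynomial (Fin 2) ℂ) :
    Tendsto (fun N => mulGaussian b hb (p * expTaylor a N)) atTop
      (𝓝 (mulGaussian (b + a) (add_pos hb ha) p)) := by
  obtain ⟨K, hK⟩ := exists_norm_evalZZbar_le p ha
  have hgeom : Tendsto (fun N : ℕ => K * (1 / 2 : ℝ) ^ N) atTop (𝓝 0) := by
    simpa using (tendsto_pow_atTop_nhds_zero_of_lt_one (r := (1 / 2 : ℝ)) (by norm_num)
      (by norm_num)).const_mul K
  rw [tendsto_iff_norm_sub_tendsto_zero]
  exact squeeze_zero (fun _ => norm_nonneg _)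
    (norm_mulGaussian_mul_expTaylor_sub_le ha hb hab hK) hgeom

theorem mulGaussian_mem_topologicalClosure {b c : ℝ} (hc : 0 < c) (hcb : c ≤ b)
    (p : MvPolynomial (Fin 2) ℂ) :
    mulGaussian b (hc.trans_le hcb) p
      ∈ (LinearMap.range (mulGaussian c hc)).topologicalClosure := by
  obtain ⟨n, hn⟩ := exists_nat_ge ((b - c) / (c / 4))
  rw [div_le_iff₀ (by positivity), sub_le_iff_le_add'] at hn
  induction n generalizing b p with
  | zero =>
    obtain rfl : b = c := le_antisymm (by simpa using hn) hcb
    exact Submodule.le_topologicalClosure _ ⟨p, rfl⟩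
  | succ n ih =>
    rcases le_or_gt b (c + n * (c / 4)) with hle | hlt
    · exact ih hcb p hle
    have hcb' : c ≤ c + n * (c / 4) := le_add_of_nonneg_right (by positivity)
    obtain ⟨a, rfl⟩ : ∃ a, b = c + n * (c / 4) + a := ⟨b - (c + n * (c / 4)), by ring⟩
    push_cast at hn
    have hstep := tendsto_mulGaussian_mul_expTaylor (by linarith) (hc.trans_le hcb')
      (by linarith) p
    exact (Submodule.isClosed_topologicalClosure _).mem_of_tendsto hstep
      (Eventually.of_forall fun N => ih hcb' _ le_rfl)

noncomputable def gaussianClosure (c : ℝ) (hc : 0 < c) :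
    NonUnitalStarSubalgebra ℂ C(OnePoint ℂ, ℂ) :=
  { (LinearMap.range (mulGaussian c hc)).topologicalClosure with
    mul_mem' := fun {f g} hf hg => by
      refine (Submodule.isClosed_topologicalClosure _).closure_subset
        (map_mem_closure₂ continuous_mul hf hg ?_)
      rintro _ ⟨p, rfl⟩ _ ⟨q, rfl⟩
      rw [mulGaussian_mul_mulGaussian]
      exact mulGaussian_mem_topologicalClosure hc (by linarith) (p * q)
    star_mem' := fun {f} hf => by
      refine map_mem_closure continuous_star hf ?_
      rintro _ ⟨p, rfl⟩
      exact ⟨_, (star_mulGaussian hc p).symm⟩ }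

theorem separatesPoints_adjoin_mulGaussian {c : ℝ} (hc : 0 < c) :
    (StarAlgebra.adjoin ℂ {mulGaussian c hc 1, mulGaussian c hc (X 0)}).SeparatesPoints := by
  intro x y hxy
  by_contra! h
  have hE := h _ ⟨_, StarAlgebra.subset_adjoin ℂ _ (Set.mem_insert _ _), rfl⟩
  have hZ := h _ ⟨_, StarAlgebra.subset_adjoin ℂ _ (Set.mem_insert_of_mem _ rfl), rfl⟩
  induction x using OnePoint.rec <;> induction y using OnePoint.rec <;>
    simp [evalZZbar, gaussianWeight_ne_zero, (gaussianWeight_ne_zero _ _).symm] at hxy hE hZ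
  rw [hE] at hZ
  exact hxy (mul_right_cancel₀ (gaussianWeight_ne_zero c _) hZ)

open NonUnitalStarSubalgebra in
theorem addConstants_gaussianClosure_eq_top {c : ℝ} (hc : 0 < c) :
    (gaussianClosure c hc).addConstants ∞ = ⊤ := by
  set A := StarAlgebra.adjoin ℂ {mulGaussian c hc 1, mulGaussian c hc (X 0)}
  have hAW : A ≤ (gaussianClosure c hc).addConstants ∞ := by
    refine StarAlgebra.adjoin_le ?_
    rintro _ (rfl | rfl) <;>
      exact (mem_addConstants_iff (mulGaussian_apply_infty hc _)).2 (subset_closure ⟨_, rfl⟩)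
  rw [eq_top_iff, ← ContinuousMap.starSubalgebra_topologicalClosure_eq_top_of_separatesPoints A
    (separatesPoints_adjoin_mulGaussian hc)]
  exact A.topologicalClosure_minimal hAW
    (isClosed_addConstants (Submodule.isClosed_topologicalClosure _) ∞)

/-- For every `c > 0`, the functions `z ↦ p(z,z̄)·e^{-c|z|²}` for `p ∈ Π(z,z̄)` are dense in
`C₀(ℂ, ℂ)` with respect to the supremum norm. -/
theorem stmt_1 (c : ℝ) (hc : 0 < c)
    (f : ℂ → ℂ) (hf : Continuous f) (hf0 : Tendsto f (cocompact ℂ) (nhds 0))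
    (ε : ℝ) (hε : 0 < ε) :
    ∃ q : MvPolynomial (Fin 2) ℂ, ∀ z : ℂ,
      ‖MvPolynomial.eval ![z, (starRingEnd ℂ) z] q * (Real.exp (-c * ‖z‖ ^ 2) : ℂ) - f z‖ < ε := by
  let F : C(OnePoint ℂ, ℂ) := continuousMapMk ⟨f, hf⟩ 0 (by rwa [coclosedCompact_eq_cocompact])
  have hF : F ∈ gaussianClosure c hc := by
    rw [← NonUnitalStarSubalgebra.mem_addConstants_iff (x₀ := ∞) rfl,
      addConstants_gaussianClosure_eq_top hc]
    trivial
  obtain ⟨_, ⟨q, rfl⟩, hq⟩ := Metric.mem_closure_iff.1 hF ε hε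
  refine ⟨q, fun z => ?_⟩
  rw [← dist_eq_norm]
  exact (ContinuousMap.dist_apply_le_dist (z : OnePoint ℂ)).trans_lt (dist_comm F _ ▸ hq)
end

section
/- Let p ∈ (0,∞), let (Ω, 𝒜, μ) be a measure space, and let h : Ω → ℂ be a bounded measurable function with h ≠ 0 μ-almost everywhere. If a set M of functions in L^p(μ) is dense in L^p(μ), then the set {f·h : f ∈ M} is also dense in L^p(μ). -/
/-!
For `r > 0` the truncated quotient `G_r = 1_{‖h‖ ≥ r} · g / h` is in `L^p`, and
`G_r h - g = -1_{‖h‖ < r} · g` tends to `0` in `L^p` as `r → 0⁺` by dominated convergence,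
because `h ≠ 0` a.e. Approximating `G_r` by `f ∈ M`, boundedness of `h` keeps `f h` close to
`G_r h`, and the quasi-triangle inequality of `L^p` (valid also for `p < 1`) combines the errors.
-/

open MeasureTheory Filter ENNReal Topology

namespace MeasureTheory

theorem tendsto_eLpNorm_zero_of_dominated {α E F ι : Type*} [MeasurableSpace α] {μ : Measure α}
    {q : ℝ≥0∞} [NormedAddCommGroup E] [NormedAddCommGroup F] {l : Filter ι}
    [l.IsCountablyGenerated] (hq : q ≠ ∞)
    {u : ι → α → E} {g : α → F} (hu : ∀ i, AEStronglyMeasurable (u i) μ) (hg : MemLp g q μ)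
    (hbound : ∀ᶠ i in l, ∀ᵐ ω ∂μ, ‖u i ω‖ ≤ ‖g ω‖)
    (hlim : ∀ᵐ ω ∂μ, Tendsto (fun i => u i ω) l (𝓝 0)) :
    Tendsto (fun i => eLpNorm (u i) q μ) l (𝓝 0) := by
  rcases eq_or_ne q 0 with rfl | hq0
  · simpa using tendsto_const_nhds
  have hq_pos : 0 < q.toReal := toReal_pos hq0 hq
  have hrpow {y : ℝ} (hy : 0 < y) : Tendsto (fun a : ℝ≥0∞ => a ^ y) (𝓝 0) (𝓝 0) := by
    simpa [zero_rpow_of_pos hy] using (ENNReal.continuous_rpow_const (y := y)).tendsto 0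
  suffices Tendsto (fun i => ∫⁻ ω, ‖u i ω‖ₑ ^ q.toReal ∂μ) l (𝓝 0) by
    simp only [eLpNorm_eq_lintegral_rpow_enorm_toReal hq0 hq, one_div]
    exact (hrpow (inv_pos.2 hq_pos)).comp this
  have hfin : ∫⁻ ω, ‖g ω‖ₑ ^ q.toReal ∂μ ≠ ∞ :=
    (lintegral_rpow_enorm_lt_top_of_eLpNorm_lt_top hq0 hq hg.2).ne
  simpa using tendsto_lintegral_filter_of_dominated_convergence' (f := fun _ => 0) _
    (.of_forall fun i => (hu i).enorm.pow_const _)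
    (hbound.mono fun i hi => hi.mono fun ω hω =>
      rpow_le_rpow (enorm_le_iff_norm_le.2 hω) hq_pos.le)
    hfin (hlim.mono fun ω hω =>
      (hrpow hq_pos).comp (by simpa [Function.comp_def] using (continuous_enorm.tendsto 0).comp hω))

section TruncatedDiv

variable {α 𝕜 : Type*} [RCLike 𝕜]

noncomputable def truncatedDiv (g h : α → 𝕜) (r : ℝ) : α → 𝕜 :=
  {ω | r ≤ ‖h ω‖}.indicator fun ω => g ω / h ω

variable {g h : α → 𝕜} {r : ℝ}

theorem truncatedDiv_mul_sub (hr : 0 < r) (ω : α) :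
    truncatedDiv g h r ω * h ω - g ω = -{ω | ‖h ω‖ < r}.indicator g ω := by
  by_cases hω : r ≤ ‖h ω‖
  · have hh : h ω ≠ 0 := norm_pos_iff.1 (hr.trans_le hω)
    simp [truncatedDiv, hω, hh]
  · simp [truncatedDiv, hω, not_le.1 hω]

theorem norm_truncatedDiv_le (hr : 0 < r) (ω : α) :
    ‖truncatedDiv g h r ω‖ ≤ r⁻¹ * ‖g ω‖ := by
  by_cases hω : r ≤ ‖h ω‖
  · simp only [truncatedDiv, Set.indicator_of_mem (show ω ∈ {ω | r ≤ ‖h ω‖} from hω), norm_div]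
    rw [div_eq_inv_mul]
    gcongr
  · simp [truncatedDiv, hω]
    positivity

variable [MeasurableSpace α] {μ : Measure α} {q : ℝ≥0∞}

theorem AEStronglyMeasurable.truncatedDiv (hg : AEStronglyMeasurable g μ) (hh : Measurable h) :
    AEStronglyMeasurable (truncatedDiv g h r) μ :=
  (hg.div₀ hh.aestronglyMeasurable).indicator (measurableSet_le measurable_const hh.norm)

theorem MemLp.truncatedDiv (hg : MemLp g q μ) (hh : Measurable h) (hr : 0 < r) :
    MemLp (truncatedDiv g h r) q μ :=
  hg.of_le_mul (hg.1.truncatedDiv hh) (.of_forall (norm_truncatedDiv_le hr))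

theorem tendsto_eLpNorm_truncatedDiv_mul_sub (hq : q ≠ ∞) (hg : MemLp g q μ) (hh : Measurable h)
    (hne : ∀ᵐ ω ∂μ, h ω ≠ 0) :
    Tendsto (fun r => eLpNorm (fun ω => truncatedDiv g h r ω * h ω - g ω) q μ) (𝓝[>] 0) (𝓝 0) := by
  refine tendsto_eLpNorm_zero_of_dominated hq
    (fun r => ((hg.1.truncatedDiv hh).mul hh.aestronglyMeasurable).sub hg.1) hg ?_ ?_
  · filter_upwards [self_mem_nhdsWithin] with r hr
    refine .of_forall fun ω => ?_
    rw [truncatedDiv_mul_sub hr, norm_neg]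
    exact norm_indicator_le_norm_self _ _
  · filter_upwards [hne] with ω hω
    refine tendsto_const_nhds.congr' ?_
    filter_upwards [Ioo_mem_nhdsGT (norm_pos_iff.2 hω)] with r hr
    simp [truncatedDiv_mul_sub hr.1, lt_asymm hr.2]

theorem exists_memLp_eLpNorm_mul_sub_lt (hq : q ≠ ∞) (hg : MemLp g q μ) (hh : Measurable h)
    (hne : ∀ᵐ ω ∂μ, h ω ≠ 0) {η : ℝ≥0∞} (hη : 0 < η) :
    ∃ G, MemLp G q μ ∧ eLpNorm (fun ω => G ω * h ω - g ω) q μ < η := by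
  obtain ⟨r, hrη, hr⟩ := ((tendsto_eLpNorm_truncatedDiv_mul_sub hq hg hh hne
    |>.eventually (gt_mem_nhds hη)).and self_mem_nhdsWithin).exists
  exact ⟨truncatedDiv g h r, hg.truncatedDiv hh hr, hrη⟩

end TruncatedDiv

end MeasureTheory

open MeasureTheory

theorem stmt_4_general (p : ℝ) {Ω : Type*} [MeasurableSpace Ω] (μ : Measure Ω)
    (h : Ω → ℂ) (hmeas : Measurable h) (C : ℝ) (hbd : ∀ ω, ‖h ω‖ ≤ C)
    (hne : ∀ᵐ ω ∂μ, h ω ≠ 0)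
    (M : Set (Ω → ℂ)) (hM : ∀ f ∈ M, MemLp f (ENNReal.ofReal p) μ)
    (hdense : ∀ g : Ω → ℂ, MemLp g (ENNReal.ofReal p) μ → ∀ ε : ℝ, 0 < ε → ∃ f ∈ M,
      eLpNorm (fun ω => f ω - g ω) (ENNReal.ofReal p) μ < ENNReal.ofReal ε) :
    ∀ g : Ω → ℂ, MemLp g (ENNReal.ofReal p) μ → ∀ ε : ℝ, 0 < ε → ∃ f ∈ M,
      eLpNorm (fun ω => f ω * h ω - g ω) (ENNReal.ofReal p) μ < ENNReal.ofReal ε := by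
  intro g hg ε hε
  obtain ⟨η, hη, hsum_lt⟩ := exists_Lp_half ℂ μ (ENNReal.ofReal p) (ofReal_pos.2 hε).ne'
  obtain ⟨G, hG, hGg⟩ := exists_memLp_eLpNorm_mul_sub_lt ofReal_ne_top hg hmeas hne hη
  obtain ⟨c, hc, hcC⟩ := ENNReal.exists_nnreal_pos_mul_lt ofReal_ne_top hη.ne'
  obtain ⟨f, hfM, hfG⟩ := hdense G hG c hc
  refine ⟨f, hfM, ?_⟩
  have hfGh : eLpNorm (fun ω => (f ω - G ω) * h ω) (ENNReal.ofReal p) μ ≤ η := calc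
    _ ≤ ENNReal.ofReal C * eLpNorm (fun ω => f ω - G ω) (ENNReal.ofReal p) μ :=
      eLpNorm_le_mul_eLpNorm_of_ae_le_mul (.of_forall fun ω => by
        rw [norm_mul, mul_comm]; gcongr; exact hbd ω) _
    _ ≤ c * ENNReal.ofReal C := by
      rw [mul_comm]; gcongr; simpa using hfG.le
    _ ≤ η := hcC.le
  have hsplit : (fun ω => f ω * h ω - g ω) =
      (fun ω => (f ω - G ω) * h ω) + fun ω => G ω * h ω - g ω := by
    ext ω
    simp only [Pi.add_apply]
    ring
  rw [hsplit]
  exact hsum_lt _ _ (((hM f hfM).1.sub hG.1).mul hmeas.aestronglyMeasurable)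
    ((hG.1.mul hmeas.aestronglyMeasurable).sub hg.1) hfGh hGg.le

/-- Lemma: for `p ∈ (0,∞)`, a measure space `(Ω,𝒜,μ)` and a bounded measurable `h : Ω → ℂ`
with `h ≠ 0` μ-a.e., if a set `M` of functions in `L^p(μ)` is dense in `L^p(μ)`, then so is
`{f·h : f ∈ M}`. -/
theorem stmt_4 (p : ℝ) (hp : 0 < p) {Ω : Type*} [MeasurableSpace Ω] (μ : Measure Ω)
    (h : Ω → ℂ) (hmeas : Measurable h) (C : ℝ) (hbd : ∀ ω, ‖h ω‖ ≤ C)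
    (hne : ∀ᵐ ω ∂μ, h ω ≠ 0)
    (M : Set (Ω → ℂ)) (hM : ∀ f ∈ M, MemLp f (ENNReal.ofReal p) μ)
    (hdense : ∀ g : Ω → ℂ, MemLp g (ENNReal.ofReal p) μ → ∀ ε : ℝ, 0 < ε → ∃ f ∈ M,
      eLpNorm (fun ω => f ω - g ω) (ENNReal.ofReal p) μ < ENNReal.ofReal ε) :
    ∀ g : Ω → ℂ, MemLp g (ENNReal.ofReal p) μ → ∀ ε : ℝ, 0 < ε → ∃ f ∈ M,
      eLpNorm (fun ω => f ω * h ω - g ω) (ENNReal.ofReal p) μ < ENNReal.ofReal ε :=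
  stmt_4_general p μ h hmeas C hbd hne M hM hdense
end

section
/- Let μ be a σ-finite Borel measure on ℂ. Then there exists an increasing sequence (Fₙ) of compact subsets of ℂ such that each Fₙ has empty interior, the complement ℂ \ Fₙ is connected, and μ(ℂ \ ⋃ₙ Fₙ) = 0. -/
open MeasureTheory Filter
open Set
open scoped ENNReal Topology

/-!
Replacing `μ` by an equivalent finite measure and projecting to the real axis gives a finite
measure `ν` on `ℝ`. Short intervals `(q, b_q)` to the right of the rationals have small
`ν`-measure (being open on the left, they avoid a possible atom at `q`), so there are dense open
sets `U_n` with `ν U_n → 0`. Then `K_n = [-n, n] \ ⋂_{m ≤ n} U_m` is compact and nowhere dense,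
and `F_n = K_n × [-n, n]` works: off `F_n` every point lies on a whole vertical or horizontal line
missing `F_n`, and any two such lines meet; and the points missed by all `F_n` lie over
`⋂ U_n`, which is `ν`-null.
-/

theorem isConnected_compl_prod {X Y : Type*} [TopologicalSpace X] [TopologicalSpace Y]
    [PreconnectedSpace X] [PreconnectedSpace Y] {s : Set X} {t : Set Y}
    (hs : sᶜ.Nonempty) (ht : tᶜ.Nonempty) : IsConnected (s ×ˢ t)ᶜ := by
  obtain ⟨x₀, hx₀⟩ := hs
  obtain ⟨y₀, hy₀⟩ := ht
  refine ⟨⟨(x₀, y₀), fun h => hx₀ h.1⟩, isPreconnected_of_forall (x₀, y₀) ?_⟩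
  rintro ⟨a, b⟩ hab
  rcases not_and_or.1 hab with ha | hb
  · refine ⟨{a} ×ˢ univ ∪ univ ×ˢ {y₀}, ?_, Or.inr ⟨trivial, rfl⟩, Or.inl ⟨rfl, trivial⟩, ?_⟩
    · rintro p (⟨rfl, -⟩ | ⟨-, hp⟩) ⟨hp₁, hp₂⟩
      exacts [ha hp₁, hy₀ (hp ▸ hp₂)]
    · exact (isPreconnected_singleton.prod isPreconnected_univ).union (a, y₀) ⟨rfl, trivial⟩
        ⟨trivial, rfl⟩ (isPreconnected_univ.prod isPreconnected_singleton)
  · refine ⟨univ ×ˢ {b} ∪ {x₀} ×ˢ univ, ?_, Or.inr ⟨rfl, trivial⟩, Or.inl ⟨trivial, rfl⟩, ?_⟩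
    · rintro p (⟨-, hp⟩ | ⟨hp, -⟩) ⟨hp₁, hp₂⟩
      exacts [hb (hp ▸ hp₂), hx₀ (hp ▸ hp₁)]
    · exact (isPreconnected_univ.prod isPreconnected_singleton).union (x₀, b) ⟨trivial, rfl⟩
        ⟨rfl, trivial⟩ (isPreconnected_singleton.prod isPreconnected_univ)

theorem Complex.isConnected_compl_reProdIm {s t : Set ℝ} (hs : sᶜ.Nonempty) (ht : tᶜ.Nonempty) :
    IsConnected (s ×ℂ t)ᶜ := by
  rw [← preimage_equivRealProd_prod, ← preimage_compl]
  exact equivRealProdCLM.toHomeomorph.isConnected_preimage.2 (isConnected_compl_prod hs ht)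

theorem exists_lt_measure_Ioo_le (ν : Measure ℝ) [IsLocallyFiniteMeasure ν] (x : ℝ) {ε : ℝ≥0∞}
    (hε : 0 < ε) : ∃ b > x, ν (Ioo x b) ≤ ε := by
  have hlim : Tendsto (ν ∘ Ioo x) (𝓝[>] x) (𝓝 (ν (⋂ r > x, Ioo x r))) :=
    tendsto_measure_biInter_gt (fun _ _ => measurableSet_Ioo.nullMeasurableSet)
      (fun _ _ _ h => Ioo_subset_Ioo_right h) ⟨x + 1, by linarith, measure_Ioo_lt_top.ne⟩
  have hempty : ⋂ r > x, Ioo x r = ∅ :=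
    eq_empty_of_forall_notMem fun y hy => (mem_iInter₂.1 hy y (mem_iInter₂.1 hy (x + 1)
      (by linarith)).1).2.false
  rw [hempty, measure_empty] at hlim
  obtain ⟨b, hνb, hb⟩ := ((hlim.eventually_lt_const hε).and self_mem_nhdsWithin).exists
  exact ⟨b, hb, hνb.le⟩

theorem exists_isOpen_dense_measure_le (ν : Measure ℝ) [IsLocallyFiniteMeasure ν] {ε : ℝ≥0∞}
    (hε : ε ≠ 0) : ∃ U : Set ℝ, IsOpen U ∧ Dense U ∧ ν U ≤ ε := by
  obtain ⟨ε', hε'pos, hε'sum⟩ := ENNReal.exists_pos_sum_of_countable hε ℚ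
  choose b hb hνb using fun q : ℚ => exists_lt_measure_Ioo_le ν q (ENNReal.coe_pos.2 (hε'pos q))
  refine ⟨⋃ q : ℚ, Ioo (q : ℝ) (b q), isOpen_iUnion fun _ => isOpen_Ioo, ?_, ?_⟩
  · refine dense_closure.1 (Rat.denseRange_cast.mono (range_subset_iff.2 fun q => ?_))
    refine closure_mono (subset_iUnion _ q) ?_
    rw [closure_Ioo (hb q).ne]
    exact left_mem_Icc.2 (hb q).le
  · calc ν (⋃ q : ℚ, Ioo (q : ℝ) (b q)) ≤ ∑' q : ℚ, ν (Ioo (q : ℝ) (b q)) := measure_iUnion_le _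
      _ ≤ ∑' q : ℚ, (ε' q : ℝ≥0∞) := ENNReal.tsum_le_tsum hνb
      _ ≤ ε := hε'sum.le

theorem exists_monotone_isCompact_interior_eq_empty_measure_compl_iUnion_eq_zero
    (ν : Measure ℝ) [IsLocallyFiniteMeasure ν] :
    ∃ K : ℕ → Set ℝ, Monotone K ∧ (∀ n, IsCompact (K n) ∧ interior (K n) = ∅) ∧
      ν (⋃ n, K n)ᶜ = 0 := by
  choose U hUopen hUdense hνU using fun n : ℕ =>
    exists_isOpen_dense_measure_le ν (ENNReal.inv_ne_zero.2 (ENNReal.natCast_ne_top n))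
  set W : ℕ → Set ℝ := fun n => ⋂ m ≤ n, U m
  have hWopen (n : ℕ) : IsOpen (W n) := (finite_le_nat n).isOpen_biInter fun m _ => hUopen m
  have hWdense (n : ℕ) : Dense (W n) :=
    dense_biInter_of_isOpen (fun m _ => hUopen m) (finite_le_nat n).countable fun m _ => hUdense m
  refine ⟨fun n => Icc (-(n : ℝ)) n \ W n, fun m n hmn => ?_, fun n => ⟨?_, ?_⟩, ?_⟩
  · exact sdiff_subset_sdiff (Icc_subset_Icc (by simpa using hmn) (by simpa using hmn))
      (biInter_subset_biInter_left fun k hk => le_trans hk hmn)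
  · exact isCompact_Icc.diff (hWopen n)
  · refine subset_empty_iff.1 ((interior_mono (sdiff_subset_compl _ _)).trans ?_)
    rw [interior_compl, (hWdense n).closure_eq, compl_univ]
  · have hsub : (⋃ n : ℕ, Icc (-(n : ℝ)) n \ W n)ᶜ ⊆ ⋂ m, U m := by
      refine fun x hx => mem_iInter.2 fun m => ?_
      obtain ⟨n, hn⟩ := exists_nat_ge (max (m : ℝ) |x|)
      have hxW : x ∈ W n := by_contra fun h =>
        hx (mem_iUnion.2 ⟨n, ⟨abs_le.1 ((le_max_right _ _).trans hn), h⟩⟩)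
      exact mem_iInter₂.1 hxW m (by exact_mod_cast (le_max_left _ _).trans hn)
    refine measure_mono_null hsub (nonpos_iff_eq_zero.1 ?_)
    exact ge_of_tendsto' ENNReal.tendsto_inv_nat_nhds_zero fun m =>
      (measure_mono (iInter_subset _ m)).trans (hνU m)

theorem Complex.iUnion_reProdIm_Icc {K : ℕ → Set ℝ} (hK : Monotone K) :
    ⋃ n : ℕ, K n ×ℂ Icc (-(n : ℝ)) n = re ⁻¹' ⋃ n, K n := by
  ext z
  simp only [mem_iUnion, mem_reProdIm, mem_preimage, mem_Icc]
  refine ⟨fun ⟨n, hn, _⟩ => ⟨n, hn⟩, fun ⟨m, hm⟩ => ?_⟩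
  obtain ⟨n, hn⟩ := exists_nat_ge (max (m : ℝ) |z.im|)
  exact ⟨n, hK (by exact_mod_cast (le_max_left _ _).trans hn) hm,
    abs_le.1 ((le_max_right _ _).trans hn)⟩

/-- For every σ-finite Borel measure `μ` on `ℂ` there is an increasing sequence `(Fₙ)` of
compact sets with empty interior and connected complement such that `μ(ℂ \ ⋃ₙ Fₙ) = 0`. -/
theorem stmt_5 (μ : Measure ℂ) [SigmaFinite μ] :
    ∃ F : ℕ → Set ℂ, (∀ n, F n ⊆ F (n + 1)) ∧
      (∀ n, IsCompact (F n) ∧ interior (F n) = ∅ ∧ IsConnected (F n)ᶜ) ∧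
      μ ((⋃ n, F n)ᶜ) = 0 := by
  obtain ⟨K, hKmono, hK, hKnull⟩ :=
    exists_monotone_isCompact_interior_eq_empty_measure_compl_iUnion_eq_zero
      (μ.toFinite.map Complex.re)
  have hKcompl (n : ℕ) : (K n)ᶜ.Nonempty :=
    nonempty_compl.2 fun h => by simpa [h] using (hK n).2
  refine ⟨fun n => K n ×ℂ Icc (-(n : ℝ)) n, fun n z hz => ?_, fun n => ⟨?_, ?_, ?_⟩, ?_⟩
  · exact ⟨hKmono n.le_succ hz.1, Icc_subset_Icc (by simp) (by simp) hz.2⟩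
  · exact (hK n).1.reProdIm isCompact_Icc
  · rw [Complex.interior_reProdIm, (hK n).2]
    exact Complex.reProdIm_eq_empty.2 (Or.inl rfl)
  · exact Complex.isConnected_compl_reProdIm (hKcompl n) ⟨n + 1, by simp⟩
  · have hmeas : MeasurableSet (⋃ n, K n)ᶜ :=
      (MeasurableSet.iUnion fun n => (hK n).1.isClosed.measurableSet).compl
    rw [Complex.iUnion_reProdIm_Icc hKmono, ← preimage_compl, ← toFinite_apply_eq_zero_iff,
      ← Measure.map_apply Complex.measurable_re hmeas, hKnull]
end

section
/- Let X ⊆ ℂ be a locally compact subspace and suppose h ∈ C₀(X) is a cyclic vector for M_z in C₀(X), i.e., q·h ∈ C₀(X) for every q ∈ Π(z) and {q·h : q ∈ Π(z)} is dense in C₀(X) with respect to the supremum norm. Then every compact subset K ⊆ X is an α-set, i.e., every continuous complex-valued function on K is a uniform limit on K of polynomials in z. -/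
open MeasureTheory Filter

/-- If `X ⊆ ℂ` is locally compact and `h ∈ C₀(X)` is a cyclic vector for `M_z` in `C₀(X)`,
then every compact `K ⊆ X` is an α-set: every continuous function on `K` is a uniform limit
of polynomials in `z`. -/
theorem stmt_11 (X : Set ℂ) [LocallyCompactSpace X] (h : X → ℂ)
    (hcont : Continuous h) (h0 : Tendsto h (cocompact X) (nhds 0))
    (hC0 : ∀ q : Polynomial ℂ,
      Continuous (fun z : X => Polynomial.eval (z : ℂ) q * h z) ∧
      Tendsto (fun z : X => Polynomial.eval (z : ℂ) q * h z) (cocompact X) (nhds 0))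
    (hdense : ∀ f : X → ℂ, Continuous f → Tendsto f (cocompact X) (nhds 0) →
      ∀ ε : ℝ, 0 < ε → ∃ q : Polynomial ℂ, ∀ z : X, ‖Polynomial.eval (z : ℂ) q * h z - f z‖ < ε) :
    ∀ K : Set ℂ, K ⊆ X → IsCompact K →
      ∀ φ : K → ℂ, Continuous φ → ∀ ε : ℝ, 0 < ε →
        ∃ q : Polynomial ℂ, ∀ z : K, ‖Polynomial.eval (z : ℂ) q - φ z‖ < ε := by
  intro K hKX hK φ hφ ε hε
  -- the copy of `K` inside `X`
  set K' : Set X := Subtype.val ⁻¹' K with hK'def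
  have himg : Subtype.val '' K' = K := by
    ext z
    constructor
    · rintro ⟨x, hx, rfl⟩; exact hx
    · intro hz; exact ⟨⟨z, hKX hz⟩, hz, rfl⟩
  have hK'c : IsCompact K' := by
    rw [Topology.IsEmbedding.isCompact_iff Topology.IsEmbedding.subtypeVal, himg]
    exact hK
  -- case `K` empty
  rcases K'.eq_empty_or_nonempty with hKe | hK'ne
  · refine ⟨0, fun z => ?_⟩
    exfalso
    have : (⟨(z : ℂ), hKX z.2⟩ : X) ∈ K' := z.2
    rw [hKe] at this
    exact this
  -- `h` does not vanish on `K'`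
  have hne : ∀ x ∈ K', h x ≠ 0 := by
    intro x hx hx0
    obtain ⟨χ, hχ1, hχ0, hχsupp, hχmem⟩ :=
      exists_continuous_one_zero_of_isCompact (isCompact_singleton (x := x))
        isClosed_empty (Set.disjoint_empty _)
    have hfc : Continuous fun y : X => ((χ y : ℝ) : ℂ) :=
      Complex.continuous_ofReal.comp χ.continuous
    have hfsupp : HasCompactSupport fun y : X => ((χ y : ℝ) : ℂ) :=
      hχsupp.comp_left (g := fun t : ℝ => (t : ℂ)) (by simp)
    have hf0 : Tendsto (fun y : X => ((χ y : ℝ) : ℂ)) (cocompact X) (nhds 0) :=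
      hfsupp.is_zero_at_infty
    obtain ⟨q, hq⟩ := hdense _ hfc hf0 (1/2) (by norm_num)
    have := hq x
    have hx1 : χ x = 1 := hχ1 rfl
    rw [hx0, mul_zero, hx1] at this
    norm_num at this
  -- minimum of `‖h‖` on `K'`
  obtain ⟨x₀, hx₀, hmin⟩ := hK'c.exists_isMinOn hK'ne
    ((continuous_norm.comp hcont).continuousOn)
  set c : ℝ := ‖h x₀‖ with hcdef
  have hc : 0 < c := norm_pos_iff.mpr (hne x₀ hx₀)
  -- the function `φ · h` on `K'`, extended to all of `X`
  have he : Continuous fun x : K' => (⟨(x : X), x.2⟩ : K) :=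
    (continuous_subtype_val.comp continuous_subtype_val).subtype_mk _
  have hψc : Continuous fun x : K' => φ ⟨(x : X), x.2⟩ * h (x : X) :=
    (hφ.comp he).mul (hcont.comp continuous_subtype_val)
  obtain ⟨G, hG⟩ := ContinuousMap.exists_restrict_eq (Y := ℂ) hK'c.isClosed
    ⟨_, hψc⟩
  have hGeq : ∀ x : K', G x = φ ⟨(x : X), x.2⟩ * h (x : X) := by
    intro x
    have := congrFun (congrArg DFunLike.coe hG) x
    simpa using this
  -- bump function equal to 1 on `K'`
  obtain ⟨χ, hχ1, hχ0, hχsupp, hχmem⟩ :=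
    exists_continuous_one_zero_of_isCompact hK'c isClosed_empty (Set.disjoint_empty _)
  set f : X → ℂ := fun y => ((χ y : ℝ) : ℂ) * G y with hfdef
  have hfc : Continuous f :=
    (Complex.continuous_ofReal.comp χ.continuous).mul G.continuous
  have hfsupp : HasCompactSupport f := by
    have h1 : HasCompactSupport fun y : X => ((χ y : ℝ) : ℂ) :=
      hχsupp.comp_left (g := fun t : ℝ => (t : ℂ)) (by simp)
    exact h1.mul_right
  have hf0 : Tendsto f (cocompact X) (nhds 0) := hfsupp.is_zero_at_infty
  obtain ⟨q, hq⟩ := hdense f hfc hf0 (ε * c) (mul_pos hε hc)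
  refine ⟨q, fun z => ?_⟩
  set x : X := ⟨(z : ℂ), hKX z.2⟩ with hxdef
  have hxK' : x ∈ K' := z.2
  have hfx : f x = φ z * h x := by
    have h1 : χ x = 1 := hχ1 hxK'
    have h2 : G x = φ z * h x := by
      have := hGeq ⟨x, hxK'⟩
      simpa using this
    simp [hfdef, h1, h2]
  have key := hq x
  rw [hfx, ← sub_mul, norm_mul] at key
  have hc_le : c ≤ ‖h x‖ := hmin hxK'
  have hpos : 0 < ‖h x‖ := lt_of_lt_of_le hc hc_le
  have : ‖Polynomial.eval ((z : ℂ)) q - φ z‖ * ‖h x‖ < ε * ‖h x‖ :=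
    lt_of_lt_of_le key (by nlinarith)
  exact lt_of_mul_lt_mul_right this (norm_nonneg _) |>.trans_le le_rfl
end

section
/- Let X ⊆ ℂ be a locally compact subspace such that every compact subset K ⊆ X is an α-set, and let c > 0. Then there exists η ∈ C₀(X) with η(z) > 0 for all z ∈ X such that h(z) := e^{-c|z|²}·η(z) is a cyclic vector for M_z in C₀(X): q·h ∈ C₀(X) for every q ∈ Π(z), and {q·h : q ∈ Π(z)} is dense in C₀(X) with respect to the supremum norm. -/
/-!
The weight is `η = exp (-S)` with `S = ∑ aⱼ ψⱼ`, where `ψⱼ` is a cutoff vanishing on `Kⱼ` and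
equal to `1` off `Kⱼ₊₁` for a compact exhaustion `(Kⱼ)` of `X`. Since `{q · h}` is a linear
space, it suffices to approximate the countably many functions `(1 - ψₙ) zᵏ`; they are
enumerated, each infinitely often, as targets `gⱼ` vanishing off `Kⱼ`. The `aⱼ` are chosen
inductively. On `Kⱼ₊₁` the α-set property gives `p` with `p h ≈ gⱼ`: the only part of `S` not yet
fixed there is `aⱼ ψⱼ`, and `gⱼ = 0` wherever `ψⱼ ≠ 0`, so the damping `exp (-aⱼ ψⱼ) ≤ 1` does no
harm. Then `aⱼ` is taken so large that `p h` is small off `Kⱼ₊₁`, which is possible because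
`p(z) e^{-c|z|²}` is bounded. Taking `aⱼ ≥ j` also makes `S → ∞`, so `η ∈ C₀(X)`.
-/

open Filter Set Topology Polynomial Real Asymptotics ZeroAtInfty

theorem Polynomial.tendsto_norm_eval_mul_exp_neg_mul_sq (q : ℂ[X]) {c : ℝ} (hc : 0 < c) :
    Tendsto (fun z : ℂ => ‖q.eval z‖ * exp (-c * ‖z‖ ^ 2)) (cocompact ℂ) (𝓝 0) := by
  have hq : (fun z => q.eval z) =O[cocompact ℂ] (· ^ q.natDegree) := by
    simpa [Metric.cobounded_eq_cocompact] using
      isBigO_cobounded_of_degree_le (P := q) (Q := X ^ q.natDegree) (by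
        rw [degree_X_pow]; exact degree_le_natDegree)
  have hgauss : Tendsto (fun z : ℂ => ‖z‖ ^ q.natDegree * exp (-c * ‖z‖ ^ 2))
      (cocompact ℂ) (𝓝 0) := by
    simpa [Function.comp_def] using
      (tendsto_rpow_abs_mul_exp_neg_mul_sq_cocompact hc q.natDegree).comp
        ((tendsto_norm_cocompact_atTop (E := ℂ)).mono_right atTop_le_cocompact)
  refine (hq.norm_norm.mul (isBigO_refl (fun z : ℂ => exp (-c * ‖z‖ ^ 2)) _)).trans_tendsto ?_
  simpa using hgauss

theorem Polynomial.exists_norm_eval_mul_exp_neg_mul_sq_le (q : ℂ[X]) {c : ℝ} (hc : 0 < c) :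
    ∃ C, ∀ z : ℂ, ‖q.eval z‖ * exp (-c * ‖z‖ ^ 2) ≤ C := by
  let f : C₀(ℂ, ℝ) := ⟨⟨_, by fun_prop⟩, q.tendsto_norm_eval_mul_exp_neg_mul_sq hc⟩
  obtain ⟨C, hC⟩ := isBounded_iff_forall_norm_le.1 f.isBounded_range
  exact ⟨C, fun z => (le_abs_self _).trans (hC _ ⟨z, rfl⟩)⟩

theorem Polynomial.tendsto_eval_mul_exp_neg_mul_sq_mul (q : ℂ[X]) {c : ℝ} (hc : 0 < c)
    {X : Set ℂ} {η : X → ℝ} (hη : Tendsto η (cocompact X) (𝓝 0)) :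
    Tendsto (fun z : X => q.eval (z : ℂ) * ((exp (-c * ‖(z : ℂ)‖ ^ 2) * η z : ℝ) : ℂ))
      (cocompact X) (𝓝 0) := by
  obtain ⟨C, hC⟩ := q.exists_norm_eval_mul_exp_neg_mul_sq_le hc
  refine squeeze_zero_norm (fun z => ?_) (by simpa using hη.abs.const_mul C)
  rw [norm_mul, Complex.norm_real, norm_mul, norm_of_nonneg (exp_pos _).le, ← mul_assoc,
    Real.norm_eq_abs]
  exact mul_le_mul_of_nonneg_right (hC z) (abs_nonneg _)

namespace CompactExhaustion

variable {X : Type*} [TopologicalSpace X] [RegularSpace X] [LocallyCompactSpace X]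
  (K : CompactExhaustion X)

theorem exists_cutoff (n : ℕ) :
    ∃ ψ : C(X, ℝ), (∀ x, ψ x ∈ Icc (0 : ℝ) 1) ∧ EqOn ψ 0 (K n) ∧ EqOn ψ 1 (K (n + 1))ᶜ := by
  obtain ⟨f, hf1, hf0, -, hf⟩ := exists_continuous_one_zero_of_isCompact (K.isCompact n)
    isOpen_interior.isClosed_compl (disjoint_compl_right_iff_subset.2 (K.subset_interior_succ n))
  refine ⟨1 - f, fun x => ?_, fun x hx => ?_, fun x hx => ?_⟩
  · simpa using (hf x).symm
  · simp [hf1 hx]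
  · simp [hf0 (compl_subset_compl.2 interior_subset hx)]

noncomputable def cutoff (n : ℕ) : C(X, ℝ) := (K.exists_cutoff n).choose

theorem cutoff_mem_Icc (n : ℕ) (x : X) : K.cutoff n x ∈ Icc (0 : ℝ) 1 :=
  (K.exists_cutoff n).choose_spec.1 x

theorem cutoff_eq_zero {n : ℕ} {x : X} (hx : x ∈ K n) : K.cutoff n x = 0 :=
  (K.exists_cutoff n).choose_spec.2.1 hx

theorem cutoff_eq_one {n : ℕ} {x : X} (hx : x ∉ K (n + 1)) : K.cutoff n x = 1 :=
  (K.exists_cutoff n).choose_spec.2.2 hx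

noncomputable def cutoffSum (a : ℕ → ℝ) (x : X) : ℝ := ∑ᶠ i, a i * K.cutoff i x

theorem cutoffSum_eq_sum_range (a : ℕ → ℝ) {n : ℕ} {x : X} (hx : x ∈ K n) :
    K.cutoffSum a x = ∑ i ∈ Finset.range n, a i * K.cutoff i x := by
  refine finsum_eq_sum_of_support_subset _ fun i hi => ?_
  by_contra hin
  have hni : n ≤ i := not_lt.1 (by simpa using hin)
  exact hi (by simp only [K.cutoff_eq_zero (K.subset hni hx), mul_zero])

theorem continuous_cutoffSum (a : ℕ → ℝ) : Continuous (K.cutoffSum a) := by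
  refine continuous_iff_continuousAt.2 fun x => ?_
  obtain ⟨n, hn⟩ := K.exists_mem x
  have hK : (K (n + 1) : Set X) ∈ 𝓝 x := mem_interior_iff_mem_nhds.1 (K.subset_interior_succ n hn)
  refine (continuous_finsetSum (Finset.range (n + 1)) fun i _ => ?_).continuousAt.congr
    (Filter.eventuallyEq_of_mem hK fun y hy => (K.cutoffSum_eq_sum_range a hy).symm)
  exact continuous_const.mul (K.cutoff i).continuous

theorem le_cutoffSum {a : ℕ → ℝ} (ha : ∀ i, 0 ≤ a i) {j : ℕ} {x : X} (hx : x ∉ K (j + 1)) :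
    a j ≤ K.cutoffSum a x := by
  obtain ⟨n, hn⟩ := K.exists_mem x
  rw [K.cutoffSum_eq_sum_range a (K.subset (le_max_left n (j + 1)) hn)]
  simpa [K.cutoff_eq_one hx] using
    Finset.single_le_sum (fun i _ => mul_nonneg (ha i) (K.cutoff_mem_Icc i x).1)
      (Finset.mem_range.2 (Nat.lt_of_succ_le (le_max_right n (j + 1))))

theorem tendsto_cutoffSum {a : ℕ → ℝ} (ha : ∀ i : ℕ, (i : ℝ) ≤ a i) :
    Tendsto (K.cutoffSum a) (cocompact X) atTop := by
  refine tendsto_atTop.2 fun b => ?_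
  obtain ⟨j, hj⟩ := exists_nat_ge b
  filter_upwards [(K.isCompact (j + 1)).compl_mem_cocompact] with x hx
  exact (hj.trans (ha j)).trans (K.le_cutoffSum (fun i => (Nat.cast_nonneg i).trans (ha i)) hx)

end CompactExhaustion

theorem Complex.norm_mul_ofReal_sub_le (x g : ℂ) {t : ℝ} (ht0 : 0 ≤ t) (ht1 : t ≤ 1)
    (hg : t ≠ 1 → g = 0) : ‖x * t - g‖ ≤ ‖x - g‖ := by
  by_cases ht : t = 1
  · simp [ht]
  · rw [hg ht, sub_zero, sub_zero, norm_mul, Complex.norm_of_nonneg ht0]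
    exact mul_le_of_le_one_right (norm_nonneg x) ht1

theorem exists_seq_forall_sum_range {α M : Type*} [AddCommMonoid M] (u : ℕ → α → M)
    (Q : ℕ → M → α → Prop) (h : ∀ j m, ∃ x, Q j m x) :
    ∃ a : ℕ → α, ∀ j, Q j (∑ i ∈ Finset.range j, u i (a i)) (a j) := by
  choose f hf using h
  let s : ℕ → M := fun j => Nat.rec 0 (fun j m => m + u j (f j m)) j
  have hs : ∀ j, s j = ∑ i ∈ Finset.range j, u i (f i (s i)) := by
    intro j
    induction j with
    | zero => rfl
    | succ j ih => rw [Finset.sum_range_succ, ← ih]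
  exact ⟨fun j => f j (s j), fun j => hs j ▸ hf j (s j)⟩

theorem exists_seq_frequently_eq (T : Type*) [Countable T] [Nonempty T] :
    ∃ τ : ℕ → T, ∀ t, ∃ᶠ j in atTop, τ j = t := by
  obtain ⟨σ, hσ⟩ := exists_surjective_nat T
  refine ⟨fun j => σ j.unpair.1, fun t => frequently_atTop.2 fun N => ?_⟩
  obtain ⟨i, rfl⟩ := hσ t
  exact ⟨Nat.pair i N, Nat.right_le_pair i N, by simp⟩

section ComplexSubset

variable {X : Set ℂ}

def PolyMulApprox (h φ : X → ℂ) : Prop :=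
  ∀ ε > 0, ∃ q : ℂ[X], ∀ z : X, ‖q.eval (z : ℂ) * h z - φ z‖ < ε

namespace PolyMulApprox

variable {h φ ψ : X → ℂ}

theorem add (hφ : PolyMulApprox h φ) (hψ : PolyMulApprox h ψ) :
    PolyMulApprox h fun z => φ z + ψ z := by
  intro ε hε
  obtain ⟨p, hp⟩ := hφ (ε / 2) (half_pos hε)
  obtain ⟨q, hq⟩ := hψ (ε / 2) (half_pos hε)
  refine ⟨p + q, fun z => ?_⟩
  calc ‖(p + q).eval (z : ℂ) * h z - (φ z + ψ z)‖
      = ‖(p.eval (z : ℂ) * h z - φ z) + (q.eval (z : ℂ) * h z - ψ z)‖ := by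
        rw [eval_add]; ring_nf
    _ < ε / 2 + ε / 2 := (norm_add_le _ _).trans_lt (add_lt_add (hp z) (hq z))
    _ = ε := add_halves ε

theorem const_mul (hφ : PolyMulApprox h φ) (a : ℂ) : PolyMulApprox h fun z => a * φ z := by
  intro ε hε
  obtain ⟨p, hp⟩ := hφ (ε / (‖a‖ + 1)) (by positivity)
  refine ⟨C a * p, fun z => ?_⟩
  calc ‖(C a * p).eval (z : ℂ) * h z - a * φ z‖ = ‖a‖ * ‖p.eval (z : ℂ) * h z - φ z‖ := by
        rw [eval_mul, eval_C, ← norm_mul]; ring_nf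
    _ ≤ (‖a‖ + 1) * ‖p.eval (z : ℂ) * h z - φ z‖ := by gcongr; linarith
    _ < (‖a‖ + 1) * (ε / (‖a‖ + 1)) := by gcongr; exact hp z
    _ = ε := mul_div_cancel₀ ε (by positivity)

theorem mul_eval {u : X → ℂ} (hu : ∀ k : ℕ, PolyMulApprox h fun z => u z * (z : ℂ) ^ k)
    (q : ℂ[X]) : PolyMulApprox h fun z => u z * q.eval (z : ℂ) := by
  induction q using Polynomial.induction_on' with
  | add p q hp hq => simpa only [eval_add, mul_add] using hp.add hq
  | monomial k a =>
    simpa only [eval_monomial, mul_left_comm (u _)] using (hu k).const_mul a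

theorem of_forall_exists (hφ : ∀ ε > 0, ∃ ψ, PolyMulApprox h ψ ∧ ∀ z, ‖ψ z - φ z‖ ≤ ε) :
    PolyMulApprox h φ := by
  intro ε hε
  obtain ⟨ψ, hψ, hψφ⟩ := hφ (ε / 2) (half_pos hε)
  obtain ⟨q, hq⟩ := hψ (ε / 2) (half_pos hε)
  refine ⟨q, fun z => ?_⟩
  calc ‖q.eval (z : ℂ) * h z - φ z‖ ≤ ‖q.eval (z : ℂ) * h z - ψ z‖ + ‖ψ z - φ z‖ :=
        norm_sub_le_norm_sub_add_norm_sub _ _ _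
    _ < ε / 2 + ε / 2 := add_lt_add_of_lt_of_le (hq z) (hψφ z)
    _ = ε := add_halves ε

end PolyMulApprox

def PolyApproxOnCompacts (X : Set ℂ) : Prop :=
  ∀ B : Set X, IsCompact B → ∀ φ : X → ℂ, Continuous φ → ∀ ε > 0,
    ∃ q : ℂ[X], ∀ z ∈ B, ‖q.eval (z : ℂ) - φ z‖ < ε

theorem polyApproxOnCompacts_of_forall_compact_subset
    (halpha : ∀ K : Set ℂ, K ⊆ X → IsCompact K →
      ∀ φ : K → ℂ, Continuous φ → ∀ ε : ℝ, 0 < ε →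
        ∃ q : Polynomial ℂ, ∀ z : K, ‖Polynomial.eval (z : ℂ) q - φ z‖ < ε) :
    PolyApproxOnCompacts X := by
  intro B hB φ hφ ε hε
  have hBX : (↑) '' B ⊆ X := Subtype.coe_image_subset X B
  obtain ⟨q, hq⟩ := halpha _ hBX (hB.image continuous_subtype_val)
    (fun w => φ ⟨w, hBX w.2⟩) (by fun_prop) ε hε
  exact ⟨q, fun z hz => hq ⟨z, mem_image_of_mem _ hz⟩⟩

namespace PolyApproxOnCompacts

variable (hX : PolyApproxOnCompacts X)
include hX

theorem exists_mul_approx {B : Set X} (hB : IsCompact B) {w : X → ℝ} (hw : Continuous w)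
    (hw0 : ∀ z, 0 < w z) {g : X → ℂ} (hg : Continuous g) {μ : ℝ} (hμ : 0 < μ) :
    ∃ p : ℂ[X], ∀ z ∈ B, ‖p.eval (z : ℂ) * w z - g z‖ < μ := by
  obtain ⟨M, hM⟩ := hB.exists_bound_of_continuousOn hw.continuousOn
  have hw0' : ∀ z, (w z : ℂ) ≠ 0 := fun z => Complex.ofReal_ne_zero.2 (hw0 z).ne'
  obtain ⟨p, hp⟩ := hX B hB (fun z => g z / w z)
    (hg.div (Complex.continuous_ofReal.comp hw) hw0') (μ / (|M| + 1)) (by positivity)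
  refine ⟨p, fun z hz => ?_⟩
  have hwM : w z ≤ |M| + 1 := by
    linarith [(le_abs_self (w z)).trans (hM z hz), le_abs_self M]
  calc ‖p.eval (z : ℂ) * w z - g z‖ = ‖(p.eval (z : ℂ) - g z / w z) * w z‖ := by
        rw [sub_mul, div_mul_cancel₀ (g z) (hw0' z)]
    _ = ‖p.eval (z : ℂ) - g z / w z‖ * w z := by
        rw [norm_mul, Complex.norm_of_nonneg (hw0 z).le]
    _ < μ / (|M| + 1) * w z := mul_lt_mul_of_pos_right (hp z hz) (hw0 z)
    _ ≤ μ / (|M| + 1) * (|M| + 1) := by gcongr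
    _ = μ := div_mul_cancel₀ μ (by positivity)

theorem exists_approx_mul_exp_neg_cutoff {c : ℝ} (hc : 0 < c) {B : Set X} (hB : IsCompact B)
    (s ψ : C(X, ℝ)) (hψ : ∀ z, 0 ≤ ψ z) {g : X → ℂ} (hg : Continuous g) (hgψ : ∀ z, ψ z ≠ 0 → g z = 0)
    {μ : ℝ} (hμ : 0 < μ) (a₀ : ℝ) :
    ∃ a, a₀ ≤ a ∧ ∃ p : ℂ[X],
      (∀ z ∈ B, ‖p.eval (z : ℂ) *
        ((exp (-c * ‖(z : ℂ)‖ ^ 2) * exp (-(s z + a * ψ z)) : ℝ) : ℂ) - g z‖ < μ) ∧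
      ∀ z : X, ‖p.eval (z : ℂ)‖ * exp (-c * ‖(z : ℂ)‖ ^ 2) * exp (-a) < μ := by
  obtain ⟨p, hp⟩ := hX.exists_mul_approx hB
    (w := fun z => exp (-c * ‖(z : ℂ)‖ ^ 2) * exp (-s z)) (by fun_prop) (fun z => by positivity)
    hg hμ
  obtain ⟨C, hC⟩ := p.exists_norm_eval_mul_exp_neg_mul_sq_le hc
  have hdecay : Tendsto (fun a => C * exp (-a)) atTop (𝓝 0) := by
    simpa using tendsto_exp_neg_atTop_nhds_zero.const_mul C
  obtain ⟨a, haμ, ha⟩ :=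
    ((hdecay.eventually (gt_mem_nhds hμ)).and (eventually_ge_atTop (max a₀ 0))).exists
  refine ⟨a, (le_max_left _ _).trans ha, p, fun z hz => ?_, fun z => ?_⟩
  · have ht : exp (-(a * ψ z)) ≤ 1 :=
      exp_le_one_iff.2 (neg_nonpos.2 (mul_nonneg ((le_max_right _ _).trans ha) (hψ z)))
    have hsplit : ((exp (-c * ‖(z : ℂ)‖ ^ 2) * exp (-(s z + a * ψ z)) : ℝ) : ℂ) =
        ((exp (-c * ‖(z : ℂ)‖ ^ 2) * exp (-s z) : ℝ) : ℂ) * (exp (-(a * ψ z)) : ℝ) := by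
      rw [neg_add, exp_add]; push_cast; ring
    rw [hsplit, ← mul_assoc]
    refine (Complex.norm_mul_ofReal_sub_le _ _ (exp_pos _).le ht
      fun h1 => hgψ z fun h0 => h1 (by simp [h0])).trans_lt (hp z hz)
  · calc ‖p.eval (z : ℂ)‖ * exp (-c * ‖(z : ℂ)‖ ^ 2) * exp (-a) ≤ C * exp (-a) := by
          gcongr; exact hC z
      _ < μ := haμ

theorem exists_weight_approx_seq [LocallyCompactSpace X] {c : ℝ} (hc : 0 < c)
    (K : CompactExhaustion X) {g : ℕ → X → ℂ} (hg : ∀ j, Continuous (g j))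
    (hgK : ∀ j, ∀ z ∉ K j, g j z = 0) {μ : ℕ → ℝ} (hμ : ∀ j, 0 < μ j) :
    ∃ S : X → ℝ, Continuous S ∧ Tendsto S (cocompact X) atTop ∧ ∀ j, ∃ p : ℂ[X], ∀ z : X,
      ‖p.eval (z : ℂ) * ((exp (-c * ‖(z : ℂ)‖ ^ 2) * exp (-S z) : ℝ) : ℂ) - g j z‖ < μ j := by
  obtain ⟨a, ha⟩ := exists_seq_forall_sum_range (fun i (x : ℝ) => x • K.cutoff i)
    (fun j s a => (j : ℝ) ≤ a ∧ ∃ p : ℂ[X],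
      (∀ z ∈ K (j + 1), ‖p.eval (z : ℂ) *
        ((exp (-c * ‖(z : ℂ)‖ ^ 2) * exp (-(s z + a * K.cutoff j z)) : ℝ) : ℂ) - g j z‖ < μ j) ∧
      ∀ z : X, ‖p.eval (z : ℂ)‖ * exp (-c * ‖(z : ℂ)‖ ^ 2) * exp (-a) < μ j)
    fun j s => hX.exists_approx_mul_exp_neg_cutoff hc (K.isCompact (j + 1)) s (K.cutoff j)
      (fun z => (K.cutoff_mem_Icc j z).1) (hg j)
      (fun z hz => hgK j z fun hzK => hz (K.cutoff_eq_zero hzK)) (hμ j) j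
  choose haj p hpK hp using ha
  have ha0 : ∀ i, 0 ≤ a i := fun i => (Nat.cast_nonneg i).trans (haj i)
  refine ⟨K.cutoffSum a, K.continuous_cutoffSum a, K.tendsto_cutoffSum haj,
    fun j => ⟨p j, fun z => ?_⟩⟩
  by_cases hz : z ∈ K (j + 1)
  · have hS : K.cutoffSum a z =
        (∑ i ∈ Finset.range j, a i • K.cutoff i) z + a j * K.cutoff j z := by
      simp [K.cutoffSum_eq_sum_range a hz, Finset.sum_range_succ]
    rw [hS]
    exact hpK j z hz
  · rw [hgK j z fun hzj => hz (K.subset j.le_succ hzj), sub_zero, norm_mul,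
      Complex.norm_of_nonneg (by positivity), ← mul_assoc]
    refine lt_of_le_of_lt ?_ (hp j z)
    gcongr
    exact K.le_cutoffSum ha0 hz

theorem exists_weight_approx_cutoff_monomials [LocallyCompactSpace X] {c : ℝ} (hc : 0 < c)
    (K : CompactExhaustion X) :
    ∃ S : X → ℝ, Continuous S ∧ Tendsto S (cocompact X) atTop ∧ ∀ n k : ℕ,
      PolyMulApprox (fun z : X => ((exp (-c * ‖(z : ℂ)‖ ^ 2) * exp (-S z) : ℝ) : ℂ))
        fun z => ((1 - K.cutoff n z : ℝ) : ℂ) * (z : ℂ) ^ k := by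
  obtain ⟨τ, hτ⟩ := exists_seq_frequently_eq (ℕ × ℕ)
  let g : ℕ → X → ℂ := fun j z =>
    if (τ j).1 < j then ((1 - K.cutoff (τ j).1 z : ℝ) : ℂ) * (z : ℂ) ^ (τ j).2 else 0
  have hg : ∀ j, Continuous (g j) := fun j => by
    simp only [g]
    split_ifs <;> fun_prop
  have hgK : ∀ j, ∀ z ∉ K j, g j z = 0 := fun j z hz => by
    simp only [g]
    split_ifs with hj
    · rw [K.cutoff_eq_one fun h => hz (K.subset hj h)]
      simp
    · rfl
  obtain ⟨S, hSc, hS, hSg⟩ := hX.exists_weight_approx_seq hc K hg hgK (μ := fun j => 1 / (j + 1))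
    fun j => by positivity
  refine ⟨S, hSc, hS, fun n k ε hε => ?_⟩
  obtain ⟨j, hτj, hnj, hjε⟩ := ((hτ (n, k)).and_eventually ((eventually_gt_atTop n).and
    (tendsto_one_div_add_atTop_nhds_zero_nat.eventually (gt_mem_nhds hε)))).exists
  obtain ⟨p, hp⟩ := hSg j
  refine ⟨p, fun z => (hp z).trans_le' (le_of_eq ?_) |>.trans hjε⟩
  simp [g, hτj, hnj]

theorem polyMulApprox_of_cutoff_monomials [LocallyCompactSpace X] (K : CompactExhaustion X)
    {h : X → ℂ}
    (hK : ∀ n k : ℕ, PolyMulApprox h fun z => ((1 - K.cutoff n z : ℝ) : ℂ) * (z : ℂ) ^ k)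
    {f : X → ℂ} (hf : Continuous f) (hf0 : Tendsto f (cocompact X) (𝓝 0)) :
    PolyMulApprox h f := by
  refine PolyMulApprox.of_forall_exists fun ε hε => ?_
  obtain ⟨L, hL, hfL⟩ := (hasBasis_cocompact.tendsto_iff Metric.nhds_basis_ball).1 hf0 ε hε
  obtain ⟨n, hn⟩ := K.exists_superset_of_isCompact hL
  obtain ⟨q, hq⟩ := hX _ (K.isCompact (n + 1)) f hf ε hε
  refine ⟨fun z => ((1 - K.cutoff n z : ℝ) : ℂ) * q.eval (z : ℂ),
    PolyMulApprox.mul_eval (hK n) q, fun z => ?_⟩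
  set t := K.cutoff n z
  have ht0 : 0 ≤ t := (K.cutoff_mem_Icc n z).1
  have ht1 : t ≤ 1 := (K.cutoff_mem_Icc n z).2
  have hfar : t ≠ 0 → ‖f z‖ < ε := fun ht => by
    simpa using hfL z fun hz => ht (K.cutoff_eq_zero (hn hz))
  have hnear : t ≠ 1 → ‖q.eval (z : ℂ) - f z‖ < ε := fun ht =>
    hq z (by_contra fun hz => ht (K.cutoff_eq_one hz))
  calc ‖((1 - t : ℝ) : ℂ) * q.eval (z : ℂ) - f z‖
      = ‖((1 - t : ℝ) : ℂ) * (q.eval (z : ℂ) - f z) - (t : ℂ) * f z‖ := by push_cast; ring_nf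
    _ ≤ (1 - t) * ‖q.eval (z : ℂ) - f z‖ + t * ‖f z‖ := by
        refine (norm_sub_le _ _).trans_eq ?_
        rw [norm_mul, norm_mul, Complex.norm_of_nonneg (by linarith), Complex.norm_of_nonneg ht0]
    _ ≤ (1 - t) * ε + t * ε := by
        refine add_le_add ?_ ?_
        · rcases eq_or_ne t 1 with ht | ht
          · simp [ht]
          · exact mul_le_mul_of_nonneg_left (hnear ht).le (by linarith)
        · rcases eq_or_ne t 0 with ht | ht
          · simp [ht]
          · exact mul_le_mul_of_nonneg_left (hfar ht).le ht0
    _ = ε := by ring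

end PolyApproxOnCompacts

end ComplexSubset

/-- If `X ⊆ ℂ` is locally compact and every compact `K ⊆ X` is an α-set, then for `c > 0`
there is a strictly positive `η ∈ C₀(X)` such that `h(z) = e^{-c|z|²}·η(z)` is a cyclic
vector for `M_z` in `C₀(X)`: `q·h ∈ C₀(X)` for all `q ∈ Π(z)` and `{q·h : q ∈ Π(z)}` is
dense in `C₀(X)` for the sup norm. -/
theorem stmt_12 (X : Set ℂ) [LocallyCompactSpace X]
    (halpha : ∀ K : Set ℂ, K ⊆ X → IsCompact K →
      ∀ φ : K → ℂ, Continuous φ → ∀ ε : ℝ, 0 < ε →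
        ∃ q : Polynomial ℂ, ∀ z : K, ‖Polynomial.eval (z : ℂ) q - φ z‖ < ε)
    (c : ℝ) (hc : 0 < c) :
    ∃ η : X → ℝ, Continuous η ∧ Tendsto η (cocompact X) (nhds 0) ∧ (∀ z, 0 < η z) ∧
      (∀ q : Polynomial ℂ,
        Continuous (fun z : X =>
          Polynomial.eval (z : ℂ) q * ((Real.exp (-c * ‖(z : ℂ)‖ ^ 2) * η z : ℝ) : ℂ)) ∧
        Tendsto (fun z : X =>
          Polynomial.eval (z : ℂ) q * ((Real.exp (-c * ‖(z : ℂ)‖ ^ 2) * η z : ℝ) : ℂ))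
          (cocompact X) (nhds 0)) ∧
      (∀ f : X → ℂ, Continuous f → Tendsto f (cocompact X) (nhds 0) → ∀ ε : ℝ, 0 < ε →
        ∃ q : Polynomial ℂ, ∀ z : X,
          ‖Polynomial.eval (z : ℂ) q * ((Real.exp (-c * ‖(z : ℂ)‖ ^ 2) * η z : ℝ) : ℂ) - f z‖
            < ε) := by
  have hX := polyApproxOnCompacts_of_forall_compact_subset halpha
  let K := CompactExhaustion.choice X
  obtain ⟨S, hSc, hS, hK⟩ := hX.exists_weight_approx_cutoff_monomials hc K
  have hη : Tendsto (fun z => exp (-S z)) (cocompact X) (𝓝 0) :=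
    tendsto_exp_neg_atTop_nhds_zero.comp hS
  exact ⟨fun z => exp (-S z), by fun_prop, hη, fun z => exp_pos _,
    fun q => ⟨by fun_prop, q.tendsto_eval_mul_exp_neg_mul_sq_mul hc hη⟩,
    fun f hf hf0 => hX.polyMulApprox_of_cutoff_monomials K hK hf hf0⟩
end

section
/- Let p ∈ (0,∞), let (Ω, 𝒜, μ) be a finite measure space, let φ : Ω → ℂ be measurable, and let Z be a set of measurable functions on Ω such that q(φ)·f ∈ L^p(μ) for every q ∈ Π(z) and f ∈ Z. Set G := {q(φ)·f : q ∈ Π(z), f ∈ Z}. Then the following are equivalent: (c) the set {(g, φ·g) : g ∈ G} is dense in the graph {(g, φ·g) : g ∈ L^p(μ), φ·g ∈ L^p(μ)} with respect to the product L^p topology; (d) the set {g·(1+|φ|^p)^{1/p} : g ∈ G} is dense in L^p(μ); (e) G is dense in L^p(ν), where ν is the measure with density (1+|φ|^p) with respect to μ. -/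
/-!
With `ν = (1 + |φ|^p) μ = μ + |φ|^p μ` one has `‖g‖_{p,ν}^p = ‖g‖_{p,μ}^p + ‖φ g‖_{p,μ}^p`, so the
`L^p(ν)`-distance and the graph distance of multiplication by `φ` control each other; this gives
(c) ⇔ (e). Multiplication by `W = (1 + |φ|^p)^{1/p}` is an isometry of `L^p(ν)` onto `L^p(μ)`, since
`|W|^p` is the density of `ν`; this gives (d) ⇔ (e).
-/

open MeasureTheory Filter ENNReal

namespace MeasureTheory

variable {Ω : Type*} [MeasurableSpace Ω] {μ ν : Measure Ω} {p : ℝ}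

def LpDense (G : Set (Ω → ℂ)) (p : ℝ≥0∞) (μ : Measure Ω) : Prop :=
  ∀ g : Ω → ℂ, MemLp g p μ → ∀ ε : ℝ, 0 < ε →
    ∃ h ∈ G, eLpNorm (fun ω => h ω - g ω) p μ < ENNReal.ofReal ε

/-- `{(h, φ h) : h ∈ G}` is dense in the graph of multiplication by `φ` on `L^p(μ)`. -/
def LpGraphDense (G : Set (Ω → ℂ)) (φ : Ω → ℂ) (p : ℝ≥0∞) (μ : Measure Ω) : Prop :=
  ∀ g : Ω → ℂ, MemLp g p μ → MemLp (fun ω => φ ω * g ω) p μ → ∀ ε : ℝ, 0 < ε →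
    ∃ h ∈ G, eLpNorm (fun ω => h ω - g ω) p μ < ENNReal.ofReal ε ∧
      eLpNorm (fun ω => φ ω * h ω - φ ω * g ω) p μ < ENNReal.ofReal ε

theorem eLpNorm_ofReal_rpow_eq_lintegral (hp : 0 < p) (f : Ω → ℂ) :
    eLpNorm f (ENNReal.ofReal p) μ ^ p = ∫⁻ ω, ‖f ω‖ₑ ^ p ∂μ := by
  rw [eLpNorm_eq_eLpNorm' (by simpa using hp) ofReal_ne_top, toReal_ofReal hp.le,
    lintegral_rpow_enorm_eq_rpow_eLpNorm' hp]

theorem eLpNorm_withDensity_enorm_rpow (hp : 0 < p) {W : Ω → ℂ} (hW : Measurable W)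
    (h : Ω → ℂ) :
    eLpNorm h (ENNReal.ofReal p) (μ.withDensity fun ω => ‖W ω‖ₑ ^ p) =
      eLpNorm (fun ω => h ω * W ω) (ENNReal.ofReal p) μ := by
  refine ENNReal.rpow_left_injective hp.ne' ?_
  simp only [eLpNorm_ofReal_rpow_eq_lintegral hp]
  rw [lintegral_withDensity_eq_lintegral_mul_non_measurable _ (hW.enorm.pow_const p)
    (.of_forall fun _ => rpow_lt_top_of_nonneg hp.le enorm_ne_top)]
  simp only [Pi.mul_apply, enorm_mul, mul_rpow_of_nonneg _ _ hp.le, mul_comm]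

theorem memLp_withDensity_enorm_rpow_iff (hp : 0 < p) {W : Ω → ℂ} (hW : Measurable W)
    {h : Ω → ℂ} (hh : AEStronglyMeasurable h μ) :
    MemLp h (ENNReal.ofReal p) (μ.withDensity fun ω => ‖W ω‖ₑ ^ p) ↔
      MemLp (fun ω => h ω * W ω) (ENNReal.ofReal p) μ := by
  rw [MemLp, MemLp, eLpNorm_withDensity_enorm_rpow hp hW,
    and_iff_right (hh.mono_ac (withDensity_absolutelyContinuous _ _)),
    and_iff_right (hh.fun_mul hW.aestronglyMeasurable)]

theorem eLpNorm_add_measure_rpow (hp : 0 < p) (f : Ω → ℂ) :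
    eLpNorm f (ENNReal.ofReal p) (μ + ν) ^ p =
      eLpNorm f (ENNReal.ofReal p) μ ^ p + eLpNorm f (ENNReal.ofReal p) ν ^ p := by
  simp only [eLpNorm_ofReal_rpow_eq_lintegral hp, lintegral_add_measure]

theorem MemLp.add_measure_ofReal (hp : 0 < p) {f : Ω → ℂ} (hμ : MemLp f (ENNReal.ofReal p) μ)
    (hν : MemLp f (ENNReal.ofReal p) ν) : MemLp f (ENNReal.ofReal p) (μ + ν) := by
  refine ⟨hμ.1.add_measure hν.1, ?_⟩
  rw [← rpow_lt_top_iff_of_pos hp, eLpNorm_add_measure_rpow hp]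
  exact add_lt_top.2 ⟨rpow_lt_top_of_nonneg hp.le hμ.2.ne,
    rpow_lt_top_of_nonneg hp.le hν.2.ne⟩

theorem eLpNorm_add_measure_lt (hp : 0 < p) {ε : ℝ} (hε : 0 < ε) {f : Ω → ℂ}
    (hμ : eLpNorm f (ENNReal.ofReal p) μ < ENNReal.ofReal (ε / 2 ^ (1 / p)))
    (hν : eLpNorm f (ENNReal.ofReal p) ν < ENNReal.ofReal (ε / 2 ^ (1 / p))) :
    eLpNorm f (ENNReal.ofReal p) (μ + ν) < ENNReal.ofReal ε := by
  have half : ENNReal.ofReal (ε / 2 ^ (1 / p)) ^ p = ENNReal.ofReal (ε ^ p / 2) := by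
    rw [ofReal_rpow_of_nonneg (by positivity) hp.le, Real.div_rpow hε.le (by positivity),
      ← Real.rpow_mul zero_le_two, one_div_mul_cancel hp.ne', Real.rpow_one]
  rw [← rpow_lt_rpow_iff hp, eLpNorm_add_measure_rpow hp,
    ofReal_rpow_of_nonneg hε.le hp.le, ← add_halves (ε ^ p),
    ofReal_add (by positivity) (by positivity), ← half]
  exact ENNReal.add_lt_add (rpow_lt_rpow hμ hp) (rpow_lt_rpow hν hp)

theorem withDensity_one_add (f : Ω → ℝ≥0∞) :
    μ.withDensity (fun ω => 1 + f ω) = μ + μ.withDensity f := by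
  change μ.withDensity (1 + f) = _
  rw [withDensity_add_left measurable_one, withDensity_one]

theorem enorm_ofReal_rpow_one_add_rpow {E : Type*} [NormedAddCommGroup E] (hp : 0 < p) (z : E) :
    ‖(((1 + ‖z‖ ^ p) ^ (1 / p) : ℝ) : ℂ)‖ₑ ^ p = 1 + ‖z‖ₑ ^ p := by
  have hbase : (0 : ℝ) ≤ 1 + ‖z‖ ^ p := by positivity
  rw [← enorm_norm, Complex.norm_real, enorm_norm, Real.enorm_of_nonneg (by positivity),
    ofReal_rpow_of_nonneg (by positivity) hp.le, ← Real.rpow_mul hbase,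
    one_div_mul_cancel hp.ne', Real.rpow_one, ofReal_add zero_le_one (by positivity), ofReal_one,
    ← ofReal_rpow_of_nonneg (norm_nonneg _) hp.le, ofReal_norm]

theorem lpGraphDense_iff_lpDense_withDensity (hp : 0 < p) {φ : Ω → ℂ} (hφ : Measurable φ)
    (G : Set (Ω → ℂ)) :
    LpGraphDense G φ (ENNReal.ofReal p) μ ↔
      LpDense G (ENNReal.ofReal p) (μ.withDensity fun ω => 1 + ‖φ ω‖ₑ ^ p) := by
  rw [withDensity_one_add]
  set μφ := μ.withDensity fun ω => ‖φ ω‖ₑ ^ p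
  have eLpNorm_μφ (f : Ω → ℂ) :
      eLpNorm f (ENNReal.ofReal p) μφ = eLpNorm (fun ω => φ ω * f ω) (ENNReal.ofReal p) μ := by
    simp only [μφ, eLpNorm_withDensity_enorm_rpow hp hφ, mul_comm]
  have memLp_μφ {f : Ω → ℂ} (hf : MemLp f (ENNReal.ofReal p) μ) :
      MemLp f (ENNReal.ofReal p) μφ ↔ MemLp (fun ω => φ ω * f ω) (ENNReal.ofReal p) μ := by
    simp only [μφ, memLp_withDensity_enorm_rpow_iff hp hφ hf.1, mul_comm]
  constructor
  · intro hc g hg ε hε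
    have hgμ := hg.left_of_add_measure
    obtain ⟨h, hG, h₁, h₂⟩ := hc g hgμ ((memLp_μφ hgμ).1 hg.right_of_add_measure)
      (ε / 2 ^ (1 / p)) (div_pos hε (by positivity))
    refine ⟨h, hG, eLpNorm_add_measure_lt hp hε h₁ ?_⟩
    simpa only [eLpNorm_μφ, mul_sub] using h₂
  · intro he g hg hφg ε hε
    obtain ⟨h, hG, hlt⟩ := he g (hg.add_measure_ofReal hp ((memLp_μφ hg).2 hφg)) ε hε
    refine ⟨h, hG, (eLpNorm_le_add_measure_right _ _ _).trans_lt hlt, ?_⟩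
    simpa only [eLpNorm_μφ, mul_sub] using (eLpNorm_le_add_measure_left _ μ μφ).trans_lt hlt

theorem lpDense_image_mul_iff (hp : 0 < p) {W : Ω → ℂ} (hW : Measurable W) (hW₀ : ∀ ω, W ω ≠ 0)
    (G : Set (Ω → ℂ)) :
    LpDense ((fun h ω => h ω * W ω) '' G) (ENNReal.ofReal p) μ ↔
      LpDense G (ENNReal.ofReal p) (μ.withDensity fun ω => ‖W ω‖ₑ ^ p) := by
  have hac : μ ≪ μ.withDensity fun ω => ‖W ω‖ₑ ^ p :=
    withDensity_absolutelyContinuous' (hW.enorm.pow_const p).aemeasurable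
      (.of_forall fun ω => (rpow_pos (enorm_pos.2 (hW₀ ω)) enorm_ne_top).ne')
  simp only [LpDense, Set.exists_mem_image]
  constructor
  · intro hd g hg ε hε
    obtain ⟨h, hG, hlt⟩ :=
      hd _ ((memLp_withDensity_enorm_rpow_iff hp hW (hg.1.mono_ac hac)).1 hg) ε hε
    refine ⟨h, hG, ?_⟩
    simpa only [eLpNorm_withDensity_enorm_rpow hp hW, sub_mul] using hlt
  · intro he g hg ε hε
    have hcancel (ω : Ω) : g ω / W ω * W ω = g ω := div_mul_cancel₀ _ (hW₀ ω)
    have hg' : MemLp (fun ω => g ω / W ω) (ENNReal.ofReal p)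
        (μ.withDensity fun ω => ‖W ω‖ₑ ^ p) :=
      (memLp_withDensity_enorm_rpow_iff hp hW (hg.1.div₀ hW.aestronglyMeasurable)).2
        (by simpa only [Pi.div_apply, hcancel] using hg)
    obtain ⟨h, hG, hlt⟩ := he _ hg' ε hε
    refine ⟨h, hG, ?_⟩
    simpa only [eLpNorm_withDensity_enorm_rpow hp hW, sub_mul, hcancel] using hlt

end MeasureTheory

theorem stmt_13_general (p : ℝ) (hp : 0 < p) {Ω : Type*} [MeasurableSpace Ω] (μ : Measure Ω)
    (φ : Ω → ℂ) (hφ : Measurable φ)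
    (Z : Set (Ω → ℂ)) :
    ((∀ g : Ω → ℂ, MemLp g (ENNReal.ofReal p) μ →
        MemLp (fun ω => φ ω * g ω) (ENNReal.ofReal p) μ → ∀ ε : ℝ, 0 < ε →
        ∃ q : Polynomial ℂ, ∃ f ∈ Z,
          eLpNorm (fun ω => Polynomial.eval (φ ω) q * f ω - g ω) (ENNReal.ofReal p) μ
              < ENNReal.ofReal ε ∧
          eLpNorm (fun ω => φ ω * (Polynomial.eval (φ ω) q * f ω) - φ ω * g ω)
              (ENNReal.ofReal p) μ < ENNReal.ofReal ε)
      ↔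
      (∀ g : Ω → ℂ, MemLp g (ENNReal.ofReal p) μ → ∀ ε : ℝ, 0 < ε →
        ∃ q : Polynomial ℂ, ∃ f ∈ Z,
          eLpNorm (fun ω => Polynomial.eval (φ ω) q * f ω *
              (((1 + ‖φ ω‖ ^ p) ^ (1 / p) : ℝ) : ℂ) - g ω) (ENNReal.ofReal p) μ
            < ENNReal.ofReal ε))
    ∧
    ((∀ g : Ω → ℂ, MemLp g (ENNReal.ofReal p) μ → ∀ ε : ℝ, 0 < ε →
        ∃ q : Polynomial ℂ, ∃ f ∈ Z,
          eLpNorm (fun ω => Polynomial.eval (φ ω) q * f ω *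
              (((1 + ‖φ ω‖ ^ p) ^ (1 / p) : ℝ) : ℂ) - g ω) (ENNReal.ofReal p) μ
            < ENNReal.ofReal ε)
      ↔
      (∀ g : Ω → ℂ,
        MemLp g (ENNReal.ofReal p) (μ.withDensity fun ω => 1 + (‖φ ω‖₊ : ℝ≥0∞) ^ p) →
        ∀ ε : ℝ, 0 < ε → ∃ q : Polynomial ℂ, ∃ f ∈ Z,
          eLpNorm (fun ω => Polynomial.eval (φ ω) q * f ω - g ω) (ENNReal.ofReal p)
            (μ.withDensity fun ω => 1 + (‖φ ω‖₊ : ℝ≥0∞) ^ p) < ENNReal.ofReal ε)) := by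
  set G := Set.image2 (fun q f ω => Polynomial.eval (φ ω) q * f ω) Set.univ Z
  have hW : Measurable fun ω => (((1 + ‖φ ω‖ ^ p) ^ (1 / p) : ℝ) : ℂ) := by fun_prop
  have hW₀ (ω : Ω) : (((1 + ‖φ ω‖ ^ p) ^ (1 / p) : ℝ) : ℂ) ≠ 0 :=
    Complex.ofReal_ne_zero.2 (by positivity)
  have hce := lpGraphDense_iff_lpDense_withDensity hp hφ G (μ := μ)
  have hde := lpDense_image_mul_iff hp hW hW₀ G (μ := μ)
  simp only [enorm_ofReal_rpow_one_add_rpow hp] at hde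
  simp only [LpGraphDense, LpDense, G, Set.exists_mem_image, Set.exists_mem_image2,
    Set.mem_univ, true_and] at hce hde
  exact ⟨hce.trans hde.symm, hde⟩

/-- For `p ∈ (0,∞)`, a finite measure space `(Ω,𝒜,μ)`, measurable `φ`, and a set `Z` of
measurable functions with `q(φ)·f ∈ L^p(μ)` for all `q ∈ Π(z)`, `f ∈ Z`, the following are
equivalent for `G = {q(φ)·f}`: (c) the graph pairs `(g, φ·g)`, `g ∈ G`, are dense in the
graph of `M_φ`; (d) `G·(1+|φ|^p)^{1/p}` is dense in `L^p(μ)`; (e) `G` is dense in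
`L^p((1+|φ|^p)·μ)`. -/
theorem stmt_13 (p : ℝ) (hp : 0 < p) {Ω : Type*} [MeasurableSpace Ω] (μ : Measure Ω)
    [IsFiniteMeasure μ] (φ : Ω → ℂ) (hφ : Measurable φ)
    (Z : Set (Ω → ℂ)) (hZmeas : ∀ f ∈ Z, Measurable f)
    (hZLp : ∀ q : Polynomial ℂ, ∀ f ∈ Z,
      MemLp (fun ω => Polynomial.eval (φ ω) q * f ω) (ENNReal.ofReal p) μ) :
    ((∀ g : Ω → ℂ, MemLp g (ENNReal.ofReal p) μ →
        MemLp (fun ω => φ ω * g ω) (ENNReal.ofReal p) μ → ∀ ε : ℝ, 0 < ε →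
        ∃ q : Polynomial ℂ, ∃ f ∈ Z,
          eLpNorm (fun ω => Polynomial.eval (φ ω) q * f ω - g ω) (ENNReal.ofReal p) μ
              < ENNReal.ofReal ε ∧
          eLpNorm (fun ω => φ ω * (Polynomial.eval (φ ω) q * f ω) - φ ω * g ω)
              (ENNReal.ofReal p) μ < ENNReal.ofReal ε)
      ↔
      (∀ g : Ω → ℂ, MemLp g (ENNReal.ofReal p) μ → ∀ ε : ℝ, 0 < ε →
        ∃ q : Polynomial ℂ, ∃ f ∈ Z,
          eLpNorm (fun ω => Polynomial.eval (φ ω) q * f ω *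
              (((1 + ‖φ ω‖ ^ p) ^ (1 / p) : ℝ) : ℂ) - g ω) (ENNReal.ofReal p) μ
            < ENNReal.ofReal ε))
    ∧
    ((∀ g : Ω → ℂ, MemLp g (ENNReal.ofReal p) μ → ∀ ε : ℝ, 0 < ε →
        ∃ q : Polynomial ℂ, ∃ f ∈ Z,
          eLpNorm (fun ω => Polynomial.eval (φ ω) q * f ω *
              (((1 + ‖φ ω‖ ^ p) ^ (1 / p) : ℝ) : ℂ) - g ω) (ENNReal.ofReal p) μ
            < ENNReal.ofReal ε)
      ↔
      (∀ g : Ω → ℂ,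
        MemLp g (ENNReal.ofReal p) (μ.withDensity fun ω => 1 + (‖φ ω‖₊ : ℝ≥0∞) ^ p) →
        ∀ ε : ℝ, 0 < ε → ∃ q : Polynomial ℂ, ∃ f ∈ Z,
          eLpNorm (fun ω => Polynomial.eval (φ ω) q * f ω - g ω) (ENNReal.ofReal p)
            (μ.withDensity fun ω => 1 + (‖φ ω‖₊ : ℝ≥0∞) ^ p) < ENNReal.ofReal ε)) :=
  stmt_13_general p hp μ φ hφ Z
end

section
/- Let p ∈ (0,∞), let (Ω, 𝒜, μ) be a finite measure space (with separable measure algebra), let φ : Ω → ℂ be measurable, and let Z be a set of measurable functions on Ω such that q(φ)·f ∈ L^p(μ) for every q ∈ Π(z), f ∈ Z, and such that {q(φ)·f : q ∈ Π(z), f ∈ Z} is dense in L^p(μ). Then the set G′ := {q(φ)·e^{-|φ|}·f : q ∈ Π(z), f ∈ Z} is a graph cyclic set for M_φ: the set {(g, φ·g) : g ∈ G′} is dense in the graph {(g, φ·g) : g ∈ L^p(μ), φ·g ∈ L^p(μ)} with respect to the product L^p topology. -/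
open MeasureTheory Filter ENNReal Topology

/-!
Given `g` with `g, φ g ∈ L^p`, cut off the set `{|φ| > N}`, on which both `g` and `φ g` have small
`L^p` norm for large `N`. On the complement `e^{|φ|} g` is dominated by `e^N |g|`, so it lies in
`L^p` and is approximated by some `q(φ) f`. Multiplying the error by `e^{-|φ|}` and by
`φ e^{-|φ|}`, both of modulus at most `1`, approximates `g` and `φ g` simultaneously.
Since `p < 1` is allowed, `L^p` is only quasi-normed, so the two errors are combined through
`exists_Lp_half` rather than the triangle inequality.
-/

theorem exp_neg_mul_sub_eq_indicator {Ω : Type*} (a : Ω → ℝ) (N : ℝ) (c x g : Ω → ℂ) (ω : Ω) :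
    c ω * ((Real.exp (-a ω) : ℂ) * x ω) - c ω * g ω =
      c ω * (Real.exp (-a ω) : ℂ) *
          (x ω - {ω | a ω ≤ N}.indicator (fun ω => (Real.exp (a ω) : ℂ) * g ω) ω)
        - {ω | N < a ω}.indicator (fun ω => c ω * g ω) ω := by
  by_cases hω : a ω ≤ N
  · have hexp : (Real.exp (-a ω) : ℂ) * Real.exp (a ω) = 1 := by
      rw [← Complex.ofReal_mul, ← Real.exp_add, neg_add_cancel, Real.exp_zero, Complex.ofReal_one]
    simp only [Set.indicator, Set.mem_ofPred_eq, hω, not_lt.mpr hω, if_true, if_false]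
    linear_combination c ω * g ω * hexp
  · simp only [Set.indicator, Set.mem_ofPred_eq, hω, not_le.mp hω, if_true, if_false]
    ring

theorem norm_mul_exp_neg_norm_le_one (z : ℂ) : ‖z * (Real.exp (-‖z‖) : ℂ)‖ ≤ 1 := by
  rw [norm_mul, Complex.norm_real, Real.norm_of_nonneg (Real.exp_pos _).le]
  exact (Real.mul_exp_neg_le_exp_neg_one _).trans (Real.exp_le_one_iff.mpr (by norm_num))

section

variable {Ω : Type*} [MeasurableSpace Ω] {μ : Measure Ω} {p : ℝ≥0∞}

theorem tendsto_eLpNorm_indicator_of_antitone {E : Type*} [NormedAddCommGroup E]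
    (hp : p ≠ ∞) {f : Ω → E} (hf : MemLp f p μ) {s : ℕ → Set Ω}
    (hs : ∀ n, MeasurableSet (s n)) (hanti : Antitone s) (hempty : ⋂ n, s n = ∅) :
    Tendsto (fun n => eLpNorm ((s n).indicator f) p μ) atTop (𝓝 0) := by
  rcases eq_or_ne p 0 with rfl | hp0
  · simp
  set ν := μ.withDensity fun x => ‖f x‖ₑ ^ p.toReal
  have hν : ∀ n, eLpNorm ((s n).indicator f) p μ = ν (s n) ^ (1 / p.toReal) := fun n => by
    rw [eLpNorm_indicator_eq_eLpNorm_restrict (hs n), eLpNorm_eq_lintegral_rpow_enorm_toReal hp0 hp,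
      withDensity_apply _ (hs n)]
  have hν_fin : ν (s 0) ≠ ∞ := by
    rw [withDensity_apply _ (hs 0)]
    exact ((setLIntegral_le_lintegral _ _).trans_lt
      (lintegral_rpow_enorm_lt_top_of_eLpNorm_lt_top hp0 hp hf.eLpNorm_lt_top)).ne
  have hν_lim := tendsto_measure_iInter_atTop (fun n => (hs n).nullMeasurableSet) hanti ⟨0, hν_fin⟩
  rw [hempty, measure_empty] at hν_lim
  have hexp : 0 < 1 / p.toReal := one_div_pos.mpr (ENNReal.toReal_pos hp0 hp)
  have hlim := ((ENNReal.continuous_rpow_const (y := 1 / p.toReal)).tendsto 0).comp hν_lim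
  rw [ENNReal.zero_rpow_of_pos hexp] at hlim
  simp_rw [hν]
  exact hlim

theorem tendsto_eLpNorm_indicator_lt {E : Type*} [NormedAddCommGroup E] (hp : p ≠ ∞)
    {f : Ω → E} (hf : MemLp f p μ) {a : Ω → ℝ} (ha : Measurable a) :
    Tendsto (fun n : ℕ => eLpNorm ({ω | n < a ω}.indicator f) p μ) atTop (𝓝 0) := by
  refine tendsto_eLpNorm_indicator_of_antitone hp hf (fun n => measurableSet_lt measurable_const ha)
    (fun m n hmn ω (hω : (n : ℝ) < a ω) => (Nat.cast_le.mpr hmn).trans_lt hω) ?_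
  ext ω
  simpa using exists_nat_ge (a ω)

theorem memLp_indicator_exp_mul {a : Ω → ℝ} (ha : Measurable a) {g : Ω → ℂ} (hg : MemLp g p μ)
    (N : ℝ) : MemLp ({ω | a ω ≤ N}.indicator fun ω => (Real.exp (a ω) : ℂ) * g ω) p μ := by
  refine (hg.const_mul (Real.exp N : ℂ)).of_le ?_ (ae_of_all _ fun ω => ?_)
  · exact ((by fun_prop : Measurable fun ω => (Real.exp (a ω) : ℂ)).aestronglyMeasurable.mul
      hg.aestronglyMeasurable).indicator (measurableSet_le ha measurable_const)
  · by_cases hω : a ω ≤ N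
    · simp only [Set.indicator_of_mem (show ω ∈ {ω | a ω ≤ N} from hω), norm_mul,
        Complex.norm_real, Real.norm_eq_abs, Real.abs_exp]
      gcongr
    · rw [Set.indicator_of_notMem (show ω ∉ {ω | a ω ≤ N} from hω), norm_zero]
      positivity

theorem eLpNorm_mul_exp_neg_mul_sub_lt {δ η : ℝ≥0∞}
    (hη : ∀ f g : Ω → ℂ, AEStronglyMeasurable f μ → AEStronglyMeasurable g μ →
      eLpNorm f p μ ≤ η → eLpNorm g p μ ≤ η → eLpNorm (f + g) p μ < δ)
    {a : Ω → ℝ} (ha : Measurable a) (N : ℝ) {c x g : Ω → ℂ} (hc : Measurable c)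
    (hca : ∀ ω, ‖c ω * (Real.exp (-a ω) : ℂ)‖ ≤ 1)
    (hx : AEStronglyMeasurable x μ) (hg : AEStronglyMeasurable g μ)
    (hxg : eLpNorm (fun ω => x ω - {ω | a ω ≤ N}.indicator
      (fun ω => (Real.exp (a ω) : ℂ) * g ω) ω) p μ ≤ η)
    (htail : eLpNorm ({ω | N < a ω}.indicator fun ω => c ω * g ω) p μ ≤ η) :
    eLpNorm (fun ω => c ω * ((Real.exp (-a ω) : ℂ) * x ω) - c ω * g ω) p μ < δ := by
  have hsplit : (fun ω => c ω * ((Real.exp (-a ω) : ℂ) * x ω) - c ω * g ω) =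
      (fun ω => c ω * (Real.exp (-a ω) : ℂ) *
        (x ω - {ω | a ω ≤ N}.indicator (fun ω => (Real.exp (a ω) : ℂ) * g ω) ω))
      + -{ω | N < a ω}.indicator fun ω => c ω * g ω := by
    funext ω
    rw [Pi.add_apply, Pi.neg_apply, ← sub_eq_add_neg, exp_neg_mul_sub_eq_indicator]
  rw [hsplit]
  refine hη _ _ ?_ ?_ ?_ (by rwa [eLpNorm_neg])
  · refine (hc.mul (by fun_prop)).aestronglyMeasurable.mul (hx.sub ?_)
    exact ((by fun_prop : Measurable fun ω => (Real.exp (a ω) : ℂ)).aestronglyMeasurable.mul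
      hg).indicator (measurableSet_le ha measurable_const)
  · exact ((hc.aestronglyMeasurable.mul hg).indicator (measurableSet_lt measurable_const ha)).neg
  · refine (eLpNorm_mono fun ω => ?_).trans hxg
    rw [norm_mul]
    exact mul_le_of_le_one_left (norm_nonneg _) (hca ω)

end

theorem stmt_14_general (p : ℝ) {Ω : Type*} [MeasurableSpace Ω] (μ : Measure Ω)
    (φ : Ω → ℂ) (hφ : Measurable φ) (Z : Set (Ω → ℂ))
    (hZLp : ∀ q : Polynomial ℂ, ∀ f ∈ Z,
      MemLp (fun ω => Polynomial.eval (φ ω) q * f ω) (ENNReal.ofReal p) μ)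
    (hZdense : ∀ g : Ω → ℂ, MemLp g (ENNReal.ofReal p) μ → ∀ ε : ℝ, 0 < ε →
      ∃ q : Polynomial ℂ, ∃ f ∈ Z,
        eLpNorm (fun ω => Polynomial.eval (φ ω) q * f ω - g ω) (ENNReal.ofReal p) μ
          < ENNReal.ofReal ε) :
    ∀ g : Ω → ℂ, MemLp g (ENNReal.ofReal p) μ →
      MemLp (fun ω => φ ω * g ω) (ENNReal.ofReal p) μ → ∀ ε : ℝ, 0 < ε →
      ∃ q : Polynomial ℂ, ∃ f ∈ Z,
        eLpNorm (fun ω => Polynomial.eval (φ ω) q * ((Real.exp (-‖φ ω‖) : ℝ) : ℂ) * f ω - g ω)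
            (ENNReal.ofReal p) μ < ENNReal.ofReal ε ∧
        eLpNorm (fun ω =>
            φ ω * (Polynomial.eval (φ ω) q * ((Real.exp (-‖φ ω‖) : ℝ) : ℂ) * f ω) - φ ω * g ω)
            (ENNReal.ofReal p) μ < ENNReal.ofReal ε := by
  intro g hg hφg ε hε
  obtain ⟨η, hη, hη_add⟩ := exists_Lp_half (μ := μ) (ε := ℂ) (ENNReal.ofReal p)
    (ENNReal.ofReal_pos.mpr hε).ne'
  obtain ⟨N, hgN, hφgN⟩ := ((tendsto_eLpNorm_indicator_lt ofReal_ne_top hg hφ.norm).eventually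
    (ge_mem_nhds hη)).and ((tendsto_eLpNorm_indicator_lt ofReal_ne_top hφg hφ.norm).eventually
    (ge_mem_nhds hη)) |>.exists
  obtain ⟨r, -, hr, hrη⟩ := ENNReal.lt_iff_exists_real_btwn.mp hη
  obtain ⟨q, f, hf, hu⟩ := hZdense _ (memLp_indicator_exp_mul hφ.norm hg N) r (ofReal_pos.mp hr)
  have hx := (hZLp q f hf).aestronglyMeasurable
  refine ⟨q, f, hf, ?_, ?_⟩
  · convert eLpNorm_mul_exp_neg_mul_sub_lt hη_add hφ.norm N (c := 1) measurable_const
      (fun ω => by simp [Complex.norm_exp]) hx hg.aestronglyMeasurable (hu.le.trans hrη.le)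
      (by simpa only [Pi.one_apply, one_mul] using hgN) using 3 with ω
    simp only [Pi.one_apply]
    ring
  · convert eLpNorm_mul_exp_neg_mul_sub_lt hη_add hφ.norm N hφ
      (fun ω => norm_mul_exp_neg_norm_le_one _) hx hg.aestronglyMeasurable (hu.le.trans hrη.le)
      hφgN using 3 with ω
    ring

/-- If `Z` is a cyclic set for `M_φ` in `L^p(μ)` on a finite separable measure space, then
`Z·e^{-|φ|}` is graph cyclic for `M_φ`: the pairs `(g, φ·g)` for
`g ∈ {q(φ)·e^{-|φ|}·f : q ∈ Π(z), f ∈ Z}` are dense in the graph of `M_φ`. -/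
theorem stmt_14 (p : ℝ) (hp : 0 < p) {Ω : Type*} [MeasurableSpace Ω]
    [MeasurableSpace.CountablyGenerated Ω] (μ : Measure Ω) [IsFiniteMeasure μ]
    (φ : Ω → ℂ) (hφ : Measurable φ)
    (Z : Set (Ω → ℂ)) (hZmeas : ∀ f ∈ Z, Measurable f)
    (hZLp : ∀ q : Polynomial ℂ, ∀ f ∈ Z,
      MemLp (fun ω => Polynomial.eval (φ ω) q * f ω) (ENNReal.ofReal p) μ)
    (hZdense : ∀ g : Ω → ℂ, MemLp g (ENNReal.ofReal p) μ → ∀ ε : ℝ, 0 < ε →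
      ∃ q : Polynomial ℂ, ∃ f ∈ Z,
        eLpNorm (fun ω => Polynomial.eval (φ ω) q * f ω - g ω) (ENNReal.ofReal p) μ
          < ENNReal.ofReal ε) :
    ∀ g : Ω → ℂ, MemLp g (ENNReal.ofReal p) μ →
      MemLp (fun ω => φ ω * g ω) (ENNReal.ofReal p) μ → ∀ ε : ℝ, 0 < ε →
      ∃ q : Polynomial ℂ, ∃ f ∈ Z,
        eLpNorm (fun ω => Polynomial.eval (φ ω) q * ((Real.exp (-‖φ ω‖) : ℝ) : ℂ) * f ω - g ω)
            (ENNReal.ofReal p) μ < ENNReal.ofReal ε ∧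
        eLpNorm (fun ω =>
            φ ω * (Polynomial.eval (φ ω) q * ((Real.exp (-‖φ ω‖) : ℝ) : ℂ) * f ω) - φ ω * g ω)
            (ENNReal.ofReal p) μ < ENNReal.ofReal ε :=
  stmt_14_general p μ φ hφ Z hZLp hZdense
end

section
/- Let p ∈ (0,∞) and let μ be a finite Borel measure on ℂ. Let A ⊆ L^p(μ) be a set of measurable functions that is an algebra (closed under pointwise addition, pointwise multiplication, and scalar multiplication), let b ∈ L^p(μ) lie in the closure of A in L^p(μ), and let c ∈ L^p(μ). Suppose that a·bⁿ·c is μ-essentially bounded for every a ∈ A and every integer n ≥ 0. Then a·bⁿ·c lies in the closure of {a′·c : a′ ∈ A} in L^p(μ) for every a ∈ A and every integer n ≥ 0. -/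
open MeasureTheory ENNReal

/-!
Induction on `n`. Write `f = a·bⁿ·c`, essentially bounded by hypothesis. Approximating `b` by
`a₁ ∈ A` in `L^p` makes `f·a₁` close to `f·b = a·bⁿ⁺¹·c`, because multiplication by an `L^∞`
function is continuous on `L^p`; and `f·a₁ = (a·a₁)·bⁿ·c` is, by induction applied to
`a·a₁ ∈ A`, a limit of functions `a'·c`. The closure of a closure is the closure, also for
`p < 1` where `eLpNorm` is only a quasi-norm.
-/

section LpClosure

variable {α E : Type*} {m : MeasurableSpace α} {μ : Measure α} {q : ℝ≥0∞}

def InLpClosure [NormedAddCommGroup E] (q : ℝ≥0∞) (μ : Measure α) (S : Set (α → E))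
    (f : α → E) : Prop :=
  ∀ ε : ℝ≥0∞, ε ≠ 0 → ∃ g ∈ S, eLpNorm (g - f) q μ < ε

variable [NormedAddCommGroup E] {S T : Set (α → E)} {f : α → E}

theorem inLpClosure_iff_forall_real :
    InLpClosure q μ S f ↔ ∀ ε : ℝ, 0 < ε → ∃ g ∈ S, eLpNorm (g - f) q μ < ENNReal.ofReal ε := by
  refine ⟨fun h ε hε => h _ (ENNReal.ofReal_pos.mpr hε).ne', fun h ε hε => ?_⟩
  obtain ⟨r, -, hr0, hrε⟩ := ENNReal.lt_iff_exists_real_btwn.mp (pos_iff_ne_zero.mpr hε)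
  obtain ⟨g, hgS, hg⟩ := h r (ENNReal.ofReal_pos.mp hr0)
  exact ⟨g, hgS, hg.trans hrε⟩

theorem InLpClosure.of_mem (hf : f ∈ S) : InLpClosure q μ S f :=
  fun _ hε => ⟨f, hf, by simpa using pos_iff_ne_zero.mpr hε⟩

theorem InLpClosure.trans (hf : AEStronglyMeasurable f μ)
    (hS : ∀ g ∈ S, AEStronglyMeasurable g μ) (hT : ∀ g ∈ T, AEStronglyMeasurable g μ)
    (hTS : ∀ g ∈ T, InLpClosure q μ S g) (h : InLpClosure q μ T f) : InLpClosure q μ S f := by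
  intro ε hε
  obtain ⟨η, hη, hadd⟩ := exists_Lp_half E μ q hε
  obtain ⟨g, hgT, hgf⟩ := h η hη.ne'
  obtain ⟨s, hsS, hsg⟩ := hTS g hgT η hη.ne'
  refine ⟨s, hsS, ?_⟩
  have hsplit := hadd _ _ ((hS s hsS).sub (hT g hgT)) ((hT g hgT).sub hf) hsg.le hgf.le
  rwa [sub_add_sub_cancel] at hsplit

end LpClosure

section Multiplication

variable {α R : Type*} {m : MeasurableSpace α} {μ : Measure α} {q : ℝ≥0∞}

theorem InLpClosure.mul_left [NormedRing R] {S : Set (α → R)} {f φ : α → R}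
    (hφ : eLpNorm φ ∞ μ ≠ ∞) (hf : AEStronglyMeasurable f μ)
    (hS : ∀ g ∈ S, AEStronglyMeasurable g μ) (h : InLpClosure q μ S f) :
    InLpClosure q μ ((φ * ·) '' S) (φ * f) := by
  intro ε hε
  obtain ⟨g, hgS, hgf⟩ := h (ε / eLpNorm φ ∞ μ) (ENNReal.div_pos hε hφ).ne'
  refine ⟨φ * g, ⟨g, hgS, rfl⟩, ?_⟩
  calc eLpNorm (φ * g - φ * f) q μ = eLpNorm (φ • (g - f)) q μ := by rw [← mul_sub]; rfl
    _ ≤ eLpNorm φ ∞ μ * eLpNorm (g - f) q μ :=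
      eLpNorm_smul_le_eLpNorm_top_mul_eLpNorm q ((hS g hgS).sub hf) φ
    _ < ε := ENNReal.mul_lt_of_lt_div' hgf

variable [NormedCommRing R] {A : Set (α → R)} {b c : α → R}

theorem inLpClosure_mul_pow_mul (hAmeas : ∀ a ∈ A, AEStronglyMeasurable a μ)
    (hAmul : ∀ a ∈ A, ∀ a' ∈ A, a * a' ∈ A) (hb : AEStronglyMeasurable b μ)
    (hbA : InLpClosure q μ A b) (hc : AEStronglyMeasurable c μ)
    (hbd : ∀ a ∈ A, ∀ n : ℕ, eLpNorm (a * b ^ n * c) ∞ μ ≠ ∞) :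
    ∀ a ∈ A, ∀ n : ℕ, InLpClosure q μ ((· * c) '' A) (a * b ^ n * c) := by
  have hSmeas : ∀ g ∈ (· * c) '' A, AEStronglyMeasurable g μ := by
    rintro _ ⟨a, ha, rfl⟩
    exact (hAmeas a ha).mul hc
  intro a ha n
  induction n generalizing a with
  | zero => exact .of_mem ⟨a, ha, by simp⟩
  | succ n ih =>
    set f := a * b ^ n * c
    have hf : AEStronglyMeasurable f μ := ((hAmeas a ha).mul (hb.pow n)).mul hc
    rw [show a * b ^ (n + 1) * c = f * b by simp only [f]; ring]
    refine (hbA.mul_left (hbd a ha n) hb hAmeas).trans (hf.mul hb) hSmeas ?_ ?_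
    · rintro _ ⟨a₁, ha₁, rfl⟩
      exact hf.mul (hAmeas a₁ ha₁)
    · rintro _ ⟨a₁, ha₁, rfl⟩
      show InLpClosure q μ _ (f * a₁)
      rw [show f * a₁ = a * a₁ * b ^ n * c by simp only [f]; ring]
      exact ih _ (hAmul a ha a₁ ha₁)

end Multiplication

theorem stmt_15_general (p : ℝ) (μ : Measure ℂ)
    (A : Set (ℂ → ℂ))
    (hAmeas : ∀ a ∈ A, Measurable a)
    (hAmul : ∀ a ∈ A, ∀ a' ∈ A, (fun z => a z * a' z) ∈ A)
    (b : ℂ → ℂ) (hb : MemLp b (ENNReal.ofReal p) μ)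
    (hbA : ∀ ε : ℝ, 0 < ε → ∃ a ∈ A,
      eLpNorm (fun z => a z - b z) (ENNReal.ofReal p) μ < ENNReal.ofReal ε)
    (c : ℂ → ℂ) (hc : MemLp c (ENNReal.ofReal p) μ)
    (hbd : ∀ a ∈ A, ∀ n : ℕ, ∃ C : ℝ, ∀ᵐ z ∂μ, ‖a z * b z ^ n * c z‖ ≤ C) :
    ∀ a ∈ A, ∀ n : ℕ, ∀ ε : ℝ, 0 < ε → ∃ a' ∈ A,
      eLpNorm (fun z => a' z * c z - a z * b z ^ n * c z) (ENNReal.ofReal p) μ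
        < ENNReal.ofReal ε := by
  intro a ha n
  have hbound : ∀ a ∈ A, ∀ n : ℕ, eLpNorm (a * b ^ n * c) ∞ μ ≠ ∞ := fun a ha n => by
    obtain ⟨C, hC⟩ := hbd a ha n
    rw [eLpNorm_exponent_top]
    exact (eLpNormEssSup_lt_top_of_ae_bound hC).ne
  have hclosure := inLpClosure_mul_pow_mul (fun a ha => (hAmeas a ha).aestronglyMeasurable)
    hAmul hb.1 (inLpClosure_iff_forall_real.mpr hbA) hc.1 hbound a ha n
  intro ε hε
  obtain ⟨_, ⟨a', ha', rfl⟩, hclose⟩ := inLpClosure_iff_forall_real.mp hclosure ε hε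
  exact ⟨a', ha', hclose⟩

/-- Tool lemma: let `A ⊆ L^p(μ)` be an algebra of measurable functions, `b` in the
`L^p(μ)`-closure of `A`, `c ∈ L^p(μ)`, and suppose `a·bⁿ·c` is essentially bounded for all
`a ∈ A`, `n ≥ 0`.  Then `a·bⁿ·c` lies in the `L^p(μ)`-closure of `{a′·c : a′ ∈ A}`. -/
theorem stmt_15 (p : ℝ) (hp : 0 < p) (μ : Measure ℂ) [IsFiniteMeasure μ]
    (A : Set (ℂ → ℂ))
    (hAmeas : ∀ a ∈ A, Measurable a)
    (hALp : ∀ a ∈ A, MemLp a (ENNReal.ofReal p) μ)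
    (hAadd : ∀ a ∈ A, ∀ a' ∈ A, (fun z => a z + a' z) ∈ A)
    (hAmul : ∀ a ∈ A, ∀ a' ∈ A, (fun z => a z * a' z) ∈ A)
    (hAsmul : ∀ a ∈ A, ∀ t : ℂ, (fun z => t * a z) ∈ A)
    (b : ℂ → ℂ) (hb : MemLp b (ENNReal.ofReal p) μ)
    (hbA : ∀ ε : ℝ, 0 < ε → ∃ a ∈ A,
      eLpNorm (fun z => a z - b z) (ENNReal.ofReal p) μ < ENNReal.ofReal ε)
    (c : ℂ → ℂ) (hc : MemLp c (ENNReal.ofReal p) μ)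
    (hbd : ∀ a ∈ A, ∀ n : ℕ, ∃ C : ℝ, ∀ᵐ z ∂μ, ‖a z * b z ^ n * c z‖ ≤ C) :
    ∀ a ∈ A, ∀ n : ℕ, ∀ ε : ℝ, 0 < ε → ∃ a' ∈ A,
      eLpNorm (fun z => a' z * c z - a z * b z ^ n * c z) (ENNReal.ofReal p) μ
        < ENNReal.ofReal ε :=
  stmt_15_general p μ A hAmeas hAmul b hb hbA c hc hbd
end

section
/- Let p ∈ (0,∞), let c > 0, and let μ be a finite Borel measure on ℂ such that every polynomial q ∈ Π(z) lies in L^p(μ) and the function z ↦ z̄ lies in the closure of Π(z) in L^p(μ). Then the function z ↦ e^{-c|z|²} is a cyclic vector for M_z in L^p(μ): the set {q(z)·e^{-c|z|²} : q ∈ Π(z)} is dense in L^p(μ). -/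
/-!
Let `S` be the `L^p(μ)`-closure of `{q(z) e^{-c|z|²}}`; it is a subspace. Approximating `z̄` by
polynomials `r` and using that `zᵐ z̄ᵏ e^{-c|z|²}` is bounded, `zᵐ z̄ᵏ⁺¹ e^{-c|z|²}` is approximated
by `r(z) zᵐ z̄ᵏ e^{-c|z|²}`, so by induction on `k` all `zᵐ z̄ᵏ e^{-c|z|²}` lie in `S`. Expanding
`e^{-c|z|²} = ∑ (-c)ʲ zʲ z̄ʲ / j!`, the partial sums times `zᵐ z̄ᵏ e^{-(n+1)c|z|²}` are dominated by
`|z|^{m+k}`, which is in `L^p(μ)`, so dominated convergence and induction on `n` put every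
`zᵐ z̄ᵏ e^{-(n+1)c|z|²}` in `S`. These functions span a conjugation-closed algebra which, extended
by `0` at `∞`, separates the points of the one-point compactification of `ℂ`; by Stone–Weierstrass
it approximates compactly supported continuous functions uniformly, hence in `L^p(μ)` as `μ` is
finite, and those are dense in `L^p(μ)`.
-/

open MeasureTheory Filter Polynomial
open scoped ENNReal Topology ComplexConjugate

lemma ENNReal.exists_pos_mul_ofReal_lt {K : ℝ≥0∞} (hK : K ≠ ∞) {ε : ℝ} (hε : 0 < ε) :
    ∃ δ : ℝ, 0 < δ ∧ K * ENNReal.ofReal δ < ENNReal.ofReal ε := by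
  have hlim : Tendsto (fun δ : ℝ => K * ENNReal.ofReal δ) (𝓝[>] 0) (𝓝 0) := by
    have := ENNReal.Tendsto.const_mul (ENNReal.tendsto_ofReal (tendsto_id (x := 𝓝 (0 : ℝ))))
      (Or.inr hK)
    simpa using this.mono_left nhdsWithin_le_nhds
  obtain ⟨δ, hδ, hδpos⟩ :=
    ((hlim.eventually (gt_mem_nhds (ENNReal.ofReal_pos.2 hε))).and self_mem_nhdsWithin).exists
  exact ⟨δ, hδpos, hδ⟩

section Lp

variable {α F : Type*} [MeasurableSpace α] [NormedAddCommGroup F] {p : ℝ≥0∞} {μ : Measure α}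

lemma exists_pos_forall_eLpNorm_add_lt (p : ℝ≥0∞) {ε : ℝ} (hε : 0 < ε) :
    ∃ δ : ℝ, 0 < δ ∧ ∀ u v : α → F, AEStronglyMeasurable u μ → AEStronglyMeasurable v μ →
      eLpNorm u p μ < ENNReal.ofReal δ → eLpNorm v p μ < ENNReal.ofReal δ →
      eLpNorm (u + v) p μ < ENNReal.ofReal ε := by
  obtain ⟨δ, hδ, hKδ⟩ := ENNReal.exists_pos_mul_ofReal_lt
    (ENNReal.mul_ne_top (ENNReal.LpAddConst_lt_top p).ne (ENNReal.ofNat_ne_top : (2 : ℝ≥0∞) ≠ ∞))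
    hε
  refine ⟨δ, hδ, fun u v hu hv huδ hvδ => ?_⟩
  calc eLpNorm (u + v) p μ ≤ ENNReal.LpAddConst p * (eLpNorm u p μ + eLpNorm v p μ) :=
        eLpNorm_add_le' hu hv p
    _ ≤ ENNReal.LpAddConst p * 2 * ENNReal.ofReal δ := by rw [mul_assoc, two_mul]; gcongr
    _ < ENNReal.ofReal ε := hKδ

/-- Spelled out with `eLpNorm` because for `p < 1` it is only a quasi-norm: the triangle
inequality holds up to the factor `ENNReal.LpAddConst p`. -/
def lpClosure (p : ℝ≥0∞) (μ : Measure α) (T : Set (α → F)) : Set (α → F) :=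
  {g | AEStronglyMeasurable g μ ∧ ∀ ε : ℝ, 0 < ε →
    ∃ f ∈ T, AEStronglyMeasurable f μ ∧ eLpNorm (f - g) p μ < ENNReal.ofReal ε}

lemma subset_lpClosure {T : Set (α → F)} (hT : ∀ f ∈ T, AEStronglyMeasurable f μ) :
    T ⊆ lpClosure p μ T :=
  fun f hf => ⟨hT f hf, fun _ hε => ⟨f, hf, hT f hf, by simpa using hε⟩⟩

lemma lpClosure_subset_of_subset_lpClosure {T T' : Set (α → F)} (h : T ⊆ lpClosure p μ T') :
    lpClosure p μ T ⊆ lpClosure p μ T' := by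
  rintro g ⟨hg, hgT⟩
  refine ⟨hg, fun ε hε => ?_⟩
  obtain ⟨δ, hδ, hadd⟩ := exists_pos_forall_eLpNorm_add_lt (μ := μ) (F := F) p hε
  obtain ⟨f, hfT, hf, hfg⟩ := hgT δ hδ
  obtain ⟨f', hf'T', hf', hf'f⟩ := (h hfT).2 δ hδ
  refine ⟨f', hf'T', hf', ?_⟩
  rw [← sub_add_sub_cancel f' f g]
  exact hadd _ _ (hf'.sub hf) (hf.sub hg) hf'f hfg

lemma mem_lpClosure_of_forall_norm_sub_le [IsFiniteMeasure μ] {T : Set (α → F)} {g : α → F}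
    (hg : AEStronglyMeasurable g μ)
    (h : ∀ δ : ℝ, 0 < δ → ∃ f ∈ T, AEStronglyMeasurable f μ ∧ ∀ x, ‖f x - g x‖ ≤ δ) :
    g ∈ lpClosure p μ T := by
  refine ⟨hg, fun ε hε => ?_⟩
  obtain ⟨δ, hδ, hKδ⟩ := ENNReal.exists_pos_mul_ofReal_lt
    (ENNReal.rpow_ne_top_of_nonneg (inv_nonneg.2 ENNReal.toReal_nonneg)
      (measure_ne_top μ Set.univ)) hε
  obtain ⟨f, hfT, hf, hfg⟩ := h δ hδ
  exact ⟨f, hfT, hf, (eLpNorm_le_of_ae_bound (ae_of_all μ hfg)).trans_lt hKδ⟩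

lemma MeasureTheory.MemLp.mem_lpClosure_hasCompactSupport [TopologicalSpace α] [NormalSpace α]
    [R1Space α] [WeaklyLocallyCompactSpace α] [BorelSpace α] [NormedSpace ℝ F] [μ.Regular]
    (hp : p ≠ ∞) {g : α → F} (hg : MemLp g p μ) :
    g ∈ lpClosure p μ {f | Continuous f ∧ HasCompactSupport f} := by
  refine ⟨hg.1, fun ε hε => ?_⟩
  obtain ⟨f, hfc, hgf, hf, hfp⟩ :=
    hg.exists_hasCompactSupport_eLpNorm_sub_le hp (ENNReal.ofReal_pos.2 (half_pos hε)).ne'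
  refine ⟨f, ⟨hf, hfc⟩, hfp.1, ?_⟩
  rw [eLpNorm_sub_comm]
  exact hgf.trans_lt ((ENNReal.ofReal_lt_ofReal_iff hε).2 (half_lt_self hε))

def Submodule.lpClosure {𝕜 : Type*} [NormedField 𝕜] [NormedSpace 𝕜 F] (p : ℝ≥0∞)
    (μ : Measure α) (V : Submodule 𝕜 (α → F)) : Submodule 𝕜 (α → F) where
  carrier := _root_.lpClosure p μ V
  zero_mem' := ⟨aestronglyMeasurable_zero, fun _ hε =>
    ⟨0, V.zero_mem, aestronglyMeasurable_zero, by simpa using hε⟩⟩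
  add_mem' := by
    rintro g₁ g₂ ⟨hg₁, hV₁⟩ ⟨hg₂, hV₂⟩
    refine ⟨hg₁.add hg₂, fun ε hε => ?_⟩
    obtain ⟨δ, hδ, hadd⟩ := exists_pos_forall_eLpNorm_add_lt (μ := μ) (F := F) p hε
    obtain ⟨f₁, hf₁V, hf₁, hfg₁⟩ := hV₁ δ hδ
    obtain ⟨f₂, hf₂V, hf₂, hfg₂⟩ := hV₂ δ hδ
    refine ⟨f₁ + f₂, V.add_mem hf₁V hf₂V, hf₁.add hf₂, ?_⟩
    rw [add_sub_add_comm]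
    exact hadd _ _ (hf₁.sub hg₁) (hf₂.sub hg₂) hfg₁ hfg₂
  smul_mem' := by
    rintro a g ⟨hg, hV⟩
    refine ⟨hg.const_smul a, fun ε hε => ?_⟩
    obtain ⟨δ, hδ, hKδ⟩ := ENNReal.exists_pos_mul_ofReal_lt (enorm_ne_top : ‖a‖ₑ ≠ ∞) hε
    obtain ⟨f, hfV, hf, hfg⟩ := hV δ hδ
    refine ⟨a • f, V.smul_mem a hfV, hf.const_smul a, ?_⟩
    rw [← smul_sub, eLpNorm_const_smul]
    exact (mul_le_mul_right hfg.le _).trans_lt hKδ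

lemma tendsto_eLpNorm_sub_of_dominated (hp : p ≠ ∞) {f : ℕ → α → F} {g : α → F} {G : α → ℝ}
    (hf : ∀ n, AEStronglyMeasurable (f n) μ) (hG : MemLp G p μ)
    (hfG : ∀ n, ∀ᵐ x ∂μ, ‖f n x‖ ≤ G x)
    (hfg : ∀ᵐ x ∂μ, Tendsto (fun n => f n x) atTop (𝓝 (g x))) :
    Tendsto (fun n => eLpNorm (f n - g) p μ) atTop (𝓝 0) := by
  rcases eq_or_ne p 0 with rfl | hp0
  · simp
  have hg : AEStronglyMeasurable g μ := aestronglyMeasurable_of_tendsto_ae atTop hf hfg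
  have hgG : ∀ᵐ x ∂μ, ‖g x‖ ≤ G x := by
    filter_upwards [hfg, ae_all_iff.2 hfG] with x hx hxG
    exact le_of_tendsto' hx.norm hxG
  have hsub : ∀ n, ∀ᵐ x ∂μ, ‖(f n - g) x‖ₑ ^ p.toReal ≤ ‖((2 : ℝ) • G) x‖ₑ ^ p.toReal := by
    intro n
    filter_upwards [hfG n, hgG] with x hfx hgx
    gcongr
    rw [← ofReal_norm, ← ofReal_norm]
    refine ENNReal.ofReal_le_ofReal ((norm_sub_le _ _).trans ?_)
    rw [Pi.smul_apply, smul_eq_mul, Real.norm_eq_abs]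
    linarith [le_abs_self (2 * G x)]
  have hint : Tendsto (fun n => ∫⁻ x, ‖(f n - g) x‖ₑ ^ p.toReal ∂μ) atTop (𝓝 0) := by
    have := tendsto_lintegral_of_dominated_convergence' _
      (fun n => ((hf n).sub hg).enorm.pow_const _) hsub
      (lintegral_rpow_enorm_lt_top_of_eLpNorm_lt_top hp0 hp (hG.const_smul 2).2).ne
      (hfg.mono fun x hx => ((ENNReal.continuous_rpow_const.tendsto _).comp
        (hx.sub_const (g x)).enorm))
    simpa [ENNReal.zero_rpow_of_pos (ENNReal.toReal_pos hp0 hp)] using this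
  have hroot := (ENNReal.continuous_rpow_const (y := 1 / p.toReal)).tendsto 0 |>.comp hint
  rw [ENNReal.zero_rpow_of_pos (by simp [ENNReal.toReal_pos hp0 hp])] at hroot
  simpa only [eLpNorm_eq_lintegral_rpow_enorm_toReal hp0 hp, Function.comp_def] using hroot

end Lp

noncomputable def gaussian (a : ℝ) (z : ℂ) : ℂ := (Real.exp (-a * ‖z‖ ^ 2) : ℂ)

noncomputable def gaussMonomial (a : ℝ) (m k : ℕ) (z : ℂ) : ℂ := z ^ m * conj z ^ k * gaussian a z

lemma continuous_gaussian (a : ℝ) : Continuous (gaussian a) := by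
  unfold gaussian; fun_prop

lemma continuous_gaussMonomial (a : ℝ) (m k : ℕ) : Continuous (gaussMonomial a m k) :=
  ((continuous_pow m).mul (Complex.continuous_conj.pow k)).mul (continuous_gaussian a)

lemma norm_gaussian (a : ℝ) (z : ℂ) : ‖gaussian a z‖ = Real.exp (-a * ‖z‖ ^ 2) := by
  rw [gaussian, Complex.norm_real, Real.norm_of_nonneg (Real.exp_nonneg _)]

lemma gaussian_add (a b : ℝ) (z : ℂ) : gaussian (a + b) z = gaussian a z * gaussian b z := by
  simp only [gaussian, ← Complex.ofReal_mul, ← Real.exp_add]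
  ring_nf

lemma norm_gaussMonomial (a : ℝ) (m k : ℕ) (z : ℂ) :
    ‖gaussMonomial a m k z‖ = ‖z‖ ^ (m + k) * Real.exp (-a * ‖z‖ ^ 2) := by
  rw [gaussMonomial, norm_mul, norm_mul, norm_pow, norm_pow, RCLike.norm_conj, norm_gaussian,
    pow_add]

lemma gaussMonomial_mul (a b : ℝ) (m k m' k' : ℕ) :
    gaussMonomial a m k * gaussMonomial b m' k' = gaussMonomial (a + b) (m + m') (k + k') := by
  funext z
  simp only [Pi.mul_apply, gaussMonomial, gaussian_add, pow_add]
  ring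

lemma conj_gaussMonomial (a : ℝ) (m k : ℕ) (z : ℂ) :
    conj (gaussMonomial a m k z) = gaussMonomial a k m z := by
  simp only [gaussMonomial, gaussian, map_mul, map_pow, Complex.conj_conj, Complex.conj_ofReal]
  ring

lemma pow_mul_gaussMonomial (a : ℝ) (j m k : ℕ) (z : ℂ) :
    z ^ j * gaussMonomial a m k z = gaussMonomial a (m + j) k z := by
  simp only [gaussMonomial, pow_add]
  ring

lemma gaussMonomial_add_add (a : ℝ) (m k j : ℕ) (z : ℂ) :
    gaussMonomial a (m + j) (k + j) z = ((‖z‖ ^ 2) ^ j : ℝ) * gaussMonomial a m k z := by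
  have hz : z * conj z = ((‖z‖ ^ 2 : ℝ) : ℂ) := by
    rw [Complex.mul_conj, Complex.normSq_eq_norm_sq]
  simp only [gaussMonomial, pow_add, Complex.ofReal_pow, ← hz, mul_pow]
  ring

lemma tendsto_pow_mul_exp_neg_mul_sq_atTop {a : ℝ} (ha : 0 < a) (j : ℕ) :
    Tendsto (fun x : ℝ => x ^ j * Real.exp (-a * x ^ 2)) atTop (𝓝 0) := by
  have := (rpow_mul_exp_neg_mul_sq_isLittleO_exp_neg ha j).tendsto_zero_of_tendsto
    (Real.tendsto_exp_atBot.comp (tendsto_id.const_mul_atTop_of_neg (by norm_num)))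
  simpa only [Real.rpow_natCast] using this

lemma tendsto_gaussMonomial_cocompact {a : ℝ} (ha : 0 < a) (m k : ℕ) :
    Tendsto (gaussMonomial a m k) (cocompact ℂ) (𝓝 0) := by
  rw [tendsto_zero_iff_norm_tendsto_zero]
  simpa only [norm_gaussMonomial, Function.comp_def] using
    (tendsto_pow_mul_exp_neg_mul_sq_atTop ha (m + k)).comp tendsto_norm_cocompact_atTop

noncomputable def gaussMonomialOnePoint {a : ℝ} (ha : 0 < a) (m k : ℕ) : C(OnePoint ℂ, ℂ) :=
  OnePoint.continuousMapMk ⟨gaussMonomial a m k, continuous_gaussMonomial a m k⟩ 0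
    (coclosedCompact_eq_cocompact (X := ℂ) ▸ tendsto_gaussMonomial_cocompact ha m k)

@[simp]
lemma gaussMonomialOnePoint_coe {a : ℝ} (ha : 0 < a) (m k : ℕ) (z : ℂ) :
    gaussMonomialOnePoint ha m k z = gaussMonomial a m k z := rfl

@[simp]
lemma gaussMonomialOnePoint_infty {a : ℝ} (ha : 0 < a) (m k : ℕ) :
    gaussMonomialOnePoint ha m k OnePoint.infty = 0 := rfl

lemma norm_gaussMonomial_le {a : ℝ} (ha : 0 < a) (m k : ℕ) (z : ℂ) :
    ‖gaussMonomial a m k z‖ ≤ ‖gaussMonomialOnePoint ha m k‖ :=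
  (gaussMonomialOnePoint ha m k).norm_coe_le_norm z

lemma abs_sum_range_pow_div_factorial_le (x : ℝ) (N : ℕ) :
    |∑ j ∈ Finset.range N, x ^ j / j.factorial| ≤ Real.exp |x| :=
  (Finset.abs_sum_le_sum_abs _ _).trans <| by
    simpa only [abs_div, abs_pow, Nat.abs_cast] using Real.sum_le_exp_of_nonneg (abs_nonneg x) N

/-- Partial sums of `e^{-c|z|²} = ∑ⱼ (-c)ʲ zʲ z̄ʲ / j!`, multiplied by `gaussMonomial a m k`. -/
noncomputable def gaussExpPartialSum (a c : ℝ) (m k N : ℕ) : ℂ → ℂ :=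
  ∑ j ∈ Finset.range N, ((-c : ℂ) ^ j / j.factorial) • gaussMonomial a (m + j) (k + j)

lemma gaussExpPartialSum_apply (a c : ℝ) (m k N : ℕ) (z : ℂ) :
    gaussExpPartialSum a c m k N z =
      (∑ j ∈ Finset.range N, (-c * ‖z‖ ^ 2) ^ j / j.factorial : ℝ) * gaussMonomial a m k z := by
  rw [gaussExpPartialSum, Finset.sum_apply, Complex.ofReal_sum, Finset.sum_mul]
  push_cast
  refine Finset.sum_congr rfl fun j _ => ?_
  rw [Pi.smul_apply, smul_eq_mul, gaussMonomial_add_add]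
  push_cast
  ring

lemma tendsto_gaussExpPartialSum (a c : ℝ) (m k : ℕ) (z : ℂ) :
    Tendsto (fun N => gaussExpPartialSum a c m k N z) atTop
      (𝓝 (gaussMonomial (a + c) m k z)) := by
  have hexp : Tendsto (fun N => ∑ j ∈ Finset.range N, (-c * ‖z‖ ^ 2) ^ j / j.factorial) atTop
      (𝓝 (Real.exp (-c * ‖z‖ ^ 2))) := by
    rw [Real.exp_eq_exp_ℝ]
    exact (NormedSpace.expSeries_div_hasSum_exp _).tendsto_sum_nat
  have hlim : gaussMonomial (a + c) m k z =
      (Real.exp (-c * ‖z‖ ^ 2) : ℂ) * gaussMonomial a m k z := by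
    rw [gaussMonomial, gaussMonomial, gaussian_add]
    simp only [gaussian]
    ring
  simp only [gaussExpPartialSum_apply, hlim]
  exact ((Complex.continuous_ofReal.tendsto _).comp hexp).mul_const _

lemma norm_gaussExpPartialSum_le {a c : ℝ} (hca : |c| ≤ a) (m k N : ℕ) (z : ℂ) :
    ‖gaussExpPartialSum a c m k N z‖ ≤ ‖z‖ ^ (m + k) := by
  rw [gaussExpPartialSum_apply, norm_mul, Complex.norm_real, Real.norm_eq_abs, norm_gaussMonomial]
  calc _ ≤ Real.exp (|c| * ‖z‖ ^ 2) * (‖z‖ ^ (m + k) * Real.exp (-a * ‖z‖ ^ 2)) := by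
        gcongr
        have h := abs_sum_range_pow_div_factorial_le (-c * ‖z‖ ^ 2) N
        rwa [abs_mul, abs_neg, abs_of_nonneg (sq_nonneg ‖z‖)] at h
    _ = ‖z‖ ^ (m + k) * Real.exp (-(a - |c|) * ‖z‖ ^ 2) := by
        rw [mul_left_comm, ← Real.exp_add]; ring_nf
    _ ≤ ‖z‖ ^ (m + k) := by
        refine mul_le_of_le_one_right (by positivity) (Real.exp_le_one_iff.2 ?_)
        nlinarith [sq_nonneg ‖z‖]

lemma eval_mul_mem_of_forall_pow_mul_mem {R : Type*} [CommRing R] {S : Submodule R (R → R)}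
    {h : R → R} (hS : ∀ j : ℕ, (fun z => z ^ j * h z) ∈ S) (q : R[X]) :
    (fun z => q.eval z * h z) ∈ S := by
  induction q using Polynomial.induction_on' with
  | add q r hq hr => simpa only [Pi.add_def, eval_add, add_mul] using S.add_mem hq hr
  | monomial j a =>
    simpa only [Pi.smul_def, smul_eq_mul, eval_monomial, mul_assoc] using S.smul_mem a (hS j)

noncomputable def polyMulGaussian (c : ℝ) : ℂ[X] →ₗ[ℂ] ℂ → ℂ where
  toFun q z := q.eval z * gaussian c z
  map_add' q r := by funext z; simp only [eval_add, add_mul, Pi.add_apply]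
  map_smul' a q := by funext z; simp only [eval_smul, smul_eq_mul, mul_assoc, Pi.smul_apply,
    RingHom.id_apply]

section Approximation

variable {p : ℝ≥0∞} {μ : Measure ℂ} {c : ℝ}

lemma gaussMonomial_mem_lpClosure_range_polyMulGaussian (hc : 0 < c)
    (hconj : (conj : ℂ → ℂ) ∈ lpClosure p μ (Set.range fun q : ℂ[X] => (q.eval ·)))
    (k m : ℕ) :
    gaussMonomial c m k ∈ (LinearMap.range (polyMulGaussian c)).lpClosure p μ := by
  induction k generalizing m with
  | zero =>
    refine subset_lpClosure ?_ ⟨X ^ m, ?_⟩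
    · rintro _ ⟨q, rfl⟩
      exact (q.continuous.mul (continuous_gaussian c)).aestronglyMeasurable
    · funext z
      simp [polyMulGaussian, gaussMonomial]
  | succ k ih =>
    set S := (LinearMap.range (polyMulGaussian c)).lpClosure p μ
    -- `S` is closed, so approximating by elements of `S` suffices.
    refine lpClosure_subset_of_subset_lpClosure subset_rfl
      ⟨(continuous_gaussMonomial c m (k + 1)).aestronglyMeasurable, fun ε hε => ?_⟩
    set M := ‖gaussMonomialOnePoint hc m k‖₊
    obtain ⟨δ, hδ, hMδ⟩ := ENNReal.exists_pos_mul_ofReal_lt (ENNReal.coe_ne_top (r := M)) hε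
    obtain ⟨_, ⟨r, rfl⟩, -, hr⟩ := hconj.2 δ hδ
    refine ⟨fun z => r.eval z * gaussMonomial c m k z,
      eval_mul_mem_of_forall_pow_mul_mem (S := S)
        (fun j => by simpa only [pow_mul_gaussMonomial] using ih (m + j)) r,
      (r.continuous.mul (continuous_gaussMonomial c m k)).aestronglyMeasurable, ?_⟩
    have hdiff : ∀ z, ‖r.eval z * gaussMonomial c m k z - gaussMonomial c m (k + 1) z‖₊ ≤
        M * ‖r.eval z - conj z‖₊ := by
      intro z
      have : r.eval z * gaussMonomial c m k z - gaussMonomial c m (k + 1) z =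
          gaussMonomial c m k z * (r.eval z - conj z) := by
        simp only [gaussMonomial, pow_succ]; ring
      rw [this, nnnorm_mul]
      gcongr
      exact norm_gaussMonomial_le hc m k z
    calc _ ≤ M • eLpNorm (fun z => r.eval z - conj z) p μ :=
          eLpNorm_le_nnreal_smul_eLpNorm_of_ae_le_mul (ae_of_all _ hdiff) p
      _ ≤ M * ENNReal.ofReal δ := by
          rw [ENNReal.smul_def, smul_eq_mul]; exact mul_le_mul_right hr.le _
      _ < ENNReal.ofReal ε := hMδ

lemma gaussMonomial_mul_mem_lpClosure_range_polyMulGaussian (hp : p ≠ ∞) (hc : 0 < c)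
    (hpoly : ∀ q : ℂ[X], MemLp (q.eval ·) p μ)
    (hconj : (conj : ℂ → ℂ) ∈ lpClosure p μ (Set.range fun q : ℂ[X] => (q.eval ·)))
    (n m k : ℕ) :
    gaussMonomial ((n + 1) * c) m k ∈ (LinearMap.range (polyMulGaussian c)).lpClosure p μ := by
  induction n generalizing m k with
  | zero => simpa using gaussMonomial_mem_lpClosure_range_polyMulGaussian hc hconj k m
  | succ n ih =>
    set S := (LinearMap.range (polyMulGaussian c)).lpClosure p μ
    have hsum : ∀ N, gaussExpPartialSum ((n + 1) * c) c m k N ∈ S := fun N =>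
      S.sum_mem fun j _ => S.smul_mem _ (ih _ _)
    have hG : MemLp (fun z : ℂ => ‖z‖ ^ (m + k)) p μ := by
      simpa using (hpoly (X ^ (m + k))).norm
    have hca : |c| ≤ (n + 1) * c := by
      rw [abs_of_pos hc]; nlinarith [(n.cast_nonneg : (0 : ℝ) ≤ n)]
    have hlim := tendsto_eLpNorm_sub_of_dominated hp (fun N => (hsum N).1) hG
      (fun N => ae_of_all _ (norm_gaussExpPartialSum_le hca m k N))
      (ae_of_all _ (tendsto_gaussExpPartialSum _ c m k))
    rw [show ((n + 1 : ℕ) + 1 : ℝ) * c = (n + 1) * c + c by push_cast; ring]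
    refine lpClosure_subset_of_subset_lpClosure subset_rfl
      ⟨(continuous_gaussMonomial _ m k).aestronglyMeasurable, fun ε hε => ?_⟩
    obtain ⟨N, hN⟩ := (hlim.eventually (gt_mem_nhds (ENNReal.ofReal_pos.2 hε))).exists
    exact ⟨_, hsum N, (hsum N).1, hN⟩

end Approximation

def gaussianSpan (c : ℝ) : Submodule ℂ (ℂ → ℂ) :=
  Submodule.span ℂ {f | ∃ n m k : ℕ, f = gaussMonomial ((n + 1) * c) m k}

lemma gaussMonomial_mem_gaussianSpan (c : ℝ) (n m k : ℕ) :
    gaussMonomial ((n + 1) * c) m k ∈ gaussianSpan c :=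
  Submodule.subset_span ⟨n, m, k, rfl⟩

lemma mul_mem_gaussianSpan {c : ℝ} {f g : ℂ → ℂ} (hf : f ∈ gaussianSpan c)
    (hg : g ∈ gaussianSpan c) : f * g ∈ gaussianSpan c := by
  have hfg := Submodule.mul_mem_mul hf hg
  rw [gaussianSpan, Submodule.span_mul_span] at hfg
  refine Submodule.span_le.2 ?_ hfg
  rintro _ ⟨_, ⟨n, m, k, rfl⟩, _, ⟨n', m', k', rfl⟩, rfl⟩
  dsimp only
  rw [gaussMonomial_mul, show ((n : ℝ) + 1) * c + (n' + 1) * c = ((n + n' + 1 : ℕ) + 1) * c by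
    push_cast; ring]
  exact gaussMonomial_mem_gaussianSpan c _ _ _

lemma conj_comp_mem_gaussianSpan {c : ℝ} {f : ℂ → ℂ} (hf : f ∈ gaussianSpan c) :
    (fun z => conj (f z)) ∈ gaussianSpan c := by
  induction hf using Submodule.span_induction with
  | mem f hf =>
    obtain ⟨n, m, k, rfl⟩ := hf
    simpa only [conj_gaussMonomial] using gaussMonomial_mem_gaussianSpan c n k m
  | zero =>
    simp only [Pi.zero_apply, map_zero]
    exact (gaussianSpan c).zero_mem
  | add f g _ _ hf hg => simpa [Pi.add_def] using (gaussianSpan c).add_mem hf hg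
  | smul a f _ hf => simpa [Pi.smul_def] using (gaussianSpan c).smul_mem (conj a) hf

noncomputable def subValueAtInfty : C(OnePoint ℂ, ℂ) →ₗ[ℂ] ℂ → ℂ where
  toFun a z := a z - a OnePoint.infty
  map_add' a b := by funext z; simp only [ContinuousMap.add_apply, Pi.add_apply]; ring
  map_smul' r a := by funext z; simp [mul_sub]

lemma subValueAtInfty_apply (a : C(OnePoint ℂ, ℂ)) (z : ℂ) :
    subValueAtInfty a z = a z - a OnePoint.infty := rfl

lemma subValueAtInfty_one : subValueAtInfty 1 = 0 := by
  funext z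
  simp [subValueAtInfty_apply]

lemma subValueAtInfty_mul (a b : C(OnePoint ℂ, ℂ)) :
    subValueAtInfty (a * b) = subValueAtInfty a * subValueAtInfty b +
      a OnePoint.infty • subValueAtInfty b + b OnePoint.infty • subValueAtInfty a := by
  funext z
  simp only [subValueAtInfty_apply, ContinuousMap.mul_apply, Pi.add_apply, Pi.mul_apply,
    Pi.smul_apply, smul_eq_mul]
  ring

lemma subValueAtInfty_star (a : C(OnePoint ℂ, ℂ)) :
    subValueAtInfty (star a) = fun z => conj (subValueAtInfty a z) := by
  funext z
  simp [subValueAtInfty_apply]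

lemma subValueAtInfty_gaussMonomialOnePoint {a : ℝ} (ha : 0 < a) (m k : ℕ) :
    subValueAtInfty (gaussMonomialOnePoint ha m k) = gaussMonomial a m k := by
  funext z
  simp [subValueAtInfty_apply]

noncomputable def gaussianStarSubalgebra (c : ℝ) : StarSubalgebra ℂ C(OnePoint ℂ, ℂ) :=
  { ((gaussianSpan c).comap subValueAtInfty).toSubalgebra
      (by simp only [Submodule.mem_comap, subValueAtInfty_one, Submodule.zero_mem])
      (fun a b ha hb => by
        simp only [Submodule.mem_comap, subValueAtInfty_mul] at ha hb ⊢
        exact add_mem (add_mem (mul_mem_gaussianSpan ha hb) (Submodule.smul_mem _ _ hb))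
          (Submodule.smul_mem _ _ ha)) with
    star_mem' := fun {a} ha => by
      show subValueAtInfty (star a) ∈ gaussianSpan c
      rw [subValueAtInfty_star]
      exact conj_comp_mem_gaussianSpan ha }

lemma gaussMonomialOnePoint_mem_gaussianStarSubalgebra {c : ℝ} (hc : 0 < c) (m k : ℕ) :
    gaussMonomialOnePoint hc m k ∈ gaussianStarSubalgebra c := by
  show subValueAtInfty _ ∈ gaussianSpan c
  simpa [subValueAtInfty_gaussMonomialOnePoint] using gaussMonomial_mem_gaussianSpan c 0 m k

lemma eq_of_gaussMonomialOnePoint_eq {c : ℝ} (hc : 0 < c) {x y : OnePoint ℂ}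
    (h₀ : gaussMonomialOnePoint hc 0 0 x = gaussMonomialOnePoint hc 0 0 y)
    (h₁ : gaussMonomialOnePoint hc 1 0 x = gaussMonomialOnePoint hc 1 0 y) : x = y := by
  have hne (z : ℂ) : gaussMonomial c 0 0 z ≠ 0 := by
    simp [gaussMonomial, gaussian]
  have h10 (z : ℂ) : gaussMonomial c 1 0 z = z * gaussMonomial c 0 0 z := by
    simpa using (pow_mul_gaussMonomial c 1 0 0 z).symm
  induction x using OnePoint.rec with
  | infty =>
    induction y using OnePoint.rec with
    | infty => rfl
    | coe w => exact absurd h₀.symm (by simpa using hne w)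
  | coe z =>
    induction y using OnePoint.rec with
    | infty => exact absurd h₀ (by simpa using hne z)
    | coe w =>
      simp only [gaussMonomialOnePoint_coe, h10] at h₀ h₁
      rw [h₀] at h₁
      exact congrArg _ (mul_right_cancel₀ (hne w) h₁)

lemma gaussianStarSubalgebra_separatesPoints {c : ℝ} (hc : 0 < c) :
    (gaussianStarSubalgebra c).SeparatesPoints := by
  intro x y hxy
  by_contra! h
  exact hxy (eq_of_gaussMonomialOnePoint_eq hc
    (h _ ⟨_, gaussMonomialOnePoint_mem_gaussianStarSubalgebra hc 0 0, rfl⟩)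
    (h _ ⟨_, gaussMonomialOnePoint_mem_gaussianStarSubalgebra hc 1 0, rfl⟩))

lemma exists_mem_gaussianSpan_norm_sub_le {c : ℝ} (hc : 0 < c) {f : ℂ → ℂ} (hf : Continuous f)
    (hfc : HasCompactSupport f) {δ : ℝ} (hδ : 0 < δ) :
    ∃ w ∈ gaussianSpan c, ∀ z, ‖w z - f z‖ ≤ δ := by
  let F : C(OnePoint ℂ, ℂ) := OnePoint.continuousMapMk ⟨f, hf⟩ 0
    (coclosedCompact_eq_cocompact (X := ℂ) ▸ hfc.is_zero_at_infty)
  have hF : F ∈ closure (gaussianStarSubalgebra c : Set C(OnePoint ℂ, ℂ)) := by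
    rw [← StarSubalgebra.topologicalClosure_coe,
      ContinuousMap.starSubalgebra_topologicalClosure_eq_top_of_separatesPoints _
        (gaussianStarSubalgebra_separatesPoints hc)]
    trivial
  obtain ⟨a, ha, hFa⟩ := Metric.mem_closure_iff.1 hF (δ / 2) (half_pos hδ)
  refine ⟨subValueAtInfty a, ha, fun z => ?_⟩
  have hz := (ContinuousMap.dist_apply_le_dist (f := F) (g := a) z).trans hFa.le
  have hinf := (ContinuousMap.dist_apply_le_dist (f := F) (g := a) OnePoint.infty).trans hFa.le
  calc ‖subValueAtInfty a z - f z‖ = ‖(F OnePoint.infty - a OnePoint.infty) - (F z - a z)‖ := by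
        rw [subValueAtInfty_apply]; congr 1; simp [F, OnePoint.continuousMapMk]; ring
    _ ≤ dist (F OnePoint.infty) (a OnePoint.infty) + dist (F z) (a z) := by
        rw [dist_eq_norm, dist_eq_norm]; exact norm_sub_le _ _
    _ ≤ δ := by linarith

theorem stmt_16_general (p : ℝ) (c : ℝ) (hc : 0 < c)
    (μ : Measure ℂ) [IsFiniteMeasure μ]
    (hpoly : ∀ q : Polynomial ℂ, MemLp (fun z => Polynomial.eval z q) (ENNReal.ofReal p) μ)
    (hconj : ∀ ε : ℝ, 0 < ε → ∃ q : Polynomial ℂ,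
      eLpNorm (fun z => Polynomial.eval z q - (starRingEnd ℂ) z) (ENNReal.ofReal p) μ
        < ENNReal.ofReal ε) :
    ∀ g : ℂ → ℂ, MemLp g (ENNReal.ofReal p) μ → ∀ ε : ℝ, 0 < ε →
      ∃ q : Polynomial ℂ,
        eLpNorm (fun z => Polynomial.eval z q * (Real.exp (-c * ‖z‖ ^ 2) : ℂ) - g z)
          (ENNReal.ofReal p) μ < ENNReal.ofReal ε := by
  intro g hg ε hε
  have hconj' : (conj : ℂ → ℂ) ∈
      lpClosure (ENNReal.ofReal p) μ (Set.range fun q : ℂ[X] => (q.eval ·)) :=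
    ⟨Complex.continuous_conj.aestronglyMeasurable, fun ε hε =>
      let ⟨q, hq⟩ := hconj ε hε
      ⟨_, ⟨q, rfl⟩, q.continuous.aestronglyMeasurable, hq⟩⟩
  have hspan : (gaussianSpan c : Set (ℂ → ℂ)) ⊆
      (LinearMap.range (polyMulGaussian c)).lpClosure (ENNReal.ofReal p) μ :=
    Submodule.span_le.2 fun _ ⟨n, m, k, hf⟩ => hf ▸
      gaussMonomial_mul_mem_lpClosure_range_polyMulGaussian ENNReal.ofReal_ne_top hc hpoly hconj'
        n m k
  have hCc : {f : ℂ → ℂ | Continuous f ∧ HasCompactSupport f} ⊆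
      lpClosure (ENNReal.ofReal p) μ (gaussianSpan c) := fun f ⟨hf, hfc⟩ =>
    mem_lpClosure_of_forall_norm_sub_le hf.aestronglyMeasurable fun δ hδ =>
      let ⟨w, hw, hwf⟩ := exists_mem_gaussianSpan_norm_sub_le hc hf hfc hδ
      ⟨w, hw, (hspan hw).1, hwf⟩
  have hgS : g ∈ lpClosure (ENNReal.ofReal p) μ (LinearMap.range (polyMulGaussian c)) :=
    lpClosure_subset_of_subset_lpClosure hspan <| lpClosure_subset_of_subset_lpClosure hCc <|
      hg.mem_lpClosure_hasCompactSupport ENNReal.ofReal_ne_top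
  obtain ⟨_, ⟨q, rfl⟩, -, hq⟩ := hgS.2 ε hε
  exact ⟨q, hq⟩

/-- Let `p ∈ (0,∞)`, `c > 0`, and let `μ` be a finite Borel measure on `ℂ` such that all
polynomials in `z` lie in `L^p(μ)` and `z̄` lies in the `L^p(μ)`-closure of `Π(z)`.  Then
`e^{-c|z|²}` is a cyclic vector for `M_z` in `L^p(μ)`. -/
theorem stmt_16 (p : ℝ) (hp : 0 < p) (c : ℝ) (hc : 0 < c)
    (μ : Measure ℂ) [IsFiniteMeasure μ]
    (hpoly : ∀ q : Polynomial ℂ, MemLp (fun z => Polynomial.eval z q) (ENNReal.ofReal p) μ)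
    (hconj : ∀ ε : ℝ, 0 < ε → ∃ q : Polynomial ℂ,
      eLpNorm (fun z => Polynomial.eval z q - (starRingEnd ℂ) z) (ENNReal.ofReal p) μ
        < ENNReal.ofReal ε) :
    ∀ g : ℂ → ℂ, MemLp g (ENNReal.ofReal p) μ → ∀ ε : ℝ, 0 < ε →
      ∃ q : Polynomial ℂ,
        eLpNorm (fun z => Polynomial.eval z q * (Real.exp (-c * ‖z‖ ^ 2) : ℂ) - g z)
          (ENNReal.ofReal p) μ < ENNReal.ofReal ε :=
  stmt_16_general p c hc μ hpoly hconj
end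

section
/- Let μ be the restriction of the Lebesgue measure on ℂ to the open unit disc 𝔻 = {z ∈ ℂ : |z| < 1}, and let h : 𝔻 → ℂ be a measurable function in L²(μ) such that {q·h : q ∈ Π(z)} is dense in L²(μ). Then the set {z ∈ 𝔻 : h(z) = 0} is a μ-null set, and h(x) = 0 for every point x ∈ 𝔻 at which h is continuous. In particular, there is no cyclic vector for M_z in L²(μ) that is continuous on 𝔻. -/
/-!
If `h` vanished on a set `S` of positive measure, then `q * h - 1_S = -1` on `S` for every
polynomial `q`, so `1_S` could not be approximated. If `h` is continuous at `x` with `h x ≠ 0`,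
then `‖h‖ > c > 0` on a small ball `B` around `x`, and approximating `1_B · conj (z - x) · h` would
force polynomials to approximate `conj (z - x)` in `L²(B)`. But every `q (z) (z - x)` has mean zero
over `B`, i.e. polynomials are orthogonal to `conj (z - x)` in `L²(B)`, so the error stays at least
`c ‖z - x‖_{L²(B)} > 0`.
-/

open MeasureTheory Filter Metric Polynomial ComplexConjugate

theorem Continuous.integrableOn_ball {X E : Type*} [MetricSpace X] [ProperSpace X]
    [MeasurableSpace X] [OpensMeasurableSpace X] {μ : Measure X} [IsFiniteMeasureOnCompacts μ]
    [NormedAddCommGroup E] {f : X → E} (hf : Continuous f) (x : X) (r : ℝ) :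
    IntegrableOn f (ball x r) μ :=
  (hf.continuousOn.integrableOn_compact (isCompact_closedBall x r)).mono_set ball_subset_closedBall

theorem setIntegral_ball_comp_sub {E F : Type*} [NormedAddCommGroup E] [MeasurableSpace E]
    [BorelSpace E] [NormedAddCommGroup F] [NormedSpace ℝ F] {μ : Measure E}
    [μ.IsAddRightInvariant] (f : E → F) (x : E) (r : ℝ) :
    ∫ z in ball x r, f (z - x) ∂μ = ∫ w in ball 0 r, f w ∂μ := by
  rw [← integral_indicator measurableSet_ball, ← integral_indicator measurableSet_ball,
    ← integral_sub_right_eq_self ((ball 0 r).indicator f) x]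
  congr 1 with z
  simp only [Set.indicator, mem_ball_iff_norm, sub_zero]

theorem setIntegral_ball_zero_pow_eq_zero (r : ℝ) {k : ℕ} (hk : k ≠ 0) :
    ∫ w in ball (0 : ℂ) r, w ^ k = 0 := by
  obtain ⟨a, ha⟩ : ∃ a : Circle, (a : ℂ) ^ k = -1 := by
    refine ⟨Circle.exp (Real.pi / k), ?_⟩
    rw [Circle.coe_exp, ← Complex.exp_nat_mul, ← Complex.exp_pi_mul_I]
    congr 1
    push_cast
    field_simp
  have hrot := ((rotation a).measurePreserving).integral_comp
    (rotation a).toHomeomorph.measurableEmbedding ((ball (0 : ℂ) r).indicator (· ^ k))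
  have hind : ∀ w : ℂ, (ball (0 : ℂ) r).indicator (· ^ k) (a * w)
      = (a : ℂ) ^ k * (ball (0 : ℂ) r).indicator (· ^ k) w := by
    intro w
    have hmem : a * w ∈ ball (0 : ℂ) r ↔ w ∈ ball 0 r := by
      rw [mem_ball_zero_iff, mem_ball_zero_iff, norm_mul, Circle.norm_coe, one_mul]
    by_cases hw : w ∈ ball (0 : ℂ) r
    · rw [Set.indicator_of_mem hw, Set.indicator_of_mem (hmem.2 hw), mul_pow]
    · rw [Set.indicator_of_notMem hw, Set.indicator_of_notMem (mt hmem.1 hw), mul_zero]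
  simp only [rotation_apply, hind, integral_const_mul, integral_indicator measurableSet_ball,
    ha] at hrot
  linear_combination (-1 / 2 : ℂ) * hrot

theorem setIntegral_ball_eval_mul_sub_eq_zero (q : ℂ[X]) (x : ℂ) (r : ℝ) :
    ∫ z in ball x r, q.eval z * (z - x) = 0 := by
  have hexpand : ∀ z : ℂ, q.eval z * (z - x) = ∑ i ∈ Finset.range ((taylor x q).natDegree + 1),
      (taylor x q).coeff i * (z - x) ^ (i + 1) := by
    intro z
    rw [← sub_add_cancel z x, ← taylor_eval, eval_eq_sum_range, Finset.sum_mul]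
    simp only [add_sub_cancel_right, pow_succ, mul_assoc]
  simp_rw [hexpand]
  rw [integral_finsetSum]
  · refine Finset.sum_eq_zero fun i _ => ?_
    rw [integral_const_mul, setIntegral_ball_comp_sub (· ^ (i + 1)),
      setIntegral_ball_zero_pow_eq_zero r i.succ_ne_zero, mul_zero]
  · exact fun i _ =>
      (continuous_const.mul ((continuous_sub_right x).pow (i + 1))).integrableOn_ball x r

theorem setIntegral_ball_norm_eval_sub_conj_sq (q : ℂ[X]) (x : ℂ) (r : ℝ) :
    ∫ z in ball x r, ‖q.eval z - conj (z - x)‖ ^ 2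
      = (∫ z in ball x r, ‖q.eval z‖ ^ 2) + ∫ z in ball x r, ‖z - x‖ ^ 2 := by
  have hq : Continuous fun z => q.eval z := q.continuous
  have hpoint : ∀ z, ‖q.eval z - conj (z - x)‖ ^ 2
      = ‖q.eval z‖ ^ 2 + ‖z - x‖ ^ 2 - 2 * (q.eval z * (z - x)).re := by
    intro z
    simp only [Complex.sq_norm, Complex.normSq_sub, Complex.normSq_conj, Complex.conj_conj]
  have hcross : ∫ z in ball x r, (q.eval z * (z - x)).re = 0 := by
    have hint := (hq.mul (continuous_sub_right x)).integrableOn_ball (μ := volume) x r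
    simpa [setIntegral_ball_eval_mul_sub_eq_zero] using integral_re hint
  simp_rw [hpoint]
  rw [integral_sub, integral_add, integral_const_mul, hcross, mul_zero, sub_zero]
  all_goals exact Continuous.integrableOn_ball (by fun_prop) x r

theorem MeasureTheory.MemLp.eLpNorm_two_eq_ofReal_sqrt {α F : Type*} [MeasurableSpace α]
    {μ : Measure α} [NormedAddCommGroup F] {f : α → F} (hf : MemLp f 2 μ) :
    eLpNorm f 2 μ = ENNReal.ofReal √(∫ a, ‖f a‖ ^ 2 ∂μ) := by
  rw [hf.eLpNorm_eq_integral_rpow_norm two_ne_zero ENNReal.ofNat_ne_top, Real.sqrt_eq_rpow,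
    ENNReal.toReal_ofNat, one_div]
  simp only [Real.rpow_two]

theorem ofReal_sqrt_le_eLpNorm_eval_sub_conj (q : ℂ[X]) (x : ℂ) (r : ℝ) :
    ENNReal.ofReal √(∫ z in ball x r, ‖z - x‖ ^ 2) ≤
      eLpNorm (fun z => q.eval z - conj (z - x)) 2 (volume.restrict (ball x r)) := by
  have hcont : Continuous fun z => q.eval z - conj (z - x) := by fun_prop
  have hmem : MemLp (fun z => q.eval z - conj (z - x)) 2 (volume.restrict (ball x r)) :=
    (memLp_two_iff_integrable_sq_norm hcont.aestronglyMeasurable).2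
      ((hcont.norm.pow 2).integrableOn_ball x r)
  rw [hmem.eLpNorm_two_eq_ofReal_sqrt, setIntegral_ball_norm_eval_sub_conj_sq]
  gcongr
  exact le_add_of_nonneg_left (setIntegral_nonneg measurableSet_ball fun _ _ => by positivity)

theorem setIntegral_ball_norm_sub_sq_pos {E : Type*} [NormedAddCommGroup E] [MeasurableSpace E]
    [BorelSpace E] [ProperSpace E] {μ : Measure E} [IsFiniteMeasureOnCompacts μ]
    [μ.IsOpenPosMeasure] [NullSingletonClass μ] (x : E) {r : ℝ} (hr : 0 < r) :
    0 < ∫ z in ball x r, ‖z - x‖ ^ 2 ∂μ := by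
  have hsupp : Function.support (fun z : E => ‖z - x‖ ^ 2) = {x}ᶜ := by
    ext z
    simp [sub_eq_zero]
  rw [setIntegral_pos_iff_support_of_nonneg_ae (Eventually.of_forall fun z => by positivity)
    (Continuous.integrableOn_ball (by fun_prop) x r), hsupp, Set.inter_comm, ← Set.sdiff_eq,
    measure_sdiff_null (measure_singleton x)]
  exact measure_ball_pos μ x hr

theorem ContinuousWithinAt.exists_ball_subset_lt_norm {X E : Type*} [PseudoMetricSpace X]
    [SeminormedAddCommGroup E] {f : X → E} {U : Set X} {x : X} {c : ℝ} (hU : IsOpen U)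
    (hx : x ∈ U) (hf : ContinuousWithinAt f U x) (hc : c < ‖f x‖) :
    ∃ r > 0, ball x r ⊆ U ∧ ∀ z ∈ ball x r, c < ‖f z‖ := by
  have hev : ∀ᶠ z in nhds x, z ∈ U ∧ c < ‖f z‖ :=
    Eventually.and (hU.mem_nhds hx)
      ((hf.continuousAt (hU.mem_nhds hx)).norm.eventually (lt_mem_nhds hc))
  obtain ⟨r, hr, hball⟩ := eventually_nhds_iff_ball.mp hev
  exact ⟨r, hr, fun z hz => (hball z hz).1, fun z hz => (hball z hz).2⟩

/-- `{q * h | q ∈ Q}` is dense in `L²(μ)`; for `Q` the polynomial functions, `h` is a cyclic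
vector of multiplication by `z`. -/
def DenseMultiples {α : Type*} [MeasurableSpace α] (Q : Set (α → ℂ)) (h : α → ℂ)
    (μ : Measure α) : Prop :=
  ∀ g : α → ℂ, MemLp g 2 μ → ∀ ε : ℝ, 0 < ε →
    ∃ q ∈ Q, eLpNorm (q * h - g) 2 μ < ENNReal.ofReal ε

namespace DenseMultiples

theorem measure_zeroSet_eq_zero {α : Type*} [MeasurableSpace α] {Q : Set (α → ℂ)}
    {h : α → ℂ} {μ : Measure α} [IsFiniteMeasure μ] (hd : DenseMultiples Q h μ)
    (hmeas : Measurable h) : μ {z | h z = 0} = 0 := by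
  set S := {z | h z = 0}
  have hS : MeasurableSet S := hmeas (measurableSet_singleton 0)
  set g := S.indicator fun _ => (1 : ℂ)
  have hg : MemLp g 2 μ := memLp_indicator_const 2 hS 1 (Or.inr (measure_ne_top μ S))
  -- on `S` every multiple `q * h` vanishes, so `q * h - g` is at least as large as `g`
  have hle : ∀ q : α → ℂ, eLpNorm g 2 μ ≤ eLpNorm (q * h - g) 2 μ := by
    refine fun q => eLpNorm_mono fun z => ?_
    by_cases hz : z ∈ S
    · simp [g, Set.indicator_of_mem hz, show h z = 0 from hz]
    · simp [g, Set.indicator_of_notMem hz, mul_nonneg]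
  by_contra hS0
  have hpos : eLpNorm g 2 μ ≠ 0 := by
    rw [eLpNorm_indicator_const hS two_ne_zero ENNReal.ofNat_ne_top]
    simp [hS0]
  obtain ⟨q, -, hq⟩ := hd g hg _ (ENNReal.toReal_pos hpos hg.eLpNorm_ne_top)
  rw [ENNReal.ofReal_toReal hg.eLpNorm_ne_top] at hq
  exact (hle q).not_gt hq

theorem eq_zero_of_continuousWithinAt {U : Set ℂ} (hU : IsOpen U) {h : ℂ → ℂ}
    (hL2 : MemLp h 2 (volume.restrict U))
    (hd : DenseMultiples (Set.range fun q : ℂ[X] => fun z => q.eval z) h (volume.restrict U))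
    {x : ℂ} (hx : x ∈ U) (hcont : ContinuousWithinAt h U x) : h x = 0 := by
  by_contra hx0
  set c := ‖h x‖ / 2
  obtain ⟨r, hr, hrU, hhr⟩ :=
    hcont.exists_ball_subset_lt_norm hU hx (half_lt_self (norm_pos_iff.2 hx0))
  set B := ball x r
  set ψ := B.indicator fun z => conj (z - x)
  have hψ : MemLp ψ ⊤ (volume.restrict U) := by
    refine memLp_top_of_bound
      ((Measurable.indicator (by fun_prop) measurableSet_ball).aestronglyMeasurable) r
      (Eventually.of_forall fun z => ?_)
    by_cases hz : z ∈ B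
    · rw [show ψ z = _ from Set.indicator_of_mem hz _, Complex.norm_conj, ← dist_eq_norm]
      exact (mem_ball.1 hz).le
    · simp [ψ, Set.indicator_of_notMem hz, hr.le]
  have hg : MemLp (ψ * h) 2 (volume.restrict U) := hL2.smul hψ
  set I := ∫ z in B, ‖z - x‖ ^ 2
  have hε : 0 < c * √I := by
    have := setIntegral_ball_norm_sub_sq_pos (μ := volume) x hr
    positivity
  obtain ⟨_, ⟨q, rfl⟩, hq⟩ := hd (ψ * h) hg (c * √I) hε
  refine hq.not_ge ?_
  calc ENNReal.ofReal (c * √I) = ‖c‖ₑ * ENNReal.ofReal √I := by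
        rw [ENNReal.ofReal_mul (by positivity), Real.enorm_eq_ofReal (by positivity)]
    _ ≤ ‖c‖ₑ * eLpNorm (fun z => q.eval z - conj (z - x)) 2 (volume.restrict B) := by
        gcongr
        exact ofReal_sqrt_le_eLpNorm_eval_sub_conj q x r
    _ = eLpNorm (c • fun z => q.eval z - conj (z - x)) 2 (volume.restrict B) :=
        (eLpNorm_const_smul _ _ _ _).symm
    _ ≤ eLpNorm ((fun z => q.eval z) * h - ψ * h) 2 (volume.restrict B) := by
        refine eLpNorm_mono_ae ?_
        filter_upwards [ae_restrict_mem measurableSet_ball] with z hz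
        simp only [Pi.smul_apply, Pi.sub_apply, Pi.mul_apply, ψ, Set.indicator_of_mem hz,
          ← sub_mul, norm_smul, norm_mul, Real.norm_of_nonneg (by positivity : 0 ≤ c)]
        rw [mul_comm]
        exact mul_le_mul_of_nonneg_left (hhr z hz).le (norm_nonneg _)
    _ ≤ eLpNorm ((fun z => q.eval z) * h - ψ * h) 2 (volume.restrict U) :=
        eLpNorm_mono_measure _ (Measure.restrict_mono hrU le_rfl)

end DenseMultiples

/-- Let `μ` be Lebesgue measure restricted to the open unit disc `𝔻 ⊆ ℂ` and let
`h ∈ L²(μ)` be such that `{q·h : q ∈ Π(z)}` is dense in `L²(μ)`.  Then `{h = 0}` is a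
`μ`-null set, `h` vanishes at each of its continuity points of `𝔻`, and in particular `h`
is not continuous on `𝔻`. -/
theorem stmt_17 (h : ℂ → ℂ) (hmeas : Measurable h)
    (hL2 : MemLp h 2 ((volume : Measure ℂ).restrict {z : ℂ | ‖z‖ < 1}))
    (hdense : ∀ g : ℂ → ℂ, MemLp g 2 ((volume : Measure ℂ).restrict {z : ℂ | ‖z‖ < 1}) →
      ∀ ε : ℝ, 0 < ε → ∃ q : Polynomial ℂ,
        eLpNorm (fun z => Polynomial.eval z q * h z - g z) 2
          ((volume : Measure ℂ).restrict {z : ℂ | ‖z‖ < 1}) < ENNReal.ofReal ε) :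
    ((volume : Measure ℂ).restrict {z : ℂ | ‖z‖ < 1}) {z : ℂ | h z = 0} = 0 ∧
    (∀ x : ℂ, ‖x‖ < 1 → ContinuousWithinAt h {z : ℂ | ‖z‖ < 1} x → h x = 0) ∧
    ¬ ContinuousOn h {z : ℂ | ‖z‖ < 1} := by
  have hD : {z : ℂ | ‖z‖ < 1} = ball 0 1 := by
    ext z
    simp
  have : IsFiniteMeasure ((volume : Measure ℂ).restrict {z : ℂ | ‖z‖ < 1}) :=
    isFiniteMeasure_restrict.2 (hD ▸ measure_ball_lt_top.ne)
  have hd : DenseMultiples (Set.range fun q : ℂ[X] => fun z => q.eval z) h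
      ((volume : Measure ℂ).restrict {z : ℂ | ‖z‖ < 1}) := fun g hg ε hε =>
    let ⟨q, hq⟩ := hdense g hg ε hε
    ⟨_, ⟨q, rfl⟩, hq⟩
  have hnull := hd.measure_zeroSet_eq_zero hmeas
  have hzero : ∀ x : ℂ, ‖x‖ < 1 → ContinuousWithinAt h {z : ℂ | ‖z‖ < 1} x → h x = 0 :=
    fun x hx => hd.eq_zero_of_continuousWithinAt (hD ▸ isOpen_ball) hL2 hx
  refine ⟨hnull, hzero, fun hcont => ?_⟩
  have hdisc : (volume : Measure ℂ).restrict {z : ℂ | ‖z‖ < 1} {z : ℂ | ‖z‖ < 1} = 0 :=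
    measure_mono_null (fun z hz => hzero z hz (hcont z hz)) hnull
  rw [Measure.restrict_apply_self, hD] at hdisc
  exact (measure_ball_pos volume 0 one_pos).ne' hdisc
end

section
/- Let p ∈ (0,∞), let λ be the Lebesgue measure on [0,1], let μ_c be a nonzero finite Borel measure on ℂ, let ν := λ ⊗ μ_c be the product measure on [0,1] × ℂ, and let π(t,z) := z. Then M_π in L^p(ν) has no finite *-cyclic set: for every d ∈ ℕ and all functions f₁,…,f_d ∈ L^p(ν) such that the function (t,z) ↦ q(z,z̄)·f_δ(t,z) lies in L^p(ν) for every q ∈ Π(z,z̄) and every δ ∈ {1,…,d}, the set {(t,z) ↦ q(z,z̄)·f_δ(t,z) : q ∈ Π(z,z̄), δ ∈ {1,…,d}} is not dense in L^p(ν). -/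
/-!
Approximate the `d + 1` targets `1_{A_j × ℂ}`, where the `A_j` are disjoint subintervals of
`[0, 1]` of length `1 / (d + 1)`, by products `c_j(z) f_{δ_j}(t, z)`. By pigeonhole two targets
`j ≠ k` share the function `f = f_{δ_j} = f_{δ_k}`. Where `|c_j| ≤ |c_k|`, the approximation errors
`|c_j f - 1|` on `A_j` and `|c_k f|` there add up to at least `1`; symmetrically on `A_k` where
`|c_k| < |c_j|`. The multipliers depend on `z` only, so these two pieces together have measure
`μ_c(ℂ) / (d + 1)` whatever `c_j, c_k` are, which bounds the errors from below uniformly.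
-/

open MeasureTheory ENNReal

lemma one_le_norm_mul_sub_one_add_norm_mul {𝕜 : Type*} [NormedDivisionRing 𝕜] {a b : 𝕜}
    (u : 𝕜) (hab : ‖a‖ ≤ ‖b‖) : 1 ≤ ‖a * u - 1‖ + ‖b * u‖ :=
  calc (1 : ℝ) = ‖a * u - (a * u - 1)‖ := by simp
    _ ≤ ‖a * u‖ + ‖a * u - 1‖ := norm_sub_le _ _
    _ ≤ ‖b * u‖ + ‖a * u - 1‖ := by rw [norm_mul, norm_mul]; gcongr
    _ = ‖a * u - 1‖ + ‖b * u‖ := add_comm _ _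

section Pointwise

variable {α 𝕜 : Type*} [NormedDivisionRing 𝕜] {E F : Set α}

lemma norm_indicator_le_norm_mul_sub_indicator_add (hEF : Disjoint E F) (a b u : α → 𝕜)
    (w : α) :
    ‖((E ∩ {w | ‖a w‖ ≤ ‖b w‖}) ∪ (F \ {w | ‖a w‖ ≤ ‖b w‖})).indicator (fun _ => (1 : ℝ)) w‖ ≤
      ‖a w * u w - E.indicator 1 w‖ + ‖b w * u w - F.indicator 1 w‖ := by
  by_cases hw : w ∈ (E ∩ {w | ‖a w‖ ≤ ‖b w‖}) ∪ (F \ {w | ‖a w‖ ≤ ‖b w‖})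
  · rw [Set.indicator_of_mem hw, norm_one]
    rcases hw with ⟨hE, hab⟩ | ⟨hF, hab⟩
    · simpa [hE, hEF.notMem_of_mem_left hE] using
        one_le_norm_mul_sub_one_add_norm_mul (u w) hab
    · simpa [hF, hEF.notMem_of_mem_right hF, add_comm] using
        one_le_norm_mul_sub_one_add_norm_mul (u w) (le_of_not_ge hab)
  · rw [Set.indicator_of_notMem hw, norm_zero]
    positivity

end Pointwise

section Measure

variable {α 𝕜 : Type*} [NormedDivisionRing 𝕜] [MeasurableSpace α] {ν : Measure α}
  {E F : Set α}

lemma eLpNorm_indicator_le_LpAddConst_mul (p : ℝ≥0∞) (hEF : Disjoint E F) {a b u : α → 𝕜}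
    (ha : AEStronglyMeasurable (fun w => a w * u w - E.indicator 1 w) ν)
    (hb : AEStronglyMeasurable (fun w => b w * u w - F.indicator 1 w) ν) :
    eLpNorm (((E ∩ {w | ‖a w‖ ≤ ‖b w‖}) ∪ (F \ {w | ‖a w‖ ≤ ‖b w‖})).indicator
        fun _ => (1 : ℝ)) p ν ≤
      LpAddConst p * (eLpNorm (fun w => a w * u w - E.indicator 1 w) p ν +
        eLpNorm (fun w => b w * u w - F.indicator 1 w) p ν) :=
  calc _ ≤ eLpNorm (fun w => ‖a w * u w - E.indicator 1 w‖ + ‖b w * u w - F.indicator 1 w‖) p ν :=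
        eLpNorm_mono_real (norm_indicator_le_norm_mul_sub_indicator_add hEF a b u)
    _ ≤ LpAddConst p * (eLpNorm (fun w => ‖a w * u w - E.indicator 1 w‖) p ν +
          eLpNorm (fun w => ‖b w * u w - F.indicator 1 w‖) p ν) :=
        eLpNorm_add_le' ha.norm hb.norm p
    _ = _ := by simp only [eLpNorm_norm]

end Measure

lemma MeasureTheory.Measure.prod_prod_union_prod_compl {X Y : Type*} [MeasurableSpace X]
    [MeasurableSpace Y] (ρ : Measure X) (μ : Measure Y) [SFinite μ] {A A' : Set X} {S : Set Y}
    (hA' : MeasurableSet A') (hS : MeasurableSet S) :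
    ρ.prod μ (A ×ˢ S ∪ A' ×ˢ Sᶜ) = ρ A * μ S + ρ A' * μ Sᶜ := by
  rw [measure_union (Set.disjoint_prod.2 (Or.inr disjoint_compl_right)) (hA'.prod hS.compl),
    Measure.prod_prod, Measure.prod_prod]

theorem not_forall_exists_eLpNorm_mul_comp_snd_sub_lt {X Y 𝕜 ι κ ι' : Type*}
    [MeasurableSpace X] [MeasurableSpace Y] [NormedDivisionRing 𝕜] [MeasurableSpace 𝕜]
    [OpensMeasurableSpace 𝕜] [Fintype κ] [Fintype ι'] {p : ℝ≥0∞} (hp : p ≠ 0)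
    (ρ : Measure X) (μ : Measure Y) [IsFiniteMeasure μ] (hμ : μ ≠ 0)
    (A : ι' → Set X) (hcard : Fintype.card κ < Fintype.card ι')
    (hA_disj : Pairwise (Function.onFun Disjoint A)) (hA_meas : ∀ j, MeasurableSet (A j))
    {m : ℝ≥0∞} (hm0 : m ≠ 0) (hm_top : m ≠ ∞) (hA_measure : ∀ j, ρ (A j) = m)
    (c : ι → Y → 𝕜) (hc : ∀ i, Measurable (c i)) (f : κ → X × Y → 𝕜)
    (hcf : ∀ δ i, AEStronglyMeasurable (fun w => c i w.2 * f δ w) (ρ.prod μ)) :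
    ¬ ∀ g : X × Y → 𝕜, MemLp g p (ρ.prod μ) → ∀ ε : ℝ, 0 < ε → ∃ i δ,
      eLpNorm (fun w => c i w.2 * f δ w - g w) p (ρ.prod μ) < ENNReal.ofReal ε := by
  intro hdense
  have hB0 : m * μ Set.univ ≠ 0 := mul_ne_zero hm0 (Measure.measure_univ_ne_zero.2 hμ)
  -- the `L^p` norm of the indicator of the set on which the two errors add up to at least `1`
  set θ : ℝ≥0∞ := (m * μ Set.univ) ^ (1 / p.toReal)
  have hθ : θ ≠ 0 :=
    (rpow_pos (pos_iff_ne_zero.2 hB0) (mul_ne_top hm_top (measure_ne_top μ _))).ne'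
  obtain ⟨η, hη0, hηθ⟩ := exists_nnreal_pos_mul_lt (a := 2 * LpAddConst p)
    (mul_ne_top ofNat_ne_top (LpAddConst_lt_top p).ne) hθ
  obtain ⟨ε, -, hε0, hεη⟩ := ENNReal.lt_iff_exists_real_btwn.1 (coe_pos.2 hη0)
  have htarget : ∀ j, MemLp ((Prod.fst ⁻¹' A j).indicator 1) p (ρ.prod μ) := fun j =>
    memLp_indicator_const p (measurable_fst (hA_meas j)) (1 : 𝕜) <| Or.inr <| by
      rw [← Set.prod_univ, Measure.prod_prod, hA_measure]
      exact mul_ne_top hm_top (measure_ne_top μ _)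
  choose i δ hiδ using fun j => hdense _ (htarget j) ε (ofReal_pos.1 hε0)
  obtain ⟨j, k, hjk, hδ⟩ := Fintype.exists_ne_map_eq_of_card_lt δ hcard
  have hj := hiδ j
  have hk := hiδ k
  rw [hδ] at hj
  set S : Set Y := {y | ‖c (i j) y‖ ≤ ‖c (i k) y‖}
  have hS : MeasurableSet S := measurableSet_le (hc (i j)).norm (hc (i k)).norm
  have hG := eLpNorm_indicator_le_LpAddConst_mul p ((hA_disj hjk).preimage Prod.fst)
    (a := fun w => c (i j) w.2) (b := fun w => c (i k) w.2) (u := f (δ k))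
    ((hcf (δ k) (i j)).sub (htarget j).1) ((hcf (δ k) (i k)).sub (htarget k).1)
  have hGmeasure : ρ.prod μ (A j ×ˢ S ∪ A k ×ˢ Sᶜ) = m * μ Set.univ := by
    rw [Measure.prod_prod_union_prod_compl ρ μ (hA_meas k) hS, hA_measure, hA_measure,
      ← mul_add, measure_add_measure_compl hS]
  change eLpNorm ((A j ×ˢ S ∪ A k ×ˢ Sᶜ).indicator fun _ => (1 : ℝ)) p (ρ.prod μ) ≤ _ at hG
  rw [eLpNorm_indicator_const' (((hA_meas j).prod hS).union ((hA_meas k).prod hS.compl))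
      (hGmeasure ▸ hB0) hp,
    hGmeasure, enorm_one, one_mul] at hG
  refine (hG.trans_lt (hηθ.trans_le' ?_)).false
  calc LpAddConst p * (eLpNorm _ p (ρ.prod μ) + eLpNorm _ p (ρ.prod μ))
      ≤ LpAddConst p * (η + η) := by
          gcongr
          exacts [(hεη.trans' hj).le, (hεη.trans' hk).le]
    _ = η * (2 * LpAddConst p) := by ring

lemma pairwise_disjoint_Ico_div (n : ℕ) :
    Pairwise (Function.onFun Disjoint fun j : Fin n => Set.Ico ((j : ℝ) / n) ((j + 1) / n)) := by
  refine (pairwise_disjoint_on _).2 fun j k hjk => Set.disjoint_left.2 fun t hj hk => ?_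
  have hjk' : (j : ℝ) + 1 ≤ k := by exact_mod_cast Nat.succ_le_of_lt hjk
  exact (hj.2.trans_le (by gcongr)).not_ge hk.1

lemma volume_restrict_Icc_Ico_div {n : ℕ} (j : Fin n) :
    (volume : Measure ℝ).restrict (Set.Icc 0 1) (Set.Ico ((j : ℝ) / n) ((j + 1) / n)) =
      ENNReal.ofReal (1 / n) := by
  have hn : (0 : ℝ) < n := by exact_mod_cast j.pos
  have hsub : Set.Ico ((j : ℝ) / n) ((j + 1) / n) ⊆ Set.Icc 0 1 := by
    refine Set.Ico_subset_Icc_self.trans (Set.Icc_subset_Icc (by positivity) ?_)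
    rw [div_le_one hn]
    exact_mod_cast j.isLt
  rw [Measure.restrict_apply measurableSet_Ico, Set.inter_eq_self_of_subset_left hsub,
    Real.volume_Ico, ← sub_div, add_sub_cancel_left]

lemma continuous_eval_conj (q : MvPolynomial (Fin 2) ℂ) :
    Continuous fun z : ℂ => MvPolynomial.eval ![z, (starRingEnd ℂ) z] q :=
  (MvPolynomial.continuous_eval q).comp (by fun_prop)

theorem stmt_18_general (p : ℝ) (hp : 0 < p) (μc : Measure ℂ) [IsFiniteMeasure μc] (hμc : μc ≠ 0)
    (d : ℕ) (f : Fin d → (ℝ × ℂ → ℂ))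
    (hfq : ∀ δ : Fin d, ∀ q : MvPolynomial (Fin 2) ℂ,
      MemLp (fun w => MvPolynomial.eval ![w.2, (starRingEnd ℂ) w.2] q * f δ w)
        (ENNReal.ofReal p) (((volume : Measure ℝ).restrict (Set.Icc 0 1)).prod μc)) :
    ¬ (∀ g : ℝ × ℂ → ℂ,
        MemLp g (ENNReal.ofReal p) (((volume : Measure ℝ).restrict (Set.Icc 0 1)).prod μc) →
        ∀ ε : ℝ, 0 < ε → ∃ q : MvPolynomial (Fin 2) ℂ, ∃ δ : Fin d,
          eLpNorm (fun w => MvPolynomial.eval ![w.2, (starRingEnd ℂ) w.2] q * f δ w - g w)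
            (ENNReal.ofReal p) (((volume : Measure ℝ).restrict (Set.Icc 0 1)).prod μc)
            < ENNReal.ofReal ε) :=
  not_forall_exists_eLpNorm_mul_comp_snd_sub_lt (ofReal_pos.2 hp).ne' _ μc hμc
    (fun j : Fin (d + 1) => Set.Ico ((j : ℝ) / (d + 1 : ℕ)) ((j + 1) / (d + 1 : ℕ))) (by simp)
    (pairwise_disjoint_Ico_div _) (fun _ => measurableSet_Ico)
    (ofReal_pos.2 (by positivity)).ne' ofReal_ne_top volume_restrict_Icc_Ico_div
    (fun q z => MvPolynomial.eval ![z, (starRingEnd ℂ) z] q)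
    (fun q => (continuous_eval_conj q).measurable) f (fun δ q => (hfq δ q).1)

/-- Let `ν = λ ⊗ μ_c` where `λ` is Lebesgue measure on `[0,1]` and `μ_c ≠ 0` is a finite
Borel measure on `ℂ`, and let `π(t,z) = z`.  Then `M_π` in `L^p(ν)` has no finite `*`-cyclic
set: for any `d` functions `f₁,…,f_d` with `q(z,z̄)·f_δ ∈ L^p(ν)` for all `q ∈ Π(z,z̄)`,
the set `{q(z,z̄)·f_δ}` is not dense in `L^p(ν)`. -/
theorem stmt_18 (p : ℝ) (hp : 0 < p) (μc : Measure ℂ) [IsFiniteMeasure μc] (hμc : μc ≠ 0)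
    (d : ℕ) (f : Fin d → (ℝ × ℂ → ℂ))
    (hfLp : ∀ δ : Fin d,
      MemLp (f δ) (ENNReal.ofReal p) (((volume : Measure ℝ).restrict (Set.Icc 0 1)).prod μc))
    (hfq : ∀ δ : Fin d, ∀ q : MvPolynomial (Fin 2) ℂ,
      MemLp (fun w => MvPolynomial.eval ![w.2, (starRingEnd ℂ) w.2] q * f δ w)
        (ENNReal.ofReal p) (((volume : Measure ℝ).restrict (Set.Icc 0 1)).prod μc)) :
    ¬ (∀ g : ℝ × ℂ → ℂ,
        MemLp g (ENNReal.ofReal p) (((volume : Measure ℝ).restrict (Set.Icc 0 1)).prod μc) →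
        ∀ ε : ℝ, 0 < ε → ∃ q : MvPolynomial (Fin 2) ℂ, ∃ δ : Fin d,
          eLpNorm (fun w => MvPolynomial.eval ![w.2, (starRingEnd ℂ) w.2] q * f δ w - g w)
            (ENNReal.ofReal p) (((volume : Measure ℝ).restrict (Set.Icc 0 1)).prod μc)
            < ENNReal.ofReal ε) :=
  stmt_18_general p hp μc hμc d f hfq
end
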